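/- arXiv:2307.01765 — 3 statements merged into one kernel-verified Lean document; each statement's English description precedes it below -/
import Mathlib

section
/- Let λ ∈ Δ_N, ν = (ν₁,…,ν_N) ∈ 𝒫₁(ℝ)^N, and ν* ∈ 𝒫₁(ℝ). The following are equivalent: (1) ν* ∈ Med_λ(ν); (2) for every x ∈ ℝ, F_{ν*}(x) lies in the weighted median interval [m⁻_λ(F_{ν₁}(x),…,F_{ν_N}(x)), m⁺_λ(F_{ν₁}(x),…,F_{ν_N}(x))]; (3) for every t ∈ (0,1), Q_{ν*}(t) lies in the weighted median interval [m⁻_λ(Q_{ν₁}(t),…,Q_{ν_N}(t)), m⁺_λ(Q_{ν₁}(t),…,Q_{ν_N}(t))]. In particular, if there is no subset I ⊆ {1,…,N} with ∑_{i∈I} λᵢ = 1/2, then the Wasserstein median is unique. -/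
open MeasureTheory Filter Topology
open scoped ENNReal NNReal

/-- The set of couplings (transport plans): Borel probability measures on `X × X`
with first marginal `μ` and second marginal `ν`. -/
def Couplings {X : Type*} [MeasurableSpace X] (μ ν : Measure X) :
    Set (Measure (X × X)) :=
  {γ | IsProbabilityMeasure γ ∧ γ.map Prod.fst = μ ∧ γ.map Prod.snd = ν}

/-- The Wasserstein distance of order `1` between two measures on a metric space:
the infimum over couplings `γ` of `∫ d(x,y) dγ`. -/
noncomputable def W1 {X : Type*} [MetricSpace X] [MeasurableSpace X]
    (μ ν : Measure X) : ℝ :=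
  (⨅ γ ∈ Couplings μ ν, ∫⁻ p, edist p.1 p.2 ∂γ).toReal

/-- `𝒫₁(X)`: Borel probability measures on `X` with finite first moment. -/
def P1 (X : Type*) [MetricSpace X] [MeasurableSpace X] : Set (Measure X) :=
  {μ | IsProbabilityMeasure μ ∧ ∀ x₀ : X, Integrable (fun x => dist x₀ x) μ}

/-- `λ` belongs to the simplex `Δ_N`: nonnegative weights summing to `1`. -/
def memSimplex {N : ℕ} (l : Fin N → ℝ) : Prop :=
  (∀ i, 0 ≤ l i) ∧ ∑ i, l i = 1

/-- The dispersion functional `μ ↦ ∑ᵢ λᵢ W₁(νᵢ, μ)`. -/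
noncomputable def medCost {X : Type*} [MetricSpace X] [MeasurableSpace X] {N : ℕ}
    (l : Fin N → ℝ) (ν : Fin N → Measure X) (μ : Measure X) : ℝ :=
  ∑ i, l i * W1 (ν i) μ

/-- The set of Wasserstein medians of `ν₁, …, ν_N` with weights `λ`:
minimizers over `𝒫₁(X)` of the dispersion functional. -/
def Med {X : Type*} [MetricSpace X] [MeasurableSpace X] {N : ℕ}
    (l : Fin N → ℝ) (ν : Fin N → Measure X) : Set (Measure X) :=
  {μ | μ ∈ P1 X ∧ ∀ ρ ∈ P1 X, medCost l ν μ ≤ medCost l ν ρ}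
/-- The total weight of the indices `i` with `xᵢ ≤ y`. -/
noncomputable def sumWeightLe {N : ℕ} (l x : Fin N → ℝ) (y : ℝ) : ℝ :=
  ∑ i ∈ Finset.univ.filter (fun i => x i ≤ y), l i

/-- The total weight of the indices `i` with `xᵢ < y`. -/
noncomputable def sumWeightLt {N : ℕ} (l x : Fin N → ℝ) (y : ℝ) : ℝ :=
  ∑ i ∈ Finset.univ.filter (fun i => x i < y), l i

/-- The lower weighted median `m⁻_λ(x) = inf {y : ∑_{i : xᵢ ≤ y} λᵢ ≥ 1/2}`. -/
noncomputable def mMinus {N : ℕ} (l x : Fin N → ℝ) : ℝ :=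
  sInf {y : ℝ | 1 / 2 ≤ sumWeightLe l x y}

/-- The upper weighted median `m⁺_λ(x) = sup {y : ∑_{i : xᵢ < y} λᵢ ≤ 1/2}`. -/
noncomputable def mPlus {N : ℕ} (l x : Fin N → ℝ) : ℝ :=
  sSup {y : ℝ | sumWeightLt l x y ≤ 1 / 2}

/-- The cumulative distribution function `F_ν(x) = ν((−∞, x])` of a measure on `ℝ`. -/
noncomputable def cdf (μ : Measure ℝ) (x : ℝ) : ℝ :=
  (μ (Set.Iic x)).toReal

/-- The quantile (pseudo-inverse) function `Q_ν(t) = inf {x : F_ν(x) ≥ t}`. -/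
noncomputable def quantile (μ : Measure ℝ) (t : ℝ) : ℝ :=
  sInf {x : ℝ | t ≤ cdf μ x}

namespace WMaux

variable {N : ℕ} {l a b : Fin N → ℝ}

lemma swle_nonneg (hl : memSimplex l) (a : Fin N → ℝ) (y : ℝ) : 0 ≤ sumWeightLe l a y :=
  Finset.sum_nonneg fun i _ => hl.1 i

lemma swlt_nonneg (hl : memSimplex l) (a : Fin N → ℝ) (y : ℝ) : 0 ≤ sumWeightLt l a y :=
  Finset.sum_nonneg fun i _ => hl.1 i

lemma weight_filter_le_one (hl : memSimplex l) (p : Fin N → Prop) [DecidablePred p] :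
    ∑ i ∈ Finset.univ.filter p, l i ≤ 1 := by
  rw [← hl.2]
  exact Finset.sum_le_sum_of_subset_of_nonneg (Finset.filter_subset _ _) fun i _ _ => hl.1 i

lemma swle_le_one (hl : memSimplex l) (a : Fin N → ℝ) (y : ℝ) : sumWeightLe l a y ≤ 1 :=
  weight_filter_le_one hl _

lemma swlt_le_one (hl : memSimplex l) (a : Fin N → ℝ) (y : ℝ) : sumWeightLt l a y ≤ 1 :=
  weight_filter_le_one hl _

lemma sum_le_sum_of_filter_subset (hl : memSimplex l) {p q : Fin N → Prop} [DecidablePred p]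
    [DecidablePred q] (h : ∀ i, p i → q i) :
    ∑ i ∈ Finset.univ.filter p, l i ≤ ∑ i ∈ Finset.univ.filter q, l i :=
  Finset.sum_le_sum_of_subset_of_nonneg
    (Finset.monotone_filter_right _ fun i _ => h i) fun i _ _ => hl.1 i

lemma swle_mono (hl : memSimplex l) (a : Fin N → ℝ) : Monotone (sumWeightLe l a) :=
  fun _ _ hyz => sum_le_sum_of_filter_subset hl fun i hi => le_trans hi hyz

lemma swlt_mono (hl : memSimplex l) (a : Fin N → ℝ) : Monotone (sumWeightLt l a) :=
  fun _ _ hyz => sum_le_sum_of_filter_subset hl fun i hi => lt_of_lt_of_le hi hyz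

lemma swlt_le_swle (hl : memSimplex l) (a : Fin N → ℝ) (y : ℝ) :
    sumWeightLt l a y ≤ sumWeightLe l a y :=
  sum_le_sum_of_filter_subset hl fun i hi => le_of_lt hi

lemma swle_le_swlt (hl : memSimplex l) (a : Fin N → ℝ) {y z : ℝ} (h : y < z) :
    sumWeightLe l a y ≤ sumWeightLt l a z :=
  sum_le_sum_of_filter_subset hl fun i hi => lt_of_le_of_lt hi h

lemma swle_anti (hl : memSimplex l) (hab : a ≤ b) (y : ℝ) :
    sumWeightLe l b y ≤ sumWeightLe l a y :=
  sum_le_sum_of_filter_subset hl fun i hi => le_trans (hab i) hi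

lemma swlt_anti (hl : memSimplex l) (hab : a ≤ b) (y : ℝ) :
    sumWeightLt l b y ≤ sumWeightLt l a y :=
  sum_le_sum_of_filter_subset hl fun i hi => lt_of_le_of_lt (hab i) hi

section withNe
variable (hl : memSimplex l) (hne : (Finset.univ : Finset (Fin N)).Nonempty)
include hl hne

lemma swle_sup' (a : Fin N → ℝ) : sumWeightLe l a (Finset.univ.sup' hne a) = 1 := by
  rw [← hl.2]
  unfold sumWeightLe
  congr 1
  apply Finset.filter_true_of_mem
  intro i _
  exact Finset.le_sup' a (Finset.mem_univ i)

lemma setLe_nonempty (a : Fin N → ℝ) : {y : ℝ | 1 / 2 ≤ sumWeightLe l a y}.Nonempty :=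
  ⟨Finset.univ.sup' hne a, by rw [Set.mem_setOf_eq, swle_sup' hl hne]; norm_num⟩

lemma setLe_lb (a : Fin N → ℝ) {y : ℝ} (hy : 1 / 2 ≤ sumWeightLe l a y) :
    Finset.univ.inf' hne a ≤ y := by
  by_contra hlt
  push_neg at hlt
  have hemp : Finset.univ.filter (fun i => a i ≤ y) = ∅ := by
    apply Finset.filter_false_of_mem
    intro i _ h
    exact absurd (lt_of_le_of_lt (le_trans (Finset.inf'_le a (Finset.mem_univ i)) h) hlt)
      (lt_irrefl _)
  rw [sumWeightLe, hemp, Finset.sum_empty] at hy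
  norm_num at hy

lemma setLe_bddBelow (a : Fin N → ℝ) : BddBelow {y : ℝ | 1 / 2 ≤ sumWeightLe l a y} :=
  ⟨Finset.univ.inf' hne a, fun y hy => setLe_lb hl hne a hy⟩

lemma half_le_swle_mMinus (a : Fin N → ℝ) : 1 / 2 ≤ sumWeightLe l a (mMinus l a) := by
  by_contra hlt
  push_neg at hlt
  rcases (Finset.univ.filter (fun i => mMinus l a < a i)).eq_empty_or_nonempty with hT | hT
  · have : Finset.univ.filter (fun i => a i ≤ mMinus l a) = Finset.univ := by
      apply Finset.filter_true_of_mem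
      intro i _
      by_contra h
      push_neg at h
      have := Finset.eq_empty_iff_forall_notMem.1 hT i
      simp only [Finset.mem_filter, Finset.mem_univ, true_and] at this
      exact this h
    rw [sumWeightLe, this, hl.2] at hlt
    norm_num at hlt
  · set z := (Finset.univ.filter (fun i => mMinus l a < a i)).inf' hT a with hz
    have hzgt : mMinus l a < z := by
      rw [hz, Finset.lt_inf'_iff]
      intro i hi
      exact (Finset.mem_filter.1 hi).2
    have hzle : z ≤ mMinus l a := by
      apply le_csInf (setLe_nonempty hl hne a)
      intro y hy
      by_contra hyz
      push_neg at hyz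
      have hym : mMinus l a ≤ y := csInf_le (setLe_bddBelow hl hne a) hy
      have hsub : sumWeightLe l a y ≤ sumWeightLe l a (mMinus l a) := by
        apply sum_le_sum_of_filter_subset hl
        intro i hi
        by_contra h
        push_neg at h
        have hiz : z ≤ a i := Finset.inf'_le a (by simp [h])
        linarith
      rw [Set.mem_setOf_eq] at hy
      linarith
    linarith

lemma mMinus_le_iff {u : ℝ} (a : Fin N → ℝ) :
    mMinus l a ≤ u ↔ 1 / 2 ≤ sumWeightLe l a u := by
  constructor
  · intro h
    exact le_trans (half_le_swle_mMinus hl hne a) (swle_mono hl a h)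
  · intro h
    exact csInf_le (setLe_bddBelow hl hne a) h

lemma swlt_mMinus_lt_half (a : Fin N → ℝ) : sumWeightLt l a (mMinus l a) < 1 / 2 := by
  by_contra hge
  push_neg at hge
  rcases (Finset.univ.filter (fun i => a i < mMinus l a)).eq_empty_or_nonempty with hB | hB
  · rw [sumWeightLt, hB, Finset.sum_empty] at hge
    norm_num at hge
  · set y := (Finset.univ.filter (fun i => a i < mMinus l a)).sup' hB a with hy
    have hylt : y < mMinus l a := by
      rw [hy, Finset.sup'_lt_iff]
      intro i hi
      exact (Finset.mem_filter.1 hi).2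
    have hSy : 1 / 2 ≤ sumWeightLe l a y := by
      refine le_trans hge (sum_le_sum_of_filter_subset hl ?_)
      intro i hi
      exact Finset.le_sup' a (by simp [hi])
    have h2 : mMinus l a ≤ y := csInf_le (setLe_bddBelow hl hne a) hSy
    linarith

lemma setLt_nonempty (a : Fin N → ℝ) : {y : ℝ | sumWeightLt l a y ≤ 1 / 2}.Nonempty := by
  refine ⟨Finset.univ.inf' hne a, ?_⟩
  rw [Set.mem_setOf_eq]
  have : Finset.univ.filter (fun i => a i < Finset.univ.inf' hne a) = ∅ := by
    apply Finset.filter_false_of_mem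
    intro i _ h
    exact absurd (lt_of_le_of_lt (Finset.inf'_le a (Finset.mem_univ i)) h) (lt_irrefl _)
  rw [sumWeightLt, this, Finset.sum_empty]
  norm_num

lemma setLt_ub (a : Fin N → ℝ) {y : ℝ} (hy : sumWeightLt l a y ≤ 1 / 2) :
    y ≤ Finset.univ.sup' hne a := by
  by_contra hlt
  push_neg at hlt
  have : Finset.univ.filter (fun i => a i < y) = Finset.univ := by
    apply Finset.filter_true_of_mem
    intro i _
    exact lt_of_le_of_lt (Finset.le_sup' a (Finset.mem_univ i)) hlt
  rw [sumWeightLt, this, hl.2] at hy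
  norm_num at hy

lemma setLt_bddAbove (a : Fin N → ℝ) : BddAbove {y : ℝ | sumWeightLt l a y ≤ 1 / 2} :=
  ⟨Finset.univ.sup' hne a, fun y hy => setLt_ub hl hne a hy⟩

lemma swlt_mPlus_le_half (a : Fin N → ℝ) : sumWeightLt l a (mPlus l a) ≤ 1 / 2 := by
  by_contra hgt
  push_neg at hgt
  rcases (Finset.univ.filter (fun i => a i < mPlus l a)).eq_empty_or_nonempty with hB | hB
  · rw [sumWeightLt, hB, Finset.sum_empty] at hgt
    have := swlt_nonneg hl a (mPlus l a)
    norm_num at hgt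
  · set y := (Finset.univ.filter (fun i => a i < mPlus l a)).sup' hB a with hy
    have hylt : y < mPlus l a := by
      rw [hy, Finset.sup'_lt_iff]
      intro i hi
      exact (Finset.mem_filter.1 hi).2
    have hub : ∀ w ∈ {w : ℝ | sumWeightLt l a w ≤ 1 / 2}, w ≤ y := by
      intro w hw
      by_contra hwy
      push_neg at hwy
      have hsub : sumWeightLt l a (mPlus l a) ≤ sumWeightLt l a w := by
        apply sum_le_sum_of_filter_subset hl
        intro i hi
        exact lt_of_le_of_lt (Finset.le_sup' a (by simp [hi])) hwy
      rw [Set.mem_setOf_eq] at hw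
      linarith
    have h2 : mPlus l a ≤ y := csSup_le (setLt_nonempty hl hne a) hub
    linarith

lemma le_mPlus_iff {u : ℝ} (a : Fin N → ℝ) :
    u ≤ mPlus l a ↔ sumWeightLt l a u ≤ 1 / 2 := by
  constructor
  · intro h
    exact le_trans (swlt_mono hl a h) (swlt_mPlus_le_half hl hne a)
  · intro h
    exact le_csSup (setLt_bddAbove hl hne a) h

lemma half_lt_swle_mPlus (a : Fin N → ℝ) : 1 / 2 < sumWeightLe l a (mPlus l a) := by
  by_contra hle
  push_neg at hle
  rcases (Finset.univ.filter (fun i => mPlus l a < a i)).eq_empty_or_nonempty with hT | hT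
  · have : Finset.univ.filter (fun i => a i ≤ mPlus l a) = Finset.univ := by
      apply Finset.filter_true_of_mem
      intro i _
      by_contra h
      push_neg at h
      have := Finset.eq_empty_iff_forall_notMem.1 hT i
      simp only [Finset.mem_filter, Finset.mem_univ, true_and] at this
      exact this h
    rw [sumWeightLe, this, hl.2] at hle
    norm_num at hle
  · set z := (Finset.univ.filter (fun i => mPlus l a < a i)).inf' hT a with hz
    have hzgt : mPlus l a < z := by
      rw [hz, Finset.lt_inf'_iff]
      intro i hi
      exact (Finset.mem_filter.1 hi).2
    have hzmem : sumWeightLt l a z ≤ 1 / 2 := by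
      refine le_trans (sum_le_sum_of_filter_subset hl ?_) hle
      intro i hi
      by_contra h
      push_neg at h
      have : z ≤ a i := Finset.inf'_le a (by simp [h])
      linarith
    have h2 : z ≤ mPlus l a := le_csSup (setLt_bddAbove hl hne a) hzmem
    linarith

lemma mMinus_le_mPlus (a : Fin N → ℝ) : mMinus l a ≤ mPlus l a :=
  (le_mPlus_iff hl hne a).2 (le_of_lt (swlt_mMinus_lt_half hl hne a))

lemma inf'_le_mMinus (a : Fin N → ℝ) : Finset.univ.inf' hne a ≤ mMinus l a :=
  le_csInf (setLe_nonempty hl hne a) fun y hy => setLe_lb hl hne a hy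

lemma mPlus_le_sup' (a : Fin N → ℝ) : mPlus l a ≤ Finset.univ.sup' hne a :=
  csSup_le (setLt_nonempty hl hne a) fun y hy => setLt_ub hl hne a hy

lemma mMinus_mono (hab : a ≤ b) : mMinus l a ≤ mMinus l b := by
  apply csInf_le_csInf (setLe_bddBelow hl hne a) (setLe_nonempty hl hne b)
  intro y hy
  exact le_trans hy (swle_anti hl hab y)

lemma mPlus_mono (hab : a ≤ b) : mPlus l a ≤ mPlus l b := by
  apply csSup_le_csSup (setLt_bddAbove hl hne b) (setLt_nonempty hl hne a)
  intro y hy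
  exact le_trans (swlt_anti hl hab y) hy

end withNe

lemma swle_shift (a : Fin N → ℝ) (c y : ℝ) :
    sumWeightLe l (fun i => a i + c) (y + c) = sumWeightLe l a y := by
  unfold sumWeightLe
  congr 1
  apply Finset.filter_congr
  intro i _
  simp [add_le_add_iff_right]

lemma swlt_shift (a : Fin N → ℝ) (c y : ℝ) :
    sumWeightLt l (fun i => a i + c) (y + c) = sumWeightLt l a y := by
  unfold sumWeightLt
  congr 1
  apply Finset.filter_congr
  intro i _
  simp [add_lt_add_iff_right]

section shift
variable (hl : memSimplex l) (hne : (Finset.univ : Finset (Fin N)).Nonempty)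
include hl hne

lemma mMinus_add_le (a : Fin N → ℝ) (c : ℝ) :
    mMinus l (fun i => a i + c) ≤ mMinus l a + c := by
  apply csInf_le (setLe_bddBelow hl hne _)
  show (1:ℝ)/2 ≤ sumWeightLe l (fun i => a i + c) (mMinus l a + c)
  rw [swle_shift]
  exact half_le_swle_mMinus hl hne a

lemma mMinus_shift (a : Fin N → ℝ) (c : ℝ) :
    mMinus l (fun i => a i + c) = mMinus l a + c := by
  refine le_antisymm (mMinus_add_le hl hne a c) ?_
  have h := mMinus_add_le hl hne (fun i => a i + c) (-c)
  simp only [add_neg_cancel_right] at h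
  linarith

lemma mPlus_add_le (a : Fin N → ℝ) (c : ℝ) :
    mPlus l a + c ≤ mPlus l (fun i => a i + c) := by
  apply le_csSup (setLt_bddAbove hl hne _)
  show sumWeightLt l (fun i => a i + c) (mPlus l a + c) ≤ 1/2
  rw [swlt_shift]
  exact swlt_mPlus_le_half hl hne a

lemma mPlus_shift (a : Fin N → ℝ) (c : ℝ) :
    mPlus l (fun i => a i + c) = mPlus l a + c := by
  refine le_antisymm ?_ (mPlus_add_le hl hne a c)
  have h := mPlus_add_le hl hne (fun i => a i + c) (-c)
  simp only [add_neg_cancel_right] at h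
  linarith

end shift

end WMaux

noncomputable def gfun {N : ℕ} (l a : Fin N → ℝ) (u : ℝ) : ℝ := ∑ i, l i * |a i - u|

noncomputable def clampMed {N : ℕ} (l a : Fin N → ℝ) (u : ℝ) : ℝ :=
  max (mMinus l a) (min u (mPlus l a))

namespace WMaux

variable {N : ℕ} {l a : Fin N → ℝ}

lemma weight_ite_sum (hl : memSimplex l) (p : Fin N → Prop) [DecidablePred p] (A B : ℝ) :
    ∑ i, l i * (if p i then A else B)
      = (∑ i ∈ Finset.univ.filter p, l i) * A + (1 - ∑ i ∈ Finset.univ.filter p, l i) * B := by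
  have hsplit := Finset.sum_filter_add_sum_filter_not Finset.univ p
    (fun i => l i * (if p i then A else B))
  have hw := Finset.sum_filter_add_sum_filter_not Finset.univ p l
  rw [hl.2] at hw
  have h1 : ∑ i ∈ Finset.univ.filter p, l i * (if p i then A else B)
      = (∑ i ∈ Finset.univ.filter p, l i) * A := by
    rw [Finset.sum_mul]
    apply Finset.sum_congr rfl
    intro i hi
    rw [if_pos (Finset.mem_filter.1 hi).2]
  have h2 : ∑ i ∈ Finset.univ.filter (fun i => ¬ p i), l i * (if p i then A else B)
      = (∑ i ∈ Finset.univ.filter (fun i => ¬ p i), l i) * B := by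
    rw [Finset.sum_mul]
    apply Finset.sum_congr rfl
    intro i hi
    rw [if_neg (Finset.mem_filter.1 hi).2]
  have h3 : ∑ i ∈ Finset.univ.filter (fun i => ¬ p i), l i
      = 1 - ∑ i ∈ Finset.univ.filter p, l i := by linarith
  calc ∑ i, l i * (if p i then A else B)
      = ∑ i ∈ Finset.univ.filter p, l i * (if p i then A else B)
        + ∑ i ∈ Finset.univ.filter (fun i => ¬ p i), l i * (if p i then A else B) := hsplit.symm
    _ = _ := by rw [h1, h2, h3]

lemma gfun_sub (a : Fin N → ℝ) (u v : ℝ) :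
    gfun l a v - gfun l a u = ∑ i, l i * (|a i - v| - |a i - u|) := by
  unfold gfun
  rw [← Finset.sum_sub_distrib]
  apply Finset.sum_congr rfl
  intro i _
  ring

lemma abs_diff_lb (x u v : ℝ) : -|v - u| ≤ |x - v| - |x - u| := by
  have h := abs_sub_abs_le_abs_sub (x - u) (x - v)
  have h2 : (x - u) - (x - v) = v - u := by ring
  rw [h2] at h
  linarith

lemma abs_diff_ub (x u v : ℝ) : |x - v| - |x - u| ≤ |v - u| := by
  have h := abs_sub_abs_le_abs_sub (x - v) (x - u)
  have h2 : (x - v) - (x - u) = u - v := by ring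
  rw [h2] at h
  have h3 : |u - v| = |v - u| := abs_sub_comm u v
  linarith

lemma gk1 (hl : memSimplex l) (a : Fin N → ℝ) {u v : ℝ} (huv : u ≤ v) :
    (v - u) * (2 * sumWeightLe l a u - 1) ≤ gfun l a v - gfun l a u := by
  rw [gfun_sub]
  have key : ∀ i, l i * (if a i ≤ u then (v - u) else -(v - u))
      ≤ l i * (|a i - v| - |a i - u|) := by
    intro i
    apply mul_le_mul_of_nonneg_left _ (hl.1 i)
    split_ifs with h
    · have h1 : |a i - v| = -(a i - v) := abs_of_nonpos (by linarith)
      have h2 : |a i - u| = -(a i - u) := abs_of_nonpos (by linarith)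
      linarith
    · have := abs_diff_lb (a i) u v
      have habs : |v - u| = v - u := abs_of_nonneg (by linarith)
      linarith
  calc (v - u) * (2 * sumWeightLe l a u - 1)
      = ∑ i, l i * (if a i ≤ u then (v - u) else -(v - u)) := by
        rw [weight_ite_sum hl]
        unfold sumWeightLe
        ring
    _ ≤ _ := Finset.sum_le_sum fun i _ => key i

lemma gk2 (hl : memSimplex l) (a : Fin N → ℝ) {u v : ℝ} (hvu : v ≤ u) :
    (u - v) * (1 - 2 * sumWeightLt l a u) ≤ gfun l a v - gfun l a u := by
  rw [gfun_sub]
  have key : ∀ i, l i * (if a i < u then -(u - v) else (u - v))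
      ≤ l i * (|a i - v| - |a i - u|) := by
    intro i
    apply mul_le_mul_of_nonneg_left _ (hl.1 i)
    split_ifs with h
    · have := abs_diff_lb (a i) u v
      have habs : |v - u| = u - v := by
        rw [abs_sub_comm]
        exact abs_of_nonneg (by linarith)
      linarith
    · push_neg at h
      have h1 : |a i - v| = a i - v := abs_of_nonneg (by linarith)
      have h2 : |a i - u| = a i - u := abs_of_nonneg (by linarith)
      linarith
  calc (u - v) * (1 - 2 * sumWeightLt l a u)
      = ∑ i, l i * (if a i < u then -(u - v) else (u - v)) := by
        rw [weight_ite_sum hl]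
        unfold sumWeightLt
        ring
    _ ≤ _ := Finset.sum_le_sum fun i _ => key i

lemma gk3 (hl : memSimplex l) (a : Fin N → ℝ) {u v : ℝ} (huv : u ≤ v) :
    gfun l a v - gfun l a u ≤ (v - u) * (2 * sumWeightLt l a v - 1) := by
  rw [gfun_sub]
  have key : ∀ i, l i * (|a i - v| - |a i - u|)
      ≤ l i * (if a i < v then (v - u) else -(v - u)) := by
    intro i
    apply mul_le_mul_of_nonneg_left _ (hl.1 i)
    split_ifs with h
    · have := abs_diff_ub (a i) u v
      have habs : |v - u| = v - u := abs_of_nonneg (by linarith)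
      linarith
    · push_neg at h
      have h1 : |a i - v| = a i - v := abs_of_nonneg (by linarith)
      have h2 : |a i - u| = a i - u := abs_of_nonneg (by linarith)
      linarith
  calc ∑ i, l i * (|a i - v| - |a i - u|)
      ≤ ∑ i, l i * (if a i < v then (v - u) else -(v - u)) :=
        Finset.sum_le_sum fun i _ => key i
    _ = (v - u) * (2 * sumWeightLt l a v - 1) := by
        rw [weight_ite_sum hl]
        unfold sumWeightLt
        ring

lemma gk4 (hl : memSimplex l) (a : Fin N → ℝ) {u v : ℝ} (hvu : v ≤ u) :
    gfun l a v - gfun l a u ≤ (u - v) * (1 - 2 * sumWeightLe l a v) := by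
  rw [gfun_sub]
  have key : ∀ i, l i * (|a i - v| - |a i - u|)
      ≤ l i * (if a i ≤ v then -(u - v) else (u - v)) := by
    intro i
    apply mul_le_mul_of_nonneg_left _ (hl.1 i)
    split_ifs with h
    · have h1 : |a i - v| = -(a i - v) := abs_of_nonpos (by linarith)
      have h2 : |a i - u| = -(a i - u) := abs_of_nonpos (by linarith)
      linarith
    · have := abs_diff_ub (a i) u v
      have habs : |v - u| = u - v := by
        rw [abs_sub_comm]
        exact abs_of_nonneg (by linarith)
      linarith
  calc ∑ i, l i * (|a i - v| - |a i - u|)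
      ≤ ∑ i, l i * (if a i ≤ v then -(u - v) else (u - v)) :=
        Finset.sum_le_sum fun i _ => key i
    _ = (u - v) * (1 - 2 * sumWeightLe l a v) := by
        rw [weight_ite_sum hl]
        unfold sumWeightLe
        ring

section withNe
variable (hl : memSimplex l) (hne : (Finset.univ : Finset (Fin N)).Nonempty)
include hl hne

lemma gfun_min {u : ℝ} (hu1 : mMinus l a ≤ u) (hu2 : u ≤ mPlus l a) :
    ∀ v, gfun l a u ≤ gfun l a v := by
  intro v
  rcases le_total u v with h | h
  · have hS : 1 / 2 ≤ sumWeightLe l a u := (mMinus_le_iff hl hne a).1 hu1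
    have := gk1 hl a h
    nlinarith
  · have hS : sumWeightLt l a u ≤ 1 / 2 := (le_mPlus_iff hl hne a).1 hu2
    have := gk2 hl a h
    nlinarith

lemma gfun_const {w : ℝ} (hw1 : mMinus l a ≤ w) (hw2 : w ≤ mPlus l a) :
    gfun l a w = gfun l a (mMinus l a) :=
  le_antisymm (gfun_min hl hne hw1 hw2 _)
    (gfun_min hl hne (le_refl _) (mMinus_le_mPlus hl hne a) _)

end withNe

noncomputable def subsetSums {N : ℕ} (l : Fin N → ℝ) : Finset ℝ :=
  Finset.univ.powerset.image (fun I => ∑ i ∈ I, l i)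

lemma swle_mem_ss (a : Fin N → ℝ) (y : ℝ) : sumWeightLe l a y ∈ subsetSums l :=
  Finset.mem_image.2 ⟨_, Finset.mem_powerset.2 (Finset.subset_univ _), rfl⟩

lemma swlt_mem_ss (a : Fin N → ℝ) (y : ℝ) : sumWeightLt l a y ∈ subsetSums l :=
  Finset.mem_image.2 ⟨_, Finset.mem_powerset.2 (Finset.subset_univ _), rfl⟩

lemma exists_kappa (hl : memSimplex l) (hne : (Finset.univ : Finset (Fin N)).Nonempty) :
    ∃ κ : ℝ, 0 < κ ∧ ∀ (a : Fin N → ℝ) (u : ℝ),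
      (u < mMinus l a → gfun l a (mMinus l a) + (mMinus l a - u) * κ ≤ gfun l a u) ∧
      (mPlus l a < u → gfun l a (mPlus l a) + (u - mPlus l a) * κ ≤ gfun l a u) := by
  have hT1ne : ((subsetSums l).filter (fun s => s < 1/2)).Nonempty := by
    refine ⟨0, Finset.mem_filter.2 ⟨Finset.mem_image.2 ⟨∅, ?_, Finset.sum_empty⟩, by norm_num⟩⟩
    exact Finset.mem_powerset.2 (Finset.empty_subset _)
  have hT2ne : ((subsetSums l).filter (fun s => 1/2 < s)).Nonempty := by
    refine ⟨1, Finset.mem_filter.2 ⟨Finset.mem_image.2 ⟨Finset.univ, ?_, hl.2⟩, by norm_num⟩⟩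
    exact Finset.mem_powerset.2 (le_refl _)
  set c₁ := ((subsetSums l).filter (fun s => s < 1/2)).max' hT1ne with hc1
  set c₂ := ((subsetSums l).filter (fun s => 1/2 < s)).min' hT2ne with hc2
  have hc1lt : c₁ < 1/2 := (Finset.mem_filter.1 (Finset.max'_mem _ hT1ne)).2
  have hc2gt : 1/2 < c₂ := (Finset.mem_filter.1 (Finset.min'_mem _ hT2ne)).2
  refine ⟨min (1 - 2*c₁) (2*c₂ - 1), by rw [lt_min_iff]; constructor <;> linarith, ?_⟩
  intro a u
  constructor
  · intro hu
    have hS : sumWeightLt l a (mMinus l a) < 1/2 := swlt_mMinus_lt_half hl hne a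
    have hmem : sumWeightLt l a (mMinus l a) ∈ (subsetSums l).filter (fun s => s < 1/2) :=
      Finset.mem_filter.2 ⟨swlt_mem_ss a _, hS⟩
    have hSmem : sumWeightLt l a (mMinus l a) ≤ c₁ := Finset.le_max' _ _ hmem
    have h3 := gk3 hl a (le_of_lt hu)
    have hfac : (mMinus l a - u) * (2 * sumWeightLt l a (mMinus l a) - 1)
        ≤ (mMinus l a - u) * (-(min (1 - 2*c₁) (2*c₂ - 1))) := by
      apply mul_le_mul_of_nonneg_left _ (by linarith)
      have := min_le_left (1 - 2*c₁) (2*c₂ - 1)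
      linarith
    nlinarith [h3, hfac]
  · intro hu
    have hS : 1/2 < sumWeightLe l a (mPlus l a) := half_lt_swle_mPlus hl hne a
    have hmem : sumWeightLe l a (mPlus l a) ∈ (subsetSums l).filter (fun s => 1/2 < s) :=
      Finset.mem_filter.2 ⟨swle_mem_ss a _, hS⟩
    have hSmem : c₂ ≤ sumWeightLe l a (mPlus l a) := Finset.min'_le _ _ hmem
    have h4 := gk4 hl a (le_of_lt hu)
    have hfac : (u - mPlus l a) * (1 - 2 * sumWeightLe l a (mPlus l a))
        ≤ (u - mPlus l a) * (-(min (1 - 2*c₁) (2*c₂ - 1))) := by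
      apply mul_le_mul_of_nonneg_left _ (by linarith)
      have := min_le_right (1 - 2*c₁) (2*c₂ - 1)
      linarith
    nlinarith [h4, hfac]

lemma mPlus_le_mMinus_of_no_half (hl : memSimplex l)
    (hne : (Finset.univ : Finset (Fin N)).Nonempty)
    (hhalf : ¬ ∃ I : Finset (Fin N), ∑ i ∈ I, l i = 1/2) (a : Fin N → ℝ) :
    mPlus l a ≤ mMinus l a := by
  have h1 : 1/2 < sumWeightLe l a (mMinus l a) := by
    rcases lt_or_eq_of_le (half_le_swle_mMinus hl hne a) with h | h
    · exact h
    · exact absurd ⟨_, h.symm⟩ hhalf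
  apply csSup_le (setLt_nonempty hl hne a)
  intro y hy
  by_contra hym
  push_neg at hym
  have hsub : sumWeightLe l a (mMinus l a) ≤ sumWeightLt l a y :=
    swle_le_swlt hl a hym
  rw [Set.mem_setOf_eq] at hy
  linarith

section clampSec
variable (hl : memSimplex l) (hne : (Finset.univ : Finset (Fin N)).Nonempty)
include hl hne

lemma mMinus_le_clamp (a : Fin N → ℝ) (u : ℝ) : mMinus l a ≤ clampMed l a u :=
  le_max_left _ _

lemma clamp_le_mPlus (a : Fin N → ℝ) (u : ℝ) : clampMed l a u ≤ mPlus l a :=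
  max_le (mMinus_le_mPlus hl hne a) (min_le_right _ _)

lemma clamp_eq_mMinus {u : ℝ} (a : Fin N → ℝ) (h : u < mMinus l a) :
    clampMed l a u = mMinus l a := by
  unfold clampMed
  rw [max_eq_left]
  rcases le_total u (mPlus l a) with h' | h'
  · rw [min_eq_left h']
    linarith
  · rw [min_eq_right h']
    linarith [mMinus_le_mPlus hl hne a]

lemma clamp_eq_mPlus {u : ℝ} (a : Fin N → ℝ) (h : mPlus l a < u) :
    clampMed l a u = mPlus l a := by
  unfold clampMed
  rw [min_eq_right (le_of_lt h), max_eq_right (mMinus_le_mPlus hl hne a)]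

lemma clamp_eq_self {u : ℝ} (a : Fin N → ℝ) (h1 : mMinus l a ≤ u) (h2 : u ≤ mPlus l a) :
    clampMed l a u = u := by
  unfold clampMed
  rw [min_eq_left h2, max_eq_right h1]

lemma gfun_clamp_le (a : Fin N → ℝ) (u v : ℝ) : gfun l a (clampMed l a u) ≤ gfun l a v :=
  gfun_min hl hne (mMinus_le_clamp hl hne a u) (clamp_le_mPlus hl hne a u) v

end clampSec

lemma clamp_mono (hl : memSimplex l) (hne : (Finset.univ : Finset (Fin N)).Nonempty)
    {a b : Fin N → ℝ} {u v : ℝ} (hab : a ≤ b) (huv : u ≤ v) :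
    clampMed l a u ≤ clampMed l b v :=
  max_le_max (mMinus_mono hl hne hab) (min_le_min huv (mPlus_mono hl hne hab))

end WMaux

/-! ### cdf / quantile basics -/

namespace WMaux

variable {μ ν : Measure ℝ}

lemma cdf_eq_pt (μ : Measure ℝ) [IsProbabilityMeasure μ] :
    cdf μ = ⇑(ProbabilityTheory.cdf μ) :=
  funext fun x => (ProbabilityTheory.cdf_eq_real μ x).symm

lemma meas_Iic (μ : Measure ℝ) [IsProbabilityMeasure μ] (x : ℝ) :
    μ (Set.Iic x) = ENNReal.ofReal (cdf μ x) := by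
  rw [cdf_eq_pt]
  exact (ProbabilityTheory.ofReal_cdf μ x).symm

lemma cdf_nonneg (μ : Measure ℝ) (x : ℝ) : 0 ≤ cdf μ x := ENNReal.toReal_nonneg

lemma cdf_le_one (μ : Measure ℝ) [IsProbabilityMeasure μ] (x : ℝ) : cdf μ x ≤ 1 := by
  rw [cdf_eq_pt]
  exact ProbabilityTheory.cdf_le_one μ x

lemma cdf_mono (μ : Measure ℝ) [IsProbabilityMeasure μ] : Monotone (cdf μ) := by
  rw [cdf_eq_pt]
  exact ProbabilityTheory.monotone_cdf μ

lemma measurable_cdf (μ : Measure ℝ) [IsProbabilityMeasure μ] : Measurable (cdf μ) :=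
  (cdf_mono μ).measurable

lemma tendsto_cdf_atTop (μ : Measure ℝ) [IsProbabilityMeasure μ] :
    Tendsto (cdf μ) atTop (𝓝 1) := by
  rw [cdf_eq_pt]
  exact ProbabilityTheory.tendsto_cdf_atTop μ

lemma tendsto_cdf_atBot (μ : Measure ℝ) [IsProbabilityMeasure μ] :
    Tendsto (cdf μ) atBot (𝓝 0) := by
  rw [cdf_eq_pt]
  exact ProbabilityTheory.tendsto_cdf_atBot μ

lemma cdf_right_cts (μ : Measure ℝ) [IsProbabilityMeasure μ] (x : ℝ) :
    ContinuousWithinAt (cdf μ) (Set.Ici x) x := by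
  rw [cdf_eq_pt]
  exact (ProbabilityTheory.cdf μ).right_continuous x

lemma meas_Ioi (μ : Measure ℝ) [IsProbabilityMeasure μ] (x : ℝ) :
    μ (Set.Ioi x) = ENNReal.ofReal (1 - cdf μ x) := by
  have h : μ (Set.Ioi x) = μ Set.univ - μ (Set.Iic x) := by
    rw [← Set.compl_Iic]
    exact measure_compl measurableSet_Iic (measure_ne_top μ _)
  rw [h, measure_univ, meas_Iic, ENNReal.ofReal_sub _ (cdf_nonneg μ x), ENNReal.ofReal_one]

section quantileSec

variable [IsProbabilityMeasure μ] {t : ℝ}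

lemma qSet_nonempty (ht : t < 1) : {x : ℝ | t ≤ cdf μ x}.Nonempty := by
  obtain ⟨x, hx⟩ := ((tendsto_cdf_atTop μ).eventually_const_lt ht).exists
  exact ⟨x, le_of_lt hx⟩

lemma qSet_bddBelow (ht : 0 < t) : BddBelow {x : ℝ | t ≤ cdf μ x} := by
  obtain ⟨x₀, hx₀⟩ := ((tendsto_cdf_atBot μ).eventually_lt_const ht).exists
  refine ⟨x₀, fun y hy => ?_⟩
  by_contra hlt
  push_neg at hlt
  have := cdf_mono μ (le_of_lt hlt)
  rw [Set.mem_setOf_eq] at hy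
  linarith

lemma t_le_cdf_quantile (ht : t ∈ Set.Ioo (0:ℝ) 1) : t ≤ cdf μ (quantile μ t) := by
  by_contra h
  push_neg at h
  have hev : ∀ᶠ y in 𝓝[≥] (quantile μ t), cdf μ y < t :=
    (cdf_right_cts μ (quantile μ t)).eventually_lt_const h
  obtain ⟨u, hu, hsub⟩ := mem_nhdsGE_iff_exists_Ico_subset.1 hev
  have hub : ∀ y ∈ {x : ℝ | t ≤ cdf μ x}, u ≤ y := by
    intro y hy
    by_contra hyu
    push_neg at hyu
    have hqy : quantile μ t ≤ y := csInf_le (qSet_bddBelow ht.1) hy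
    have : cdf μ y < t := hsub ⟨hqy, hyu⟩
    rw [Set.mem_setOf_eq] at hy
    linarith
  have : u ≤ quantile μ t := le_csInf (qSet_nonempty ht.2) hub
  rw [Set.mem_Ioi] at hu
  linarith

lemma quantile_le_iff (ht : t ∈ Set.Ioo (0:ℝ) 1) {x : ℝ} :
    quantile μ t ≤ x ↔ t ≤ cdf μ x := by
  constructor
  · intro h
    exact le_trans (t_le_cdf_quantile ht) (cdf_mono μ h)
  · intro h
    exact csInf_le (qSet_bddBelow ht.1) h

lemma lt_quantile_iff (ht : t ∈ Set.Ioo (0:ℝ) 1) {x : ℝ} :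
    x < quantile μ t ↔ cdf μ x < t := by
  rw [← not_le, ← not_le, not_iff_not]
  exact quantile_le_iff ht

lemma qSet_eq_Ici (ht : t ∈ Set.Ioo (0:ℝ) 1) :
    {x : ℝ | t ≤ cdf μ x} = Set.Ici (quantile μ t) := by
  ext x
  rw [Set.mem_setOf_eq, Set.mem_Ici]
  exact (quantile_le_iff ht).symm

end quantileSec

lemma quantile_monoOn (μ : Measure ℝ) [IsProbabilityMeasure μ] :
    MonotoneOn (quantile μ) (Set.Ioo (0:ℝ) 1) := by
  intro t ht t' ht' htt'
  exact (quantile_le_iff ht).2 (le_trans htt' (t_le_cdf_quantile ht'))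

lemma vol_inter_Iic {c : ℝ} (h0 : 0 ≤ c) (h1 : c ≤ 1) :
    volume (Set.Ioo (0:ℝ) 1 ∩ Set.Iic c) = ENNReal.ofReal c := by
  rcases lt_or_eq_of_le h1 with h | h
  · have : Set.Ioo (0:ℝ) 1 ∩ Set.Iic c = Set.Ioc 0 c := by
      ext y
      simp only [Set.mem_inter_iff, Set.mem_Ioo, Set.mem_Iic, Set.mem_Ioc]
      constructor
      · rintro ⟨⟨hy0, _⟩, hyc⟩
        exact ⟨hy0, hyc⟩
      · rintro ⟨hy0, hyc⟩
        exact ⟨⟨hy0, lt_of_le_of_lt hyc h⟩, hyc⟩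
    rw [this, Real.volume_Ioc, sub_zero]
  · subst h
    have : Set.Ioo (0:ℝ) 1 ∩ Set.Iic 1 = Set.Ioo 0 1 := by
      ext y
      simp only [Set.mem_inter_iff, Set.mem_Ioo, Set.mem_Iic]
      exact ⟨fun ⟨hy, _⟩ => hy, fun hy => ⟨hy, le_of_lt hy.2⟩⟩
    rw [this, Real.volume_Ioo, sub_zero]

lemma vol_quantile_le (μ : Measure ℝ) [IsProbabilityMeasure μ] (x : ℝ) :
    volume (Set.Ioo (0:ℝ) 1 ∩ {t | quantile μ t ≤ x}) = ENNReal.ofReal (cdf μ x) := by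
  have hset : Set.Ioo (0:ℝ) 1 ∩ {t | quantile μ t ≤ x}
      = Set.Ioo (0:ℝ) 1 ∩ Set.Iic (cdf μ x) := by
    ext t
    simp only [Set.mem_inter_iff, Set.mem_setOf_eq, Set.mem_Iic]
    constructor
    · rintro ⟨ht, hq⟩
      exact ⟨ht, (quantile_le_iff ht).1 hq⟩
    · rintro ⟨ht, hq⟩
      exact ⟨ht, (quantile_le_iff ht).2 hq⟩
  rw [hset]
  exact vol_inter_Iic (cdf_nonneg μ x) (cdf_le_one μ x)

lemma aemeasurable_quantile (μ : Measure ℝ) [IsProbabilityMeasure μ] :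
    AEMeasurable (quantile μ) (volume.restrict (Set.Ioo (0:ℝ) 1)) :=
  aemeasurable_restrict_of_monotoneOn measurableSet_Ioo (quantile_monoOn μ)

lemma map_quantile (μ : Measure ℝ) [IsProbabilityMeasure μ] :
    (volume.restrict (Set.Ioo (0:ℝ) 1)).map (quantile μ) = μ := by
  have hae := aemeasurable_quantile μ
  have hprob : IsProbabilityMeasure ((volume.restrict (Set.Ioo (0:ℝ) 1)).map (quantile μ)) := by
    constructor
    rw [Measure.map_apply_of_aemeasurable hae MeasurableSet.univ, Set.preimage_univ,
      Measure.restrict_apply' measurableSet_Ioo, Set.univ_inter, Real.volume_Ioo]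
    norm_num
  apply Measure.ext_of_Iic
  intro x
  rw [Measure.map_apply_of_aemeasurable hae measurableSet_Iic,
    Measure.restrict_apply' measurableSet_Ioo, Set.inter_comm]
  have : quantile μ ⁻¹' Set.Iic x = {t | quantile μ t ≤ x} := rfl
  rw [this, vol_quantile_le, meas_Iic]

end WMaux

/-! ### W1 as L¹ distance of cdfs -/

namespace WMaux

variable {μ ν : Measure ℝ}

noncomputable def LF (μ ν : Measure ℝ) : ℝ≥0∞ :=
  ∫⁻ x, ENNReal.ofReal |cdf μ x - cdf ν x|

noncomputable def LQ (μ ν : Measure ℝ) : ℝ≥0∞ :=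
  ∫⁻ t in Set.Ioo (0:ℝ) 1, ENNReal.ofReal |quantile μ t - quantile ν t|

lemma ofReal_abs_split (a b : ℝ) :
    ENNReal.ofReal |a - b| = ENNReal.ofReal (a - b) + ENNReal.ofReal (b - a) := by
  rcases le_total a b with h | h
  · rw [abs_of_nonpos (sub_nonpos.2 h), ENNReal.ofReal_of_nonpos (sub_nonpos.2 h), zero_add,
      neg_sub]
  · rw [abs_of_nonneg (sub_nonneg.2 h), ENNReal.ofReal_of_nonpos (sub_nonpos.2 h), add_zero]

lemma ofReal_abs_le {a b c d : ℝ≥0∞} (hab : ENNReal.ofReal (a.toReal) = a) : True := trivial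

lemma vol_Ioc_inter {b c : ℝ} (hb : 0 ≤ b) (hc : c ≤ 1) :
    volume (Set.Ioc b c ∩ Set.Ioo 0 1) = ENNReal.ofReal (c - b) := by
  rcases le_or_gt c b with h | h
  · rw [Set.Ioc_eq_empty (not_lt.2 h), Set.empty_inter, measure_empty,
      ENNReal.ofReal_of_nonpos (by linarith)]
  · rcases lt_or_eq_of_le hc with h1 | h1
    · have : Set.Ioc b c ∩ Set.Ioo 0 1 = Set.Ioc b c := by
        ext t
        simp only [Set.mem_inter_iff, Set.mem_Ioc, Set.mem_Ioo]
        constructor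
        · rintro ⟨ht, _⟩
          exact ht
        · rintro ⟨ht1, ht2⟩
          exact ⟨⟨ht1, ht2⟩, lt_of_le_of_lt hb ht1, lt_of_le_of_lt ht2 h1⟩
      rw [this, Real.volume_Ioc]
    · subst h1
      have : Set.Ioc b 1 ∩ Set.Ioo 0 1 = Set.Ioo b 1 := by
        ext t
        simp only [Set.mem_inter_iff, Set.mem_Ioc, Set.mem_Ioo]
        constructor
        · rintro ⟨⟨ht1, _⟩, ⟨_, ht4⟩⟩
          exact ⟨ht1, ht4⟩
        · rintro ⟨ht1, ht2⟩
          exact ⟨⟨ht1, le_of_lt ht2⟩, lt_of_le_of_lt hb ht1, ht2⟩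
      rw [this, Real.volume_Ioo]

section LQLF

variable (μ ν : Measure ℝ) [IsProbabilityMeasure μ] [IsProbabilityMeasure ν]

lemma region_eq :
    ∫⁻ t in Set.Ioo (0:ℝ) 1, ENNReal.ofReal (quantile ν t - quantile μ t)
      = ∫⁻ x, ENNReal.ofReal (cdf μ x - cdf ν x) := by
  set U := volume.restrict (Set.Ioo (0:ℝ) 1) with hU
  set A : Set (ℝ × ℝ) := {p | p.1 ≤ cdf μ p.2 ∧ cdf ν p.2 < p.1} with hA
  have hAm : MeasurableSet A := by
    apply MeasurableSet.inter
    · exact measurableSet_le measurable_fst ((measurable_cdf μ).comp measurable_snd)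
    · exact measurableSet_lt ((measurable_cdf ν).comp measurable_snd) measurable_fst
  have h1 : (U.prod volume) A = ∫⁻ t, volume (Prod.mk t ⁻¹' A) ∂U :=
    Measure.prod_apply hAm
  have h2 : (U.prod volume) A = ∫⁻ x, U ((fun t => (t, x)) ⁻¹' A) ∂volume :=
    Measure.prod_apply_symm hAm
  have hleft : ∫⁻ t in Set.Ioo (0:ℝ) 1, ENNReal.ofReal (quantile ν t - quantile μ t)
      = ∫⁻ t, volume (Prod.mk t ⁻¹' A) ∂U := by
    apply lintegral_congr_ae
    filter_upwards [ae_restrict_mem measurableSet_Ioo] with t ht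
    have hslice : Prod.mk t ⁻¹' A = Set.Ico (quantile μ t) (quantile ν t) := by
      ext x
      simp only [Set.mem_preimage, hA, Set.mem_setOf_eq, Set.mem_Ico]
      rw [← quantile_le_iff ht, ← lt_quantile_iff ht]
    rw [hslice, Real.volume_Ico]
  have hright : ∫⁻ x, ENNReal.ofReal (cdf μ x - cdf ν x)
      = ∫⁻ x, U ((fun t => (t, x)) ⁻¹' A) ∂volume := by
    apply lintegral_congr
    intro x
    have hslice : ((fun t => (t, x)) ⁻¹' A) = Set.Ioc (cdf ν x) (cdf μ x) := by
      ext t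
      simp only [Set.mem_preimage, hA, Set.mem_setOf_eq, Set.mem_Ioc]
      tauto
    rw [hslice, hU, Measure.restrict_apply' measurableSet_Ioo,
      vol_Ioc_inter (cdf_nonneg ν x) (cdf_le_one μ x)]
  rw [hleft, hright, ← h1, ← h2]

lemma LQ_eq_LF : LQ μ ν = LF μ ν := by
  unfold LQ LF
  have e1 : ∀ t : ℝ, ENNReal.ofReal |quantile μ t - quantile ν t|
      = ENNReal.ofReal (quantile ν t - quantile μ t)
        + ENNReal.ofReal (quantile μ t - quantile ν t) := by
    intro t
    rw [← ofReal_abs_split, abs_sub_comm]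
  have e2 : ∀ x : ℝ, ENNReal.ofReal |cdf μ x - cdf ν x|
      = ENNReal.ofReal (cdf μ x - cdf ν x) + ENNReal.ofReal (cdf ν x - cdf μ x) := by
    intro x
    rw [← ofReal_abs_split]
  simp_rw [e1, e2]
  rw [lintegral_add_left' (f := fun t => ENNReal.ofReal (quantile ν t - quantile μ t))
      (((aemeasurable_quantile ν).sub (aemeasurable_quantile μ)).ennreal_ofReal),
    lintegral_add_left (f := fun x => ENNReal.ofReal (cdf μ x - cdf ν x))
      ((measurable_cdf μ).sub (measurable_cdf ν)).ennreal_ofReal,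
    region_eq μ ν, region_eq ν μ]

lemma edist_real (x y : ℝ) : edist x y = ENNReal.ofReal |x - y| := by
  rw [edist_dist, Real.dist_eq]

lemma quantile_coupling_mem :
    (volume.restrict (Set.Ioo (0:ℝ) 1)).map (fun t => (quantile μ t, quantile ν t))
      ∈ Couplings μ ν := by
  set U := volume.restrict (Set.Ioo (0:ℝ) 1) with hU
  have hpair : AEMeasurable (fun t => (quantile μ t, quantile ν t)) U :=
    (aemeasurable_quantile μ).prodMk (aemeasurable_quantile ν)
  refine ⟨⟨?_⟩, ?_, ?_⟩
  · rw [Measure.map_apply_of_aemeasurable hpair MeasurableSet.univ, Set.preimage_univ, hU,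
      Measure.restrict_apply' measurableSet_Ioo, Set.univ_inter, Real.volume_Ioo]
    norm_num
  · rw [AEMeasurable.map_map_of_aemeasurable measurable_fst.aemeasurable hpair]
    exact map_quantile μ
  · rw [AEMeasurable.map_map_of_aemeasurable measurable_snd.aemeasurable hpair]
    exact map_quantile ν

lemma quantile_coupling_cost :
    ∫⁻ p, edist p.1 p.2
        ∂((volume.restrict (Set.Ioo (0:ℝ) 1)).map (fun t => (quantile μ t, quantile ν t)))
      = LQ μ ν := by
  set U := volume.restrict (Set.Ioo (0:ℝ) 1) with hU
  have hpair : AEMeasurable (fun t => (quantile μ t, quantile ν t)) U :=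
    (aemeasurable_quantile μ).prodMk (aemeasurable_quantile ν)
  rw [lintegral_map' (measurable_edist.aemeasurable) hpair]
  unfold LQ
  apply lintegral_congr
  intro t
  exact edist_real _ _

lemma coupling_cost_lower {γ : Measure (ℝ × ℝ)} (hγ : γ ∈ Couplings μ ν) :
    LF μ ν ≤ ∫⁻ p, edist p.1 p.2 ∂γ := by
  obtain ⟨hγp, hγ1, hγ2⟩ := hγ
  haveI := hγp
  set B : Set ((ℝ × ℝ) × ℝ) :=
    {q | (q.1.1 ≤ q.2 ∧ q.2 < q.1.2) ∨ (q.1.2 ≤ q.2 ∧ q.2 < q.1.1)} with hB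
  have hBm : MeasurableSet B := by
    apply MeasurableSet.union
    · exact (measurableSet_le measurable_fst.fst measurable_snd).inter
        (measurableSet_lt measurable_snd measurable_fst.snd)
    · exact (measurableSet_le measurable_fst.snd measurable_snd).inter
        (measurableSet_lt measurable_snd measurable_fst.fst)
  have h1 : ∫⁻ p, edist p.1 p.2 ∂γ = (γ.prod volume) B := by
    rw [Measure.prod_apply hBm]
    apply lintegral_congr
    intro p
    have hslice : Prod.mk p ⁻¹' B = Set.Ico p.1 p.2 ∪ Set.Ico p.2 p.1 := by
      ext s
      simp only [Set.mem_preimage, hB, Set.mem_setOf_eq, Set.mem_union, Set.mem_Ico]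
    rw [hslice, edist_real]
    rcases le_total p.1 p.2 with h | h
    · rw [Set.Ico_eq_empty (not_lt.2 h) (a := p.2), Set.union_empty, Real.volume_Ico,
        abs_of_nonpos (by linarith), neg_sub]
    · rw [Set.Ico_eq_empty (not_lt.2 h) (a := p.1), Set.empty_union, Real.volume_Ico,
        abs_of_nonneg (by linarith)]
  have h2 : (γ.prod volume) B = ∫⁻ s, γ ((fun p => (p, s)) ⁻¹' B) ∂volume :=
    Measure.prod_apply_symm hBm
  have hmarg1 : ∀ s : ℝ, γ {p : ℝ × ℝ | p.1 ≤ s} = ENNReal.ofReal (cdf μ s) := by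
    intro s
    have : {p : ℝ × ℝ | p.1 ≤ s} = Prod.fst ⁻¹' Set.Iic s := rfl
    rw [this, ← Measure.map_apply measurable_fst measurableSet_Iic, hγ1, meas_Iic]
  have hmarg2 : ∀ s : ℝ, γ {p : ℝ × ℝ | p.2 ≤ s} = ENNReal.ofReal (cdf ν s) := by
    intro s
    have : {p : ℝ × ℝ | p.2 ≤ s} = Prod.snd ⁻¹' Set.Iic s := rfl
    rw [this, ← Measure.map_apply measurable_snd measurableSet_Iic, hγ2, meas_Iic]
  have h3 : ∀ s : ℝ, ENNReal.ofReal |cdf μ s - cdf ν s| ≤ γ ((fun p => (p, s)) ⁻¹' B) := by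
    intro s
    have hsl : ((fun p => (p, s)) ⁻¹' B)
        = {p : ℝ × ℝ | p.1 ≤ s ∧ s < p.2} ∪ {p : ℝ × ℝ | p.2 ≤ s ∧ s < p.1} := by
      ext p
      simp only [Set.mem_preimage, hB, Set.mem_setOf_eq, Set.mem_union]
    have key : ∀ (X Y : Set (ℝ × ℝ)), γ X - γ Y ≤ γ (X \ Y) := by
      intro X Y
      rw [tsub_le_iff_right]
      calc γ X ≤ γ ((X \ Y) ∪ Y) := measure_mono fun p hp => by
            by_cases h : p ∈ Y
            · exact Or.inr h
            · exact Or.inl ⟨hp, h⟩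
        _ ≤ γ (X \ Y) + γ Y := measure_union_le _ _
    have hd1 : {p : ℝ × ℝ | p.1 ≤ s ∧ s < p.2}
        = {p : ℝ × ℝ | p.1 ≤ s} \ {p : ℝ × ℝ | p.2 ≤ s} := by
      ext p
      simp only [Set.mem_setOf_eq, Set.mem_diff, not_le]
    have hd2 : {p : ℝ × ℝ | p.2 ≤ s ∧ s < p.1}
        = {p : ℝ × ℝ | p.2 ≤ s} \ {p : ℝ × ℝ | p.1 ≤ s} := by
      ext p
      simp only [Set.mem_setOf_eq, Set.mem_diff, not_le]
    rw [hsl]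
    rcases le_total (cdf μ s) (cdf ν s) with h | h
    · rw [abs_of_nonpos (by linarith)]
      have : ENNReal.ofReal (-(cdf μ s - cdf ν s)) = γ {p : ℝ × ℝ | p.2 ≤ s}
          - γ {p : ℝ × ℝ | p.1 ≤ s} := by
        rw [hmarg1, hmarg2, ← ENNReal.ofReal_sub _ (cdf_nonneg μ s)]
        congr 1
        ring
      rw [this]
      calc γ {p : ℝ × ℝ | p.2 ≤ s} - γ {p : ℝ × ℝ | p.1 ≤ s}
          ≤ γ ({p : ℝ × ℝ | p.2 ≤ s} \ {p : ℝ × ℝ | p.1 ≤ s}) := key _ _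
        _ ≤ _ := by
            rw [← hd2]
            exact measure_mono (Set.subset_union_right)
    · rw [abs_of_nonneg (by linarith)]
      have : ENNReal.ofReal (cdf μ s - cdf ν s) = γ {p : ℝ × ℝ | p.1 ≤ s}
          - γ {p : ℝ × ℝ | p.2 ≤ s} := by
        rw [hmarg1, hmarg2, ← ENNReal.ofReal_sub _ (cdf_nonneg ν s)]
      rw [this]
      calc γ {p : ℝ × ℝ | p.1 ≤ s} - γ {p : ℝ × ℝ | p.2 ≤ s}
          ≤ γ ({p : ℝ × ℝ | p.1 ≤ s} \ {p : ℝ × ℝ | p.2 ≤ s}) := key _ _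
        _ ≤ _ := by
            rw [← hd1]
            exact measure_mono (Set.subset_union_left)
  rw [h1, h2]
  unfold LF
  exact lintegral_mono fun s => h3 s

lemma W1inf_eq : (⨅ γ ∈ Couplings μ ν, ∫⁻ p, edist p.1 p.2 ∂γ) = LF μ ν := by
  apply le_antisymm
  · refine le_trans (iInf₂_le _ (quantile_coupling_mem μ ν)) ?_
    rw [quantile_coupling_cost μ ν, LQ_eq_LF μ ν]
  · exact le_iInf₂ fun γ hγ => coupling_cost_lower μ ν hγ

lemma W1_eq : W1 μ ν = (LF μ ν).toReal := by
  unfold W1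
  rw [W1inf_eq μ ν]

end LQLF

end WMaux

/-! ### Tails and P1 -/

namespace WMaux

variable {μ ν : Measure ℝ}

noncomputable def Tn (μ : Measure ℝ) : ℝ≥0∞ := ∫⁻ x in Set.Iio (0:ℝ), μ (Set.Iic x)

noncomputable def Tp (μ : Measure ℝ) : ℝ≥0∞ := ∫⁻ x in Set.Ioi (0:ℝ), μ (Set.Ioi x)

lemma meas_Iic_antitone (μ : Measure ℝ) : Measurable (fun t : ℝ => μ (Set.Iic (-t) : Set ℝ)) := by
  apply Antitone.measurable
  intro s t hst
  exact measure_mono (Set.Iic_subset_Iic.2 (by linarith))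

lemma meas_Iic_mono (μ : Measure ℝ) : Measurable (fun x : ℝ => μ (Set.Iic x)) := by
  apply Monotone.measurable
  intro s t hst
  exact measure_mono (Set.Iic_subset_Iic.2 hst)

lemma meas_Ioi_anti (μ : Measure ℝ) : Measurable (fun x : ℝ => μ (Set.Ioi x)) := by
  apply Antitone.measurable
  intro s t hst
  exact measure_mono (Set.Ioi_subset_Ioi hst)

lemma lint_shift (g : ℝ → ℝ≥0∞) (hg : Measurable g) (c : ℝ) :
    ∫⁻ x, g (x + c) = ∫⁻ x, g x := by
  conv_rhs => rw [← map_add_right_eq_self volume c]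
  rw [lintegral_map hg (measurable_add_const c)]

lemma lint_neg_Iio (g : ℝ → ℝ≥0∞) (hg : Measurable g) :
    ∫⁻ x in Set.Iio (0:ℝ), g x = ∫⁻ t in Set.Ioi (0:ℝ), g (-t) := by
  have h1 : ∫⁻ t in Set.Ioi (0:ℝ), g (-t)
      = ∫⁻ t, (Set.Iio (0:ℝ)).indicator g (-t) := by
    rw [← lintegral_indicator measurableSet_Ioi]
    apply lintegral_congr
    intro t
    by_cases ht : t ∈ Set.Ioi (0:ℝ)
    · rw [Set.indicator_of_mem ht, Set.indicator_of_mem (by simpa using ht)]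
    · rw [Set.indicator_of_notMem ht, Set.indicator_of_notMem]
      simp only [Set.mem_Ioi, not_lt] at ht
      simp [not_lt.2 (by linarith : (0:ℝ) ≤ -t)]
  rw [h1]
  have h2 : ∫⁻ t, (Set.Iio (0:ℝ)).indicator g (-t)
      = ∫⁻ t, (Set.Iio (0:ℝ)).indicator g t := by
    conv_rhs => rw [← Measure.map_neg_eq_self (volume : Measure ℝ)]
    rw [lintegral_map (hg.indicator measurableSet_Iio) measurable_neg]
  rw [h2, lintegral_indicator measurableSet_Iio]

lemma helper_shift (g : ℝ → ℝ≥0∞) (hg : Measurable g) (hg1 : ∀ x, g x ≤ 1) {c : ℝ}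
    (hc : 0 ≤ c) :
    ∫⁻ t in Set.Ioi (0:ℝ), g (t - c) ≤ ENNReal.ofReal c + ∫⁻ t in Set.Ioi (0:ℝ), g t := by
  have key : ∫⁻ t in Set.Ioi (0:ℝ), g (t - c) = ∫⁻ t in Set.Ioi (-c), g t := by
    have h1 : ∫⁻ t in Set.Ioi (0:ℝ), g (t - c)
        = ∫⁻ t, ((Set.Ioi (-c)).indicator g) (t + -c) := by
      rw [← lintegral_indicator measurableSet_Ioi]
      apply lintegral_congr
      intro t
      by_cases ht : t ∈ Set.Ioi (0:ℝ)
      · rw [Set.indicator_of_mem ht, Set.indicator_of_mem]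
        · rw [sub_eq_add_neg]
        · simp only [Set.mem_Ioi] at ht ⊢
          linarith
      · rw [Set.indicator_of_notMem ht, Set.indicator_of_notMem]
        simp only [Set.mem_Ioi, not_lt] at ht ⊢
        linarith
    rw [h1, lint_shift _ (hg.indicator measurableSet_Ioi), lintegral_indicator measurableSet_Ioi]
  rw [key]
  have hsplit : Set.Ioi (-c) = Set.Ioc (-c) 0 ∪ Set.Ioi (0:ℝ) := by
    rw [Set.Ioc_union_Ioi_eq_Ioi (by linarith : -c ≤ 0)]
  rw [hsplit, lintegral_union measurableSet_Ioi]
  · apply add_le_add_left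
    calc ∫⁻ t in Set.Ioc (-c) 0, g t ≤ ∫⁻ _ in Set.Ioc (-c) 0, 1 :=
          lintegral_mono fun t => hg1 t
      _ = volume (Set.Ioc (-c) 0) := by rw [setLIntegral_one]
      _ = ENNReal.ofReal c := by rw [Real.volume_Ioc]; norm_num
  · exact Set.Ioc_disjoint_Ioi le_rfl

lemma tn_eq (μ : Measure ℝ) : Tn μ = ∫⁻ t in Set.Ioi (0:ℝ), μ (Set.Iic (-t)) :=
  lint_neg_Iio _ (meas_Iic_mono μ)

lemma tails_of_P1 (h : μ ∈ P1 ℝ) : Tn μ < ∞ ∧ Tp μ < ∞ := by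
  obtain ⟨hprob, hint⟩ := h
  have hfin : (∫⁻ a, ENNReal.ofReal |a| ∂μ) < ∞ := by
    have h0 := (hint 0).hasFiniteIntegral
    rw [HasFiniteIntegral] at h0
    refine lt_of_le_of_lt (le_of_eq ?_) h0
    apply lintegral_congr
    intro a
    rw [Real.enorm_eq_ofReal_abs, Real.dist_eq, zero_sub, abs_neg, abs_abs]
  constructor
  · rw [tn_eq]
    have hl := lintegral_eq_lintegral_meas_le μ
      (f := fun y => max (-y) 0) (ae_of_all _ fun y => le_max_right _ _)
      ((measurable_neg.max measurable_const).aemeasurable)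
    have heq : ∫⁻ t in Set.Ioi (0:ℝ), μ (Set.Iic (-t))
        = ∫⁻ t in Set.Ioi (0:ℝ), μ {a : ℝ | t ≤ max (-a) 0} := by
      apply lintegral_congr_ae
      filter_upwards [ae_restrict_mem measurableSet_Ioi] with t ht
      congr 1
      ext a
      simp only [Set.mem_Iic, Set.mem_setOf_eq, le_max_iff]
      rw [Set.mem_Ioi] at ht
      constructor
      · intro h; left; linarith
      · rintro (h | h) <;> linarith
    rw [heq, ← hl]
    refine lt_of_le_of_lt (lintegral_mono fun y => ?_) hfin
    apply ENNReal.ofReal_le_ofReal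
    have hny : -y ≤ |y| := by rw [← abs_neg]; exact le_abs_self (-y)
    exact max_le hny (abs_nonneg y)
  · have hl := lintegral_eq_lintegral_meas_lt μ
      (f := fun y => max y 0) (ae_of_all _ fun y => le_max_right _ _)
      ((measurable_id.max measurable_const).aemeasurable)
    have heq : Tp μ = ∫⁻ t in Set.Ioi (0:ℝ), μ {a : ℝ | t < max a 0} := by
      unfold Tp
      apply lintegral_congr_ae
      filter_upwards [ae_restrict_mem measurableSet_Ioi] with t ht
      congr 1
      ext a
      simp only [Set.mem_Ioi, Set.mem_setOf_eq, lt_max_iff]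
      rw [Set.mem_Ioi] at ht
      constructor
      · intro h; left; linarith
      · rintro (h | h) <;> linarith
    rw [heq, ← hl]
    refine lt_of_le_of_lt (lintegral_mono fun y => ?_) hfin
    apply ENNReal.ofReal_le_ofReal
    exact max_le (le_abs_self y) (abs_nonneg y)

lemma P1_of_tails [IsProbabilityMeasure μ] (hTn : Tn μ < ∞) (hTp : Tp μ < ∞) : μ ∈ P1 ℝ := by
  refine ⟨inferInstance, fun x₀ => ?_⟩
  constructor
  · exact (continuous_const.dist continuous_id).aestronglyMeasurable
  · rw [HasFiniteIntegral]
    have heq : ∀ a : ℝ, ‖dist x₀ a‖ₑ = ENNReal.ofReal (dist x₀ a) := fun a =>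
      Real.enorm_eq_ofReal dist_nonneg
    simp_rw [heq]
    have hm : Measurable (fun a : ℝ => dist x₀ a) := by fun_prop
    rw [lintegral_eq_lintegral_meas_lt μ (f := fun a => dist x₀ a)
      (ae_of_all _ fun y => dist_nonneg) hm.aemeasurable]
    have hsub : ∀ t : ℝ, 0 < t → μ {a : ℝ | t < dist x₀ a}
        ≤ μ (Set.Iic (x₀ - t)) + μ (Set.Ioi (x₀ + t)) := by
      intro t ht
      refine le_trans (measure_mono ?_) (measure_union_le _ _)
      intro a ha
      rw [Set.mem_setOf_eq, Real.dist_eq] at ha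
      rcases abs_cases (x₀ - a) with ⟨h1, _⟩ | ⟨h1, _⟩
      · left; rw [Set.mem_Iic]; linarith
      · right; rw [Set.mem_Ioi]; linarith
    calc ∫⁻ t in Set.Ioi (0:ℝ), μ {a : ℝ | t < dist x₀ a}
        ≤ ∫⁻ t in Set.Ioi (0:ℝ), (μ (Set.Iic (x₀ - t)) + μ (Set.Ioi (x₀ + t))) := by
          apply lintegral_mono_ae
          filter_upwards [ae_restrict_mem measurableSet_Ioi] with t ht
          exact hsub t ht
      _ = (∫⁻ t in Set.Ioi (0:ℝ), μ (Set.Iic (x₀ - t)))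
            + ∫⁻ t in Set.Ioi (0:ℝ), μ (Set.Ioi (x₀ + t)) := by
          apply lintegral_add_left
          apply Antitone.measurable
          intro s t hst
          exact measure_mono (Set.Iic_subset_Iic.2 (by linarith))
      _ < ∞ := by
          apply ENNReal.add_lt_top.2
          constructor
          · have hb : ∀ t : ℝ, μ (Set.Iic (x₀ - t)) ≤ (fun s => μ (Set.Iic (-s))) (t - |x₀|) := by
              intro t
              apply measure_mono
              apply Set.Iic_subset_Iic.2
              have := le_abs_self x₀
              linarith
            calc ∫⁻ t in Set.Ioi (0:ℝ), μ (Set.Iic (x₀ - t))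
                ≤ ∫⁻ t in Set.Ioi (0:ℝ), (fun s => μ (Set.Iic (-s))) (t - |x₀|) :=
                  lintegral_mono fun t => hb t
              _ ≤ ENNReal.ofReal |x₀| + ∫⁻ t in Set.Ioi (0:ℝ), μ (Set.Iic (-t)) :=
                  helper_shift _ (meas_Iic_antitone μ) (fun x => prob_le_one) (abs_nonneg x₀)
              _ < ∞ := by
                  rw [← tn_eq]
                  exact ENNReal.add_lt_top.2 ⟨ENNReal.ofReal_lt_top, hTn⟩
          · have hb : ∀ t : ℝ, μ (Set.Ioi (x₀ + t)) ≤ (fun s => μ (Set.Ioi s)) (t - |x₀|) := by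
              intro t
              apply measure_mono
              apply Set.Ioi_subset_Ioi
              have := neg_abs_le x₀
              linarith
            calc ∫⁻ t in Set.Ioi (0:ℝ), μ (Set.Ioi (x₀ + t))
                ≤ ∫⁻ t in Set.Ioi (0:ℝ), (fun s => μ (Set.Ioi s)) (t - |x₀|) :=
                  lintegral_mono fun t => hb t
              _ ≤ ENNReal.ofReal |x₀| + ∫⁻ t in Set.Ioi (0:ℝ), μ (Set.Ioi t) :=
                  helper_shift _ (meas_Ioi_anti μ) (fun x => prob_le_one) (abs_nonneg x₀)
              _ < ∞ := ENNReal.add_lt_top.2 ⟨ENNReal.ofReal_lt_top, hTp⟩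

lemma LF_lt_top (hμ : μ ∈ P1 ℝ) (hν : ν ∈ P1 ℝ) : LF μ ν < ∞ := by
  haveI := hμ.1
  haveI := hν.1
  obtain ⟨hTnμ, hTpμ⟩ := tails_of_P1 hμ
  obtain ⟨hTnν, hTpν⟩ := tails_of_P1 hν
  unfold LF
  rw [← lintegral_add_compl (fun x => ENNReal.ofReal |cdf μ x - cdf ν x|) measurableSet_Iio]
  apply ENNReal.add_lt_top.2
  constructor
  · have hpt : ∀ x : ℝ, ENNReal.ofReal |cdf μ x - cdf ν x| ≤ μ (Set.Iic x) + ν (Set.Iic x) := by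
      intro x
      rw [meas_Iic, meas_Iic, ← ENNReal.ofReal_add (cdf_nonneg μ x) (cdf_nonneg ν x)]
      apply ENNReal.ofReal_le_ofReal
      have h1 := cdf_nonneg μ x
      have h2 := cdf_nonneg ν x
      rcases abs_cases (cdf μ x - cdf ν x) with ⟨h, _⟩ | ⟨h, _⟩ <;> linarith
    calc ∫⁻ x in Set.Iio 0, ENNReal.ofReal |cdf μ x - cdf ν x|
        ≤ ∫⁻ x in Set.Iio (0:ℝ), (μ (Set.Iic x) + ν (Set.Iic x)) := lintegral_mono hpt
      _ = Tn μ + Tn ν := lintegral_add_left (meas_Iic_mono μ) _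
      _ < ∞ := ENNReal.add_lt_top.2 ⟨hTnμ, hTnν⟩
  · have hcompl : (Set.Iio (0:ℝ))ᶜ = Set.Ici 0 := by
      rw [Set.compl_Iio]
    rw [hcompl]
    have hpt : ∀ x : ℝ, ENNReal.ofReal |cdf μ x - cdf ν x| ≤ μ (Set.Ioi x) + ν (Set.Ioi x) := by
      intro x
      rw [meas_Ioi, meas_Ioi, ← ENNReal.ofReal_add (by linarith [cdf_le_one μ x])
        (by linarith [cdf_le_one ν x])]
      apply ENNReal.ofReal_le_ofReal
      have h1 := cdf_le_one μ x
      have h2 := cdf_le_one ν x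
      rcases abs_cases (cdf μ x - cdf ν x) with ⟨h, _⟩ | ⟨h, _⟩ <;> linarith
    have hIci : volume.restrict (Set.Ici (0:ℝ)) = volume.restrict (Set.Ioi 0) :=
      (Measure.restrict_congr_set (Ioi_ae_eq_Ici (a := (0:ℝ)))).symm
    calc ∫⁻ x in Set.Ici 0, ENNReal.ofReal |cdf μ x - cdf ν x|
        ≤ ∫⁻ x in Set.Ici (0:ℝ), (μ (Set.Ioi x) + ν (Set.Ioi x)) := lintegral_mono hpt
      _ = ∫⁻ x in Set.Ioi (0:ℝ), (μ (Set.Ioi x) + ν (Set.Ioi x)) := by rw [hIci]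
      _ = Tp μ + Tp ν := lintegral_add_left (meas_Ioi_anti μ) _
      _ < ∞ := ENNReal.add_lt_top.2 ⟨hTpμ, hTpν⟩

end WMaux

/-! ### Competitor measures -/

namespace WMaux

lemma real_le_of_forall_pos {a b : ℝ} (h : ∀ ε : ℝ, 0 < ε → a ≤ b + ε) : a ≤ b := by
  by_contra hab
  push_neg at hab
  have := h ((a - b)/2) (by linarith)
  linarith

lemma tendsto_rightLim_atBot {f : ℝ → ℝ} (hf : Monotone f) {c : ℝ}
    (h : Tendsto f atBot (𝓝 c)) :
    Tendsto (fun x => Function.rightLim f x) atBot (𝓝 c) := by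
  have hshift : Tendsto (fun x : ℝ => f (x + 1)) atBot (𝓝 c) :=
    h.comp (tendsto_atBot_add_const_right atBot 1 tendsto_id)
  refine tendsto_of_tendsto_of_tendsto_of_le_of_le h hshift ?_ ?_
  · exact fun x => hf.le_rightLim le_rfl
  · exact fun x => hf.rightLim_le (lt_add_one x)

lemma tendsto_rightLim_atTop {f : ℝ → ℝ} (hf : Monotone f) {c : ℝ}
    (h : Tendsto f atTop (𝓝 c)) :
    Tendsto (fun x => Function.rightLim f x) atTop (𝓝 c) := by
  have hshift : Tendsto (fun x : ℝ => f (x + 1)) atTop (𝓝 c) :=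
    h.comp (tendsto_atTop_add_const_right atTop 1 tendsto_id)
  refine tendsto_of_tendsto_of_tendsto_of_le_of_le h hshift ?_ ?_
  · exact fun x => hf.le_rightLim le_rfl
  · exact fun x => hf.rightLim_le (lt_add_one x)

lemma rightLim_le_of_le_rc {f g : ℝ → ℝ} (hf : Monotone f) (hfg : ∀ y, f y ≤ g y) {x : ℝ}
    (hg : Tendsto g (𝓝[>] x) (𝓝 (g x))) : Function.rightLim f x ≤ g x := by
  apply ge_of_tendsto hg
  filter_upwards [self_mem_nhdsWithin] with y hy
  exact le_trans (hf.rightLim_le hy) (hfg y)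

variable {N : ℕ} {l : Fin N → ℝ} {ν : Fin N → Measure ℝ}

lemma mMinus_comp_lower (hl : memSimplex l) (hne : (Finset.univ : Finset (Fin N)).Nonempty)
    {a b : Fin N → ℝ} {ε : ℝ} (h : ∀ i, a i - ε ≤ b i) :
    mMinus l a - ε ≤ mMinus l b := by
  have h1 : mMinus l (fun i => a i + (-ε)) = mMinus l a + (-ε) := mMinus_shift hl hne a (-ε)
  have h2 : mMinus l (fun i => a i + (-ε)) ≤ mMinus l b :=
    mMinus_mono hl hne fun i => by simpa [sub_eq_add_neg] using h i
  linarith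

lemma mPlus_comp_upper (hl : memSimplex l) (hne : (Finset.univ : Finset (Fin N)).Nonempty)
    {a b : Fin N → ℝ} {ε : ℝ} (h : ∀ i, b i ≤ a i + ε) :
    mPlus l b ≤ mPlus l a + ε := by
  have h1 : mPlus l (fun i => a i + ε) = mPlus l a + ε := mPlus_shift hl hne a ε
  have h2 : mPlus l b ≤ mPlus l (fun i => a i + ε) := mPlus_mono hl hne h
  linarith

lemma quantile_left_approx (μ : Measure ℝ) [IsProbabilityMeasure μ] {t ε : ℝ}
    (ht : t ∈ Set.Ioo (0:ℝ) 1) (hε : 0 < ε) :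
    ∃ s ∈ Set.Ioo (0:ℝ) t, quantile μ t - ε < quantile μ s := by
  set c := cdf μ (quantile μ t - ε) with hc0
  have hc : c < t := by
    by_contra h
    push_neg at h
    have := (quantile_le_iff ht).2 h
    linarith
  set s := max ((c + t)/2) (t/2) with hs0
  have hs1 : 0 < s := lt_of_lt_of_le (by linarith [ht.1] : (0:ℝ) < t/2) (le_max_right _ _)
  have hst : s < t := max_lt (by linarith) (by linarith [ht.1])
  refine ⟨s, ⟨hs1, hst⟩, ?_⟩
  rw [lt_quantile_iff ⟨hs1, lt_trans hst ht.2⟩]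
  calc c < (c + t)/2 := by linarith
    _ ≤ s := le_max_left _ _

section CompetitorCDF

variable (hl : memSimplex l) (hne : (Finset.univ : Finset (Fin N)).Nonempty)
  (hν : ∀ i, ν i ∈ P1 ℝ)
include hl hne hν

lemma exists_median_measure_cdf :
    ∃ ρ : Measure ℝ, ρ ∈ P1 ℝ ∧ ∀ x : ℝ,
      mMinus l (fun i => cdf (ν i) x) ≤ cdf ρ x ∧
        cdf ρ x ≤ mPlus l (fun i => cdf (ν i) x) := by
  haveI : ∀ i, IsProbabilityMeasure (ν i) := fun i => (hν i).1
  set F : ℝ → Fin N → ℝ := fun x i => cdf (ν i) x with hF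
  set P : ℝ → ℝ := fun x => mMinus l (F x) with hP
  have hPmono : Monotone P := fun x y h =>
    mMinus_mono hl hne fun i => cdf_mono (ν i) h
  have hub : ∀ x, P x ≤ Finset.univ.sup' hne (F x) := fun x =>
    le_trans (mMinus_le_mPlus hl hne (F x)) (mPlus_le_sup' hl hne (F x))
  have hlb : ∀ x, Finset.univ.inf' hne (F x) ≤ P x := fun x => inf'_le_mMinus hl hne (F x)
  have hsum_ub : ∀ x, P x ≤ ∑ i, cdf (ν i) x := by
    intro x
    refine le_trans (hub x) (Finset.sup'_le hne _ fun i _ => ?_)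
    exact Finset.single_le_sum (fun j _ => cdf_nonneg (ν j) x) (Finset.mem_univ i)
  have hsum_lb : ∀ x, 1 - (∑ i, (1 - cdf (ν i) x)) ≤ P x := by
    intro x
    refine le_trans (Finset.le_inf' hne _ fun i _ => ?_) (hlb x)
    have hsingle : (1 - cdf (ν i) x) ≤ ∑ j, (1 - cdf (ν j) x) :=
      Finset.single_le_sum (f := fun j => 1 - cdf (ν j) x)
        (fun j _ => sub_nonneg.2 (cdf_le_one (ν j) x)) (Finset.mem_univ i)
    show 1 - (∑ j, (1 - cdf (ν j) x)) ≤ F x i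
    simp only [hF]
    linarith
  have hP0 : ∀ x, 0 ≤ P x := fun x =>
    le_trans (Finset.le_inf' hne _ fun i _ => cdf_nonneg (ν i) x) (hlb x)
  have hP1' : ∀ x, P x ≤ 1 := fun x =>
    le_trans (hub x) (Finset.sup'_le hne _ fun i _ => cdf_le_one (ν i) x)
  have hbot : Tendsto P atBot (𝓝 0) := by
    have hupper : Tendsto (fun x => ∑ i, cdf (ν i) x) atBot (𝓝 0) := by
      have := tendsto_finset_sum (Finset.univ : Finset (Fin N))
        (fun i _ => tendsto_cdf_atBot (ν i))
      simpa using this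
    exact tendsto_of_tendsto_of_tendsto_of_le_of_le tendsto_const_nhds hupper hP0 hsum_ub
  have htop : Tendsto P atTop (𝓝 1) := by
    have hlower : Tendsto (fun x => 1 - (∑ i, (1 - cdf (ν i) x))) atTop (𝓝 1) := by
      have hsum : Tendsto (fun x => ∑ i, (1 - cdf (ν i) x)) atTop (𝓝 0) := by
        have := tendsto_finset_sum (Finset.univ : Finset (Fin N))
          (fun i (_ : i ∈ Finset.univ) =>
            ((tendsto_const_nhds : Tendsto (fun _ : ℝ => (1:ℝ)) atTop (𝓝 1)).sub
              (tendsto_cdf_atTop (ν i))))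
        simpa using this
      have := ((tendsto_const_nhds : Tendsto (fun _ : ℝ => (1:ℝ)) atTop (𝓝 1)).sub hsum)
      simpa using this
    exact tendsto_of_tendsto_of_tendsto_of_le_of_le hlower tendsto_const_nhds hsum_lb hP1'
  have hSbot : Tendsto (hPmono.stieltjesFunction) atBot (𝓝 0) := by
    have := tendsto_rightLim_atBot hPmono hbot
    convert this using 1
    exact funext hPmono.stieltjesFunction_eq
  have hStop : Tendsto (hPmono.stieltjesFunction) atTop (𝓝 1) := by
    have := tendsto_rightLim_atTop hPmono htop
    convert this using 1
    exact funext hPmono.stieltjesFunction_eq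
  set ρ := hPmono.stieltjesFunction.measure with hρ
  haveI hρprob : IsProbabilityMeasure ρ := by
    constructor
    rw [StieltjesFunction.measure_univ _ hSbot hStop]
    norm_num
  have hρIic : ∀ x, ρ (Set.Iic x) = ENNReal.ofReal (Function.rightLim P x) := by
    intro x
    rw [hρ, StieltjesFunction.measure_Iic _ hSbot, Monotone.stieltjesFunction_eq, sub_zero]
  have hPrl : ∀ x, P x ≤ Function.rightLim P x := fun x => hPmono.le_rightLim le_rfl
  have hcdfρ : ∀ x, cdf ρ x = Function.rightLim P x := by
    intro x
    rw [cdf, hρIic, ENNReal.toReal_ofReal (le_trans (hP0 x) (hPrl x))]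
  have hup : ∀ x, cdf ρ x ≤ mPlus l (F x) := by
    intro x
    apply real_le_of_forall_pos
    intro ε hε
    have hall : ∀ᶠ y in 𝓝[≥] x, ∀ i, cdf (ν i) y < cdf (ν i) x + ε := by
      rw [eventually_all]
      intro i
      exact (cdf_right_cts (ν i) x).eventually_lt_const (lt_add_of_pos_right _ hε)
    obtain ⟨u, hu, hsub⟩ := mem_nhdsGE_iff_exists_Ico_subset.1 hall
    rw [Set.mem_Ioi] at hu
    set y := (x + u)/2 with hy
    have hxy : x < y := by rw [hy]; linarith
    have hyu : y < u := by rw [hy]; linarith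
    have hmem : y ∈ Set.Ico x u := ⟨le_of_lt hxy, hyu⟩
    have hcdfy := hsub hmem
    calc cdf ρ x = Function.rightLim P x := hcdfρ x
      _ ≤ P y := hPmono.rightLim_le hxy
      _ ≤ mPlus l (F y) := le_trans (mMinus_le_mPlus hl hne (F y)) (le_refl _)
      _ ≤ mPlus l (F x) + ε := mPlus_comp_upper hl hne fun i => le_of_lt (hcdfy i)
  have hlo : ∀ x, mMinus l (F x) ≤ cdf ρ x := by
    intro x
    rw [hcdfρ x]
    exact le_trans (le_refl _) (hPrl x)
  have hρP1 : ρ ∈ P1 ℝ := by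
    apply P1_of_tails
    · unfold Tn
      have hbd : ∀ x : ℝ, ρ (Set.Iic x) ≤ ∑ i, (ν i) (Set.Iic x) := by
        intro x
        rw [meas_Iic ρ x]
        calc ENNReal.ofReal (cdf ρ x) ≤ ENNReal.ofReal (∑ i, cdf (ν i) x) := by
              apply ENNReal.ofReal_le_ofReal
              calc cdf ρ x ≤ mPlus l (F x) := hup x
                _ ≤ Finset.univ.sup' hne (F x) := mPlus_le_sup' hl hne (F x)
                _ ≤ ∑ i, cdf (ν i) x := Finset.sup'_le hne _ fun i _ =>
                    Finset.single_le_sum (fun j _ => cdf_nonneg (ν j) x) (Finset.mem_univ i)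
          _ = ∑ i, ENNReal.ofReal (cdf (ν i) x) :=
              ENNReal.ofReal_sum_of_nonneg fun i _ => cdf_nonneg (ν i) x
          _ = ∑ i, (ν i) (Set.Iic x) := by
              apply Finset.sum_congr rfl
              intro i _
              rw [meas_Iic]
      calc ∫⁻ x in Set.Iio (0:ℝ), ρ (Set.Iic x)
          ≤ ∫⁻ x in Set.Iio (0:ℝ), ∑ i, (ν i) (Set.Iic x) := lintegral_mono hbd
        _ = ∑ i, ∫⁻ x in Set.Iio (0:ℝ), (ν i) (Set.Iic x) :=
            lintegral_finset_sum' _ fun i _ => (meas_Iic_mono (ν i)).aemeasurable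
        _ < ∞ := ENNReal.sum_lt_top.2 fun i _ => (tails_of_P1 (hν i)).1
    · unfold Tp
      have hbd : ∀ x : ℝ, ρ (Set.Ioi x) ≤ ∑ i, (ν i) (Set.Ioi x) := by
        intro x
        rw [meas_Ioi ρ x]
        calc ENNReal.ofReal (1 - cdf ρ x) ≤ ENNReal.ofReal (∑ i, (1 - cdf (ν i) x)) := by
              apply ENNReal.ofReal_le_ofReal
              have := hlo x
              have := hsum_lb x
              have := hPrl x
              rw [hcdfρ x]
              linarith [hPmono.le_rightLim (le_refl x)]
          _ = ∑ i, ENNReal.ofReal (1 - cdf (ν i) x) :=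
              ENNReal.ofReal_sum_of_nonneg fun i _ => by linarith [cdf_le_one (ν i) x]
          _ = ∑ i, (ν i) (Set.Ioi x) := by
              apply Finset.sum_congr rfl
              intro i _
              rw [meas_Ioi]
      calc ∫⁻ x in Set.Ioi (0:ℝ), ρ (Set.Ioi x)
          ≤ ∫⁻ x in Set.Ioi (0:ℝ), ∑ i, (ν i) (Set.Ioi x) := lintegral_mono hbd
        _ = ∑ i, ∫⁻ x in Set.Ioi (0:ℝ), (ν i) (Set.Ioi x) :=
            lintegral_finset_sum' _ fun i _ => (meas_Ioi_anti (ν i)).aemeasurable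
        _ < ∞ := ENNReal.sum_lt_top.2 fun i _ => (tails_of_P1 (hν i)).2
  exact ⟨ρ, hρP1, fun x => ⟨hlo x, hup x⟩⟩

end CompetitorCDF

end WMaux

namespace WMaux

lemma volIoo01 : volume (Set.Ioo (0:ℝ) 1) = 1 := by
  rw [Real.volume_Ioo]
  norm_num

lemma vol_quantile_gt (μ : Measure ℝ) [IsProbabilityMeasure μ] (x : ℝ) :
    volume (Set.Ioo (0:ℝ) 1 ∩ {t | x < quantile μ t}) = ENNReal.ofReal (1 - cdf μ x) := by
  have hset : Set.Ioo (0:ℝ) 1 ∩ {t | x < quantile μ t} = Set.Ioo (cdf μ x) 1 := by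
    ext t
    simp only [Set.mem_inter_iff, Set.mem_Ioo, Set.mem_setOf_eq]
    constructor
    · rintro ⟨ht, hq⟩
      exact ⟨(lt_quantile_iff ht).1 hq, ht.2⟩
    · rintro ⟨h1, h2⟩
      have ht : t ∈ Set.Ioo (0:ℝ) 1 := ⟨lt_of_le_of_lt (cdf_nonneg μ x) h1, h2⟩
      exact ⟨ht, (lt_quantile_iff ht).2 h1⟩
  rw [hset, Real.volume_Ioo]

variable {N : ℕ} {l : Fin N → ℝ} {ν : Fin N → Measure ℝ}

lemma exists_median_measure_quantile (hl : memSimplex l)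
    (hne : (Finset.univ : Finset (Fin N)).Nonempty) (hν : ∀ i, ν i ∈ P1 ℝ) :
    ∃ ρ : Measure ℝ, ρ ∈ P1 ℝ ∧ ∀ t ∈ Set.Ioo (0:ℝ) 1,
      mMinus l (fun i => quantile (ν i) t) ≤ quantile ρ t ∧
        quantile ρ t ≤ mPlus l (fun i => quantile (ν i) t) := by
  haveI : ∀ i, IsProbabilityMeasure (ν i) := fun i => (hν i).1
  set Q : ℝ → Fin N → ℝ := fun t i => quantile (ν i) t with hQ
  set S : ℝ → ℝ := fun t => mMinus l (Q t) with hS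
  have hSmono : ∀ s t : ℝ, s ∈ Set.Ioo (0:ℝ) 1 → t ∈ Set.Ioo (0:ℝ) 1 → s ≤ t → S s ≤ S t :=
    fun s t hs ht hst => mMinus_mono hl hne fun i => quantile_monoOn (ν i) hs ht hst
  have hS_ub : ∀ t, S t ≤ Finset.univ.sup' hne (Q t) := fun t =>
    le_trans (mMinus_le_mPlus hl hne (Q t)) (mPlus_le_sup' hl hne (Q t))
  have hS_lb : ∀ t, Finset.univ.inf' hne (Q t) ≤ S t := fun t => inf'_le_mMinus hl hne (Q t)
  set W : ℝ → Set ℝ := fun x => Set.Ioo (0:ℝ) 1 ∩ {t | S t ≤ x} with hW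
  have hsub_lo : ∀ x, W x ⊆ ⋃ i, (Set.Ioo (0:ℝ) 1 ∩ {t | quantile (ν i) t ≤ x}) := by
    intro x t ht
    obtain ⟨ht1, ht2⟩ := ht
    rw [Set.mem_setOf_eq] at ht2
    have : Finset.univ.inf' hne (Q t) ≤ x := le_trans (hS_lb t) ht2
    obtain ⟨i, _, hi⟩ := (Finset.inf'_le_iff hne).1 this
    exact Set.mem_iUnion.2 ⟨i, ht1, hi⟩
  have hWvol_ub : ∀ x, volume (W x) ≤ ∑ i, ENNReal.ofReal (cdf (ν i) x) := by
    intro x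
    refine le_trans (measure_mono (hsub_lo x)) (le_trans (measure_iUnion_le _) ?_)
    rw [tsum_fintype]
    exact Finset.sum_le_sum fun i _ => le_of_eq (vol_quantile_le (ν i) x)
  have hOC : ∀ x, MeasurableSet (W x) := by
    intro x
    apply Set.OrdConnected.measurableSet
    constructor
    intro t1 h1 t3 h3 t2 ht2
    have ht2' : t2 ∈ Set.Ioo (0:ℝ) 1 :=
      ⟨lt_of_lt_of_le h1.1.1 ht2.1, lt_of_le_of_lt ht2.2 h3.1.2⟩
    refine ⟨ht2', ?_⟩
    rw [Set.mem_setOf_eq]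
    exact le_trans (hSmono t2 t3 ht2' h3.1 ht2.2) h3.2
  have hWle1 : ∀ x, volume (W x) ≤ 1 := fun x => by
    rw [← volIoo01]
    exact measure_mono Set.inter_subset_left
  have hWfin : ∀ x, volume (W x) ≠ ∞ := fun x => (lt_of_le_of_lt (hWle1 x) ENNReal.one_lt_top).ne
  have hupper_sub : ∀ x, Set.Ioo (0:ℝ) 1 ∩ {t | x < S t}
      ⊆ ⋃ i, (Set.Ioo (0:ℝ) 1 ∩ {t | x < quantile (ν i) t}) := by
    intro x t ⟨ht1, ht2⟩
    rw [Set.mem_setOf_eq] at ht2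
    by_contra hc
    simp only [Set.mem_iUnion, not_exists, Set.mem_inter_iff, Set.mem_setOf_eq, not_and,
      not_lt] at hc
    have : Finset.univ.sup' hne (Q t) ≤ x := Finset.sup'_le hne _ fun i _ => hc i ht1
    linarith [le_trans (hS_ub t) this]
  have hupper_ub : ∀ x, volume (Set.Ioo (0:ℝ) 1 ∩ {t | x < S t})
      ≤ ∑ i, ENNReal.ofReal (1 - cdf (ν i) x) := by
    intro x
    refine le_trans (measure_mono (hupper_sub x)) (le_trans (measure_iUnion_le _) ?_)
    rw [tsum_fintype]
    exact Finset.sum_le_sum fun i _ => le_of_eq (vol_quantile_gt (ν i) x)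
  have hupper_fin : ∀ x, volume (Set.Ioo (0:ℝ) 1 ∩ {t | x < S t}) ≠ ∞ := fun x =>
    (lt_of_le_of_lt (measure_mono Set.inter_subset_left) (by rw [volIoo01]; exact
      ENNReal.one_lt_top)).ne
  have hsplit : ∀ x, volume (W x) + volume (Set.Ioo (0:ℝ) 1 ∩ {t | x < S t}) = 1 := by
    intro x
    have hdisj : Disjoint (W x) (Set.Ioo (0:ℝ) 1 ∩ {t | x < S t}) := by
      rw [Set.disjoint_left]
      rintro t ⟨_, h1⟩ ⟨_, h2⟩
      rw [Set.mem_setOf_eq] at h1 h2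
      linarith
    have hmeas2 : MeasurableSet (Set.Ioo (0:ℝ) 1 ∩ {t | x < S t}) := by
      have : Set.Ioo (0:ℝ) 1 ∩ {t | x < S t} = Set.Ioo (0:ℝ) 1 \ W x := by
        ext t
        simp only [Set.mem_inter_iff, Set.mem_setOf_eq, Set.mem_diff, hW]
        constructor
        · rintro ⟨h1, h2⟩
          exact ⟨h1, fun hc => absurd hc.2 (not_le.2 h2)⟩
        · rintro ⟨h1, h2⟩
          refine ⟨h1, ?_⟩
          by_contra h3
          push_neg at h3
          exact h2 ⟨h1, h3⟩
      rw [this]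
      exact measurableSet_Ioo.diff (hOC x)
    rw [← measure_union hdisj hmeas2]
    have : W x ∪ (Set.Ioo (0:ℝ) 1 ∩ {t | x < S t}) = Set.Ioo (0:ℝ) 1 := by
      ext t
      simp only [Set.mem_union, Set.mem_inter_iff, Set.mem_setOf_eq, hW]
      constructor
      · rintro (⟨h, _⟩ | ⟨h, _⟩) <;> exact h
      · intro h
        rcases le_or_gt (S t) x with hle | hlt
        · exact Or.inl ⟨h, hle⟩
        · exact Or.inr ⟨h, hlt⟩
    rw [this, volIoo01]
  set Pt : ℝ → ℝ := fun x => (volume (W x)).toReal with hPt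
  have hPtmono : Monotone Pt := by
    intro x y hxy
    apply ENNReal.toReal_mono (hWfin y)
    apply measure_mono
    intro t ⟨h1, h2⟩
    exact ⟨h1, le_trans h2 hxy⟩
  have hPt0 : ∀ x, 0 ≤ Pt x := fun x => ENNReal.toReal_nonneg
  have hPt1 : ∀ x, Pt x ≤ 1 := by
    intro x
    rw [hPt]
    calc (volume (W x)).toReal ≤ (1 : ℝ≥0∞).toReal :=
        ENNReal.toReal_mono (by norm_num) (hWle1 x)
      _ = 1 := by norm_num
  have hPt_ub : ∀ x, Pt x ≤ ∑ i, cdf (ν i) x := by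
    intro x
    calc Pt x ≤ (∑ i, ENNReal.ofReal (cdf (ν i) x)).toReal :=
        ENNReal.toReal_mono (by
          apply (ENNReal.sum_lt_top.2 fun i _ => ENNReal.ofReal_lt_top).ne) (hWvol_ub x)
      _ = ∑ i, cdf (ν i) x := by
          rw [ENNReal.toReal_sum fun i _ => ENNReal.ofReal_ne_top]
          exact Finset.sum_congr rfl fun i _ => ENNReal.toReal_ofReal (cdf_nonneg (ν i) x)
  have hPt_lb : ∀ x, 1 - (∑ i, (1 - cdf (ν i) x)) ≤ Pt x := by
    intro x
    have h1 : (volume (Set.Ioo (0:ℝ) 1 ∩ {t | x < S t})).toReal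
        ≤ ∑ i, (1 - cdf (ν i) x) := by
      calc (volume (Set.Ioo (0:ℝ) 1 ∩ {t | x < S t})).toReal
          ≤ (∑ i, ENNReal.ofReal (1 - cdf (ν i) x)).toReal :=
            ENNReal.toReal_mono
              ((ENNReal.sum_lt_top.2 fun i _ => ENNReal.ofReal_lt_top).ne) (hupper_ub x)
        _ = ∑ i, (1 - cdf (ν i) x) := by
            rw [ENNReal.toReal_sum fun i _ => ENNReal.ofReal_ne_top]
            exact Finset.sum_congr rfl fun i _ =>
              ENNReal.toReal_ofReal (by linarith [cdf_le_one (ν i) x])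
    have h2 : Pt x + (volume (Set.Ioo (0:ℝ) 1 ∩ {t | x < S t})).toReal = 1 := by
      rw [hPt, ← ENNReal.toReal_add (hWfin x) (hupper_fin x), hsplit x]
      norm_num
    linarith
  have hbot : Tendsto Pt atBot (𝓝 0) := by
    have hupper : Tendsto (fun x => ∑ i, cdf (ν i) x) atBot (𝓝 0) := by
      have := tendsto_finset_sum (Finset.univ : Finset (Fin N))
        (fun i (_ : i ∈ Finset.univ) => tendsto_cdf_atBot (ν i))
      simpa using this
    exact tendsto_of_tendsto_of_tendsto_of_le_of_le tendsto_const_nhds hupper hPt0 hPt_ub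
  have htop : Tendsto Pt atTop (𝓝 1) := by
    have hlower : Tendsto (fun x => 1 - (∑ i, (1 - cdf (ν i) x))) atTop (𝓝 1) := by
      have hsum : Tendsto (fun x => ∑ i, (1 - cdf (ν i) x)) atTop (𝓝 0) := by
        have := tendsto_finset_sum (Finset.univ : Finset (Fin N))
          (fun i (_ : i ∈ Finset.univ) =>
            ((tendsto_const_nhds : Tendsto (fun _ : ℝ => (1:ℝ)) atTop (𝓝 1)).sub
              (tendsto_cdf_atTop (ν i))))
        simpa using this
      have := ((tendsto_const_nhds : Tendsto (fun _ : ℝ => (1:ℝ)) atTop (𝓝 1)).sub hsum)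
      simpa using this
    exact tendsto_of_tendsto_of_tendsto_of_le_of_le hlower tendsto_const_nhds hPt_lb hPt1
  have hSbot : Tendsto (hPtmono.stieltjesFunction) atBot (𝓝 0) := by
    have := tendsto_rightLim_atBot hPtmono hbot
    convert this using 1
    exact funext hPtmono.stieltjesFunction_eq
  have hStop : Tendsto (hPtmono.stieltjesFunction) atTop (𝓝 1) := by
    have := tendsto_rightLim_atTop hPtmono htop
    convert this using 1
    exact funext hPtmono.stieltjesFunction_eq
  set ρ := hPtmono.stieltjesFunction.measure with hρ
  haveI hρprob : IsProbabilityMeasure ρ := by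
    constructor
    rw [StieltjesFunction.measure_univ _ hSbot hStop]
    norm_num
  have hρIic : ∀ x, ρ (Set.Iic x) = ENNReal.ofReal (Function.rightLim Pt x) := by
    intro x
    rw [hρ, StieltjesFunction.measure_Iic _ hSbot, Monotone.stieltjesFunction_eq, sub_zero]
  have hPrl : ∀ x, Pt x ≤ Function.rightLim Pt x := fun x => hPtmono.le_rightLim le_rfl
  have hcdfρ : ∀ x, cdf ρ x = Function.rightLim Pt x := by
    intro x
    rw [cdf, hρIic, ENNReal.toReal_ofReal (le_trans (hPt0 x) (hPrl x))]
  -- quantile bounds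
  have hqup : ∀ t ∈ Set.Ioo (0:ℝ) 1, quantile ρ t ≤ mPlus l (Q t) := by
    intro t ht
    apply (quantile_le_iff ht).2
    set y := mPlus l (Q t) with hy
    have hsubt : Set.Ioo 0 t ⊆ W y := by
      intro s hs
      have hsIoo : s ∈ Set.Ioo (0:ℝ) 1 := ⟨hs.1, lt_trans hs.2 ht.2⟩
      refine ⟨hsIoo, ?_⟩
      rw [Set.mem_setOf_eq]
      calc S s ≤ mPlus l (Q s) := mMinus_le_mPlus hl hne (Q s)
        _ ≤ y := mPlus_mono hl hne fun i => quantile_monoOn (ν i) hsIoo ht (le_of_lt hs.2)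
    have hvol : ENNReal.ofReal t ≤ volume (W y) := by
      have h0 : volume (Set.Ioo (0:ℝ) t) = ENNReal.ofReal t := by
        rw [Real.volume_Ioo, sub_zero]
      rw [← h0]
      exact measure_mono hsubt
    have : t ≤ Pt y := by
      calc t = (ENNReal.ofReal t).toReal := (ENNReal.toReal_ofReal (le_of_lt ht.1)).symm
        _ ≤ Pt y := ENNReal.toReal_mono (hWfin y) hvol
    calc t ≤ Pt y := this
      _ ≤ Function.rightLim Pt y := hPrl y
      _ = cdf ρ y := (hcdfρ y).symm
  have hqlo : ∀ t ∈ Set.Ioo (0:ℝ) 1, mMinus l (Q t) ≤ quantile ρ t := by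
    intro t ht
    apply le_csInf (qSet_nonempty ht.2)
    intro x hx
    rw [Set.mem_setOf_eq] at hx
    by_contra hxm
    push_neg at hxm
    set ε := (mMinus l (Q t) - x)/2 with hε0
    have hε : 0 < ε := by rw [hε0]; linarith
    have hchoice : ∀ i : Fin N, ∃ s ∈ Set.Ioo (0:ℝ) t, quantile (ν i) t - ε < quantile (ν i) s :=
      fun i => quantile_left_approx (ν i) ht hε
    choose sf hsf hqsf using hchoice
    set s₀ := Finset.univ.sup' hne sf with hs₀
    have hs₀t : s₀ < t := by
      rw [hs₀, Finset.sup'_lt_iff]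
      exact fun i _ => (hsf i).2
    have hs₀0 : 0 < s₀ := by
      obtain ⟨i0, hi0⟩ := hne
      exact lt_of_lt_of_le (hsf i0).1 (Finset.le_sup' sf hi0)
    have hs₀Ioo : s₀ ∈ Set.Ioo (0:ℝ) 1 := ⟨hs₀0, lt_trans hs₀t ht.2⟩
    have hQs₀ : ∀ i, Q t i - ε ≤ Q s₀ i := by
      intro i
      have hsIoo : sf i ∈ Set.Ioo (0:ℝ) 1 := ⟨(hsf i).1, lt_trans (hsf i).2 ht.2⟩
      have : quantile (ν i) (sf i) ≤ quantile (ν i) s₀ :=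
        quantile_monoOn (ν i) hsIoo hs₀Ioo (Finset.le_sup' sf (Finset.mem_univ i))
      exact le_of_lt (lt_of_lt_of_le (hqsf i) this)
    have hms₀ : mMinus l (Q t) - ε ≤ S s₀ := mMinus_comp_lower hl hne hQs₀
    set z := x + ε/2 with hz0
    have hxz : x < z := by rw [hz0]; linarith
    have hzS : z < S s₀ := by
      have : mMinus l (Q t) = x + 2*ε := by rw [hε0]; ring
      rw [hz0]
      linarith
    have hWz : W z ⊆ Set.Ioo 0 s₀ := by
      intro s hsW
      obtain ⟨hs1, hs2⟩ := hsW
      rw [Set.mem_setOf_eq] at hs2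
      refine ⟨hs1.1, ?_⟩
      by_contra hss
      push_neg at hss
      have : S s₀ ≤ S s := hSmono s₀ s hs₀Ioo hs1 hss
      linarith
    have hPz : Pt z ≤ s₀ := by
      calc Pt z ≤ (volume (Set.Ioo (0:ℝ) s₀)).toReal :=
          ENNReal.toReal_mono (by rw [Real.volume_Ioo]; exact ENNReal.ofReal_ne_top)
            (measure_mono hWz)
        _ = s₀ := by rw [Real.volume_Ioo, sub_zero, ENNReal.toReal_ofReal (le_of_lt hs₀0)]
    have : cdf ρ x ≤ s₀ := by
      rw [hcdfρ x]
      exact le_trans (hPtmono.rightLim_le hxz) hPz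
    linarith
  -- tails
  have hρP1 : ρ ∈ P1 ℝ := by
    apply P1_of_tails
    · unfold Tn
      have hgsum : ∀ x : ℝ, Tendsto (fun y => ∑ i, cdf (ν i) y) (𝓝[>] x)
          (𝓝 (∑ i, cdf (ν i) x)) := by
        intro x
        apply tendsto_finset_sum
        intro i _
        exact (cdf_right_cts (ν i) x).mono_left (nhdsWithin_mono _ Set.Ioi_subset_Ici_self)
      have hbd : ∀ x : ℝ, ρ (Set.Iic x) ≤ ∑ i, (ν i) (Set.Iic x) := by
        intro x
        rw [hρIic x]
        have hrl : Function.rightLim Pt x ≤ ∑ i, cdf (ν i) x :=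
          rightLim_le_of_le_rc hPtmono hPt_ub (hgsum x)
        calc ENNReal.ofReal (Function.rightLim Pt x)
            ≤ ENNReal.ofReal (∑ i, cdf (ν i) x) := ENNReal.ofReal_le_ofReal hrl
          _ = ∑ i, ENNReal.ofReal (cdf (ν i) x) :=
              ENNReal.ofReal_sum_of_nonneg fun i _ => cdf_nonneg (ν i) x
          _ = ∑ i, (ν i) (Set.Iic x) := Finset.sum_congr rfl fun i _ => by rw [meas_Iic]
      calc ∫⁻ x in Set.Iio (0:ℝ), ρ (Set.Iic x)
          ≤ ∫⁻ x in Set.Iio (0:ℝ), ∑ i, (ν i) (Set.Iic x) := lintegral_mono hbd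
        _ = ∑ i, ∫⁻ x in Set.Iio (0:ℝ), (ν i) (Set.Iic x) :=
            lintegral_finset_sum' _ fun i _ => (meas_Iic_mono (ν i)).aemeasurable
        _ < ∞ := ENNReal.sum_lt_top.2 fun i _ => (tails_of_P1 (hν i)).1
    · unfold Tp
      have hbd : ∀ x : ℝ, ρ (Set.Ioi x) ≤ ∑ i, (ν i) (Set.Ioi x) := by
        intro x
        rw [meas_Ioi ρ x]
        have h1 : 1 - cdf ρ x ≤ 1 - Pt x := by
          rw [hcdfρ x]
          linarith [hPrl x]
        have h2 : 1 - Pt x = (volume (Set.Ioo (0:ℝ) 1 ∩ {t | x < S t})).toReal := by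
          have := ENNReal.toReal_add (hWfin x) (hupper_fin x)
          rw [hsplit x] at this
          rw [hPt]
          simp only [ENNReal.toReal_one] at this
          linarith
        calc ENNReal.ofReal (1 - cdf ρ x) ≤ ENNReal.ofReal (1 - Pt x) :=
            ENNReal.ofReal_le_ofReal h1
          _ = volume (Set.Ioo (0:ℝ) 1 ∩ {t | x < S t}) := by
              rw [h2, ENNReal.ofReal_toReal (hupper_fin x)]
          _ ≤ ∑ i, ENNReal.ofReal (1 - cdf (ν i) x) := hupper_ub x
          _ = ∑ i, (ν i) (Set.Ioi x) := Finset.sum_congr rfl fun i _ => by rw [meas_Ioi]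
      calc ∫⁻ x in Set.Ioi (0:ℝ), ρ (Set.Ioi x)
          ≤ ∫⁻ x in Set.Ioi (0:ℝ), ∑ i, (ν i) (Set.Ioi x) := lintegral_mono hbd
        _ = ∑ i, ∫⁻ x in Set.Ioi (0:ℝ), (ν i) (Set.Ioi x) :=
            lintegral_finset_sum' _ fun i _ => (meas_Ioi_anti (ν i)).aemeasurable
        _ < ∞ := ENNReal.sum_lt_top.2 fun i _ => (tails_of_P1 (hν i)).2
  exact ⟨ρ, hρP1, fun t ht => ⟨hqlo t ht, hqup t ht⟩⟩

end WMaux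

/-! ### Cost machinery -/

namespace WMaux

variable {N : ℕ} {l : Fin N → ℝ} {ν : Fin N → Measure ℝ} {ρ νstar : Measure ℝ}

noncomputable def Cc (l : Fin N → ℝ) (ν : Fin N → Measure ℝ) (ρ : Measure ℝ) : ℝ≥0∞ :=
  ∫⁻ x, ENNReal.ofReal (gfun l (fun i => cdf (ν i) x) (cdf ρ x))

noncomputable def Cq (l : Fin N → ℝ) (ν : Fin N → Measure ℝ) (ρ : Measure ℝ) : ℝ≥0∞ :=
  ∫⁻ t in Set.Ioo (0:ℝ) 1,
    ENNReal.ofReal (gfun l (fun i => quantile (ν i) t) (quantile ρ t))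

lemma gfun_nonneg (hl : memSimplex l) (a : Fin N → ℝ) (u : ℝ) : 0 ≤ gfun l a u :=
  Finset.sum_nonneg fun i _ => mul_nonneg (hl.1 i) (abs_nonneg _)

lemma ofReal_gfun (hl : memSimplex l) (a : Fin N → ℝ) (u : ℝ) :
    ENNReal.ofReal (gfun l a u) = ∑ i, ENNReal.ofReal (l i) * ENNReal.ofReal |a i - u| := by
  unfold gfun
  rw [ENNReal.ofReal_sum_of_nonneg fun i _ => mul_nonneg (hl.1 i) (abs_nonneg _)]
  exact Finset.sum_congr rfl fun i _ => ENNReal.ofReal_mul (hl.1 i)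

lemma Cc_expand (hl : memSimplex l) (hν : ∀ i, ν i ∈ P1 ℝ) [IsProbabilityMeasure ρ] :
    Cc l ν ρ = ∑ i, ENNReal.ofReal (l i) * LF (ν i) ρ := by
  haveI : ∀ i, IsProbabilityMeasure (ν i) := fun i => (hν i).1
  unfold Cc
  have h1 : ∀ x, ENNReal.ofReal (gfun l (fun i => cdf (ν i) x) (cdf ρ x))
      = ∑ i, ENNReal.ofReal (l i) * ENNReal.ofReal |cdf (ν i) x - cdf ρ x| := fun x =>
    ofReal_gfun hl _ _
  simp_rw [h1]
  rw [lintegral_finset_sum' (f := fun i x => ENNReal.ofReal (l i) * ENNReal.ofReal |cdf (ν i) x - cdf ρ x|) _ fun i _ =>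
    ((((measurable_cdf (ν i)).sub (measurable_cdf ρ)).abs.ennreal_ofReal).const_mul
      _).aemeasurable]
  apply Finset.sum_congr rfl
  intro i _
  rw [lintegral_const_mul' _ _ ENNReal.ofReal_ne_top]
  rfl

lemma Cq_expand (hl : memSimplex l) (hν : ∀ i, ν i ∈ P1 ℝ) [IsProbabilityMeasure ρ] :
    Cq l ν ρ = ∑ i, ENNReal.ofReal (l i) * LQ (ν i) ρ := by
  haveI : ∀ i, IsProbabilityMeasure (ν i) := fun i => (hν i).1
  unfold Cq
  have h1 : ∀ t, ENNReal.ofReal (gfun l (fun i => quantile (ν i) t) (quantile ρ t))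
      = ∑ i, ENNReal.ofReal (l i) * ENNReal.ofReal |quantile (ν i) t - quantile ρ t| :=
    fun t => ofReal_gfun hl _ _
  simp_rw [h1]
  have hme : ∀ i : Fin N, AEMeasurable
      (fun t => ENNReal.ofReal (l i) * ENNReal.ofReal |quantile (ν i) t - quantile ρ t|)
      (volume.restrict (Set.Ioo (0:ℝ) 1)) := by
    intro i
    have h1 : AEMeasurable (fun t => |quantile (ν i) t - quantile ρ t|)
        (volume.restrict (Set.Ioo (0:ℝ) 1)) :=
      continuous_abs.measurable.comp_aemeasurable
        ((aemeasurable_quantile (ν i)).sub (aemeasurable_quantile ρ))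
    have h2 : AEMeasurable (fun t => ENNReal.ofReal |quantile (ν i) t - quantile ρ t|)
        (volume.restrict (Set.Ioo (0:ℝ) 1)) :=
      ENNReal.measurable_ofReal.comp_aemeasurable h1
    exact h2.const_mul _
  rw [lintegral_finset_sum' _ fun i _ => hme i]
  apply Finset.sum_congr rfl
  intro i _
  rw [lintegral_const_mul' _ _ ENNReal.ofReal_ne_top]
  rfl

lemma Cq_eq_Cc (hl : memSimplex l) (hν : ∀ i, ν i ∈ P1 ℝ) [IsProbabilityMeasure ρ] :
    Cq l ν ρ = Cc l ν ρ := by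
  haveI : ∀ i, IsProbabilityMeasure (ν i) := fun i => (hν i).1
  rw [Cq_expand hl hν, Cc_expand hl hν]
  exact Finset.sum_congr rfl fun i _ => by rw [LQ_eq_LF]

lemma Cc_lt_top (hl : memSimplex l) (hν : ∀ i, ν i ∈ P1 ℝ) (hρ : ρ ∈ P1 ℝ) :
    Cc l ν ρ < ∞ := by
  haveI := hρ.1
  rw [Cc_expand hl hν]
  apply ENNReal.sum_lt_top.2
  intro i _
  exact ENNReal.mul_lt_top ENNReal.ofReal_lt_top (LF_lt_top (hν i) hρ)

lemma medCost_eq_Cc (hl : memSimplex l) (hν : ∀ i, ν i ∈ P1 ℝ) (hρ : ρ ∈ P1 ℝ) :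
    medCost l ν ρ = (Cc l ν ρ).toReal := by
  haveI := hρ.1
  haveI : ∀ i, IsProbabilityMeasure (ν i) := fun i => (hν i).1
  rw [Cc_expand hl hν, ENNReal.toReal_sum fun i _ =>
    (ENNReal.mul_lt_top ENNReal.ofReal_lt_top (LF_lt_top (hν i) hρ)).ne]
  unfold medCost
  apply Finset.sum_congr rfl
  intro i _
  rw [W1_eq (ν i) ρ, ENNReal.toReal_mul, ENNReal.toReal_ofReal (hl.1 i)]

lemma med_of_cdf_cond (hl : memSimplex l) (hne : (Finset.univ : Finset (Fin N)).Nonempty)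
    (hν : ∀ i, ν i ∈ P1 ℝ) (hνstar : νstar ∈ P1 ℝ)
    (H : ∀ x : ℝ, mMinus l (fun i => cdf (ν i) x) ≤ cdf νstar x ∧
      cdf νstar x ≤ mPlus l (fun i => cdf (ν i) x)) :
    νstar ∈ Med l ν := by
  refine ⟨hνstar, fun ρ hρ => ?_⟩
  rw [medCost_eq_Cc hl hν hνstar, medCost_eq_Cc hl hν hρ]
  apply ENNReal.toReal_mono (Cc_lt_top hl hν hρ).ne
  apply lintegral_mono
  intro x
  exact ENNReal.ofReal_le_ofReal (gfun_min hl hne (H x).1 (H x).2 (cdf ρ x))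

lemma med_of_quantile_cond (hl : memSimplex l) (hne : (Finset.univ : Finset (Fin N)).Nonempty)
    (hν : ∀ i, ν i ∈ P1 ℝ) (hνstar : νstar ∈ P1 ℝ)
    (H : ∀ t ∈ Set.Ioo (0:ℝ) 1, mMinus l (fun i => quantile (ν i) t) ≤ quantile νstar t ∧
      quantile νstar t ≤ mPlus l (fun i => quantile (ν i) t)) :
    νstar ∈ Med l ν := by
  haveI := hνstar.1
  refine ⟨hνstar, fun ρ hρ => ?_⟩
  haveI := hρ.1
  rw [medCost_eq_Cc hl hν hνstar, medCost_eq_Cc hl hν hρ,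
    ← Cq_eq_Cc hl hν, ← Cq_eq_Cc hl hν]
  apply ENNReal.toReal_mono
  · rw [Cq_eq_Cc hl hν]
    exact (Cc_lt_top hl hν hρ).ne
  · apply lintegral_mono_ae
    filter_upwards [ae_restrict_mem measurableSet_Ioo] with t ht
    exact ENNReal.ofReal_le_ofReal (gfun_min hl hne (H t ht).1 (H t ht).2 (quantile ρ t))

end WMaux

namespace WMaux

variable {N : ℕ} {l : Fin N → ℝ} {ν : Fin N → Measure ℝ} {νstar : Measure ℝ}

lemma cdf_cond_of_med (hl : memSimplex l) (hne : (Finset.univ : Finset (Fin N)).Nonempty)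
    (hν : ∀ i, ν i ∈ P1 ℝ) (hmed : νstar ∈ Med l ν) :
    ∀ x : ℝ, mMinus l (fun i => cdf (ν i) x) ≤ cdf νstar x ∧
      cdf νstar x ≤ mPlus l (fun i => cdf (ν i) x) := by
  haveI : ∀ i, IsProbabilityMeasure (ν i) := fun i => (hν i).1
  obtain ⟨hνstarP1, hopt⟩ := hmed
  haveI := hνstarP1.1
  obtain ⟨ρ, hρP1, hρmid⟩ := exists_median_measure_cdf hl hne hν
  haveI := hρP1.1
  obtain ⟨κ, hκ, hκprop⟩ := exists_kappa hl hne
  intro x₀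
  by_contra hcon
  rw [not_and_or] at hcon
  have main : ∃ u c, x₀ < u ∧ 0 < c ∧ ∀ y : ℝ,
      ENNReal.ofReal (gfun l (fun i => cdf (ν i) y) (cdf ρ y))
        + (Set.Ico x₀ u).indicator (fun _ => ENNReal.ofReal c) y
      ≤ ENNReal.ofReal (gfun l (fun i => cdf (ν i) y) (cdf νstar y)) := by
    rcases hcon with hA | hB
    · push_neg at hA
      set δ := mMinus l (fun i => cdf (ν i) x₀) - cdf νstar x₀ with hδ0
      have hδ : 0 < δ := by rw [hδ0]; linarith
      have hev : ∀ᶠ y in 𝓝[≥] x₀, cdf νstar y < cdf νstar x₀ + δ/2 :=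
        (cdf_right_cts νstar x₀).eventually_lt_const (by linarith)
      obtain ⟨u, hu, hsub⟩ := mem_nhdsGE_iff_exists_Ico_subset.1 hev
      rw [Set.mem_Ioi] at hu
      refine ⟨u, δ/2 * κ, hu, by positivity, ?_⟩
      intro y
      by_cases hy : y ∈ Set.Ico x₀ u
      · rw [Set.indicator_of_mem hy]
        have hy1 : cdf νstar y < cdf νstar x₀ + δ/2 := hsub hy
        have hmono : mMinus l (fun i => cdf (ν i) x₀) ≤ mMinus l (fun i => cdf (ν i) y) :=
          mMinus_mono hl hne fun i => cdf_mono (ν i) hy.1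
        have hlt : cdf νstar y < mMinus l (fun i => cdf (ν i) y) := by
          have : mMinus l (fun i => cdf (ν i) x₀) = cdf νstar x₀ + δ := by rw [hδ0]; ring
          linarith
        have hgap : δ/2 ≤ mMinus l (fun i => cdf (ν i) y) - cdf νstar y := by
          have : mMinus l (fun i => cdf (ν i) x₀) = cdf νstar x₀ + δ := by rw [hδ0]; ring
          linarith
        have hk := (hκprop (fun i => cdf (ν i) y) (cdf νstar y)).1 hlt
        have hconst : gfun l (fun i => cdf (ν i) y) (cdf ρ y)
            = gfun l (fun i => cdf (ν i) y) (mMinus l (fun i => cdf (ν i) y)) :=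
          gfun_const hl hne (hρmid y).1 (hρmid y).2
        have hmul : δ/2 * κ ≤ (mMinus l (fun i => cdf (ν i) y) - cdf νstar y) * κ :=
          mul_le_mul_of_nonneg_right hgap (le_of_lt hκ)
        have hreal : gfun l (fun i => cdf (ν i) y) (cdf ρ y) + δ/2 * κ
            ≤ gfun l (fun i => cdf (ν i) y) (cdf νstar y) := by
          rw [hconst]
          linarith
        calc ENNReal.ofReal (gfun l (fun i => cdf (ν i) y) (cdf ρ y))
              + ENNReal.ofReal (δ/2 * κ)
            = ENNReal.ofReal (gfun l (fun i => cdf (ν i) y) (cdf ρ y) + δ/2 * κ) :=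
              (ENNReal.ofReal_add (gfun_nonneg hl _ _) (by positivity)).symm
          _ ≤ _ := ENNReal.ofReal_le_ofReal hreal
      · rw [Set.indicator_of_notMem hy, add_zero]
        exact ENNReal.ofReal_le_ofReal (gfun_min hl hne (hρmid y).1 (hρmid y).2 _)
    · push_neg at hB
      set δ := cdf νstar x₀ - mPlus l (fun i => cdf (ν i) x₀) with hδ0
      have hδ : 0 < δ := by rw [hδ0]; linarith
      have hev : ∀ᶠ y in 𝓝[≥] x₀, ∀ i, cdf (ν i) y < cdf (ν i) x₀ + δ/2 := by
        rw [eventually_all]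
        exact fun i => (cdf_right_cts (ν i) x₀).eventually_lt_const
          (lt_add_of_pos_right _ (by linarith))
      obtain ⟨u, hu, hsub⟩ := mem_nhdsGE_iff_exists_Ico_subset.1 hev
      rw [Set.mem_Ioi] at hu
      refine ⟨u, δ/2 * κ, hu, by positivity, ?_⟩
      intro y
      by_cases hy : y ∈ Set.Ico x₀ u
      · rw [Set.indicator_of_mem hy]
        have hplus : mPlus l (fun i => cdf (ν i) y) ≤ mPlus l (fun i => cdf (ν i) x₀) + δ/2 :=
          mPlus_comp_upper hl hne fun i => le_of_lt (hsub hy i)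
        have hstar : cdf νstar x₀ ≤ cdf νstar y := cdf_mono νstar hy.1
        have hlt : mPlus l (fun i => cdf (ν i) y) < cdf νstar y := by
          have : cdf νstar x₀ = mPlus l (fun i => cdf (ν i) x₀) + δ := by rw [hδ0]; ring
          linarith
        have hgap : δ/2 ≤ cdf νstar y - mPlus l (fun i => cdf (ν i) y) := by
          have : cdf νstar x₀ = mPlus l (fun i => cdf (ν i) x₀) + δ := by rw [hδ0]; ring
          linarith
        have hk := (hκprop (fun i => cdf (ν i) y) (cdf νstar y)).2 hlt
        have hconst : gfun l (fun i => cdf (ν i) y) (cdf ρ y)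
            = gfun l (fun i => cdf (ν i) y) (mPlus l (fun i => cdf (ν i) y)) := by
          rw [gfun_const hl hne (hρmid y).1 (hρmid y).2,
            gfun_const hl hne (mMinus_le_mPlus hl hne _) (le_refl _)]
        have hmul : δ/2 * κ ≤ (cdf νstar y - mPlus l (fun i => cdf (ν i) y)) * κ :=
          mul_le_mul_of_nonneg_right hgap (le_of_lt hκ)
        have hreal : gfun l (fun i => cdf (ν i) y) (cdf ρ y) + δ/2 * κ
            ≤ gfun l (fun i => cdf (ν i) y) (cdf νstar y) := by
          rw [hconst]
          linarith
        calc ENNReal.ofReal (gfun l (fun i => cdf (ν i) y) (cdf ρ y))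
              + ENNReal.ofReal (δ/2 * κ)
            = ENNReal.ofReal (gfun l (fun i => cdf (ν i) y) (cdf ρ y) + δ/2 * κ) :=
              (ENNReal.ofReal_add (gfun_nonneg hl _ _) (by positivity)).symm
          _ ≤ _ := ENNReal.ofReal_le_ofReal hreal
      · rw [Set.indicator_of_notMem hy, add_zero]
        exact ENNReal.ofReal_le_ofReal (gfun_min hl hne (hρmid y).1 (hρmid y).2 _)
  obtain ⟨u, c, hu, hc, hpt⟩ := main
  have hint : Cc l ν ρ + ENNReal.ofReal c * volume (Set.Ico x₀ u) ≤ Cc l ν νstar := by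
    have h := lintegral_mono (μ := volume) hpt
    rw [lintegral_add_right _ (measurable_const.indicator measurableSet_Ico),
      lintegral_indicator_const measurableSet_Ico] at h
    exact h
  have hvolpos : volume (Set.Ico x₀ u) ≠ 0 := by
    rw [Real.volume_Ico]
    simp only [ne_eq, ENNReal.ofReal_eq_zero, not_le]
    linarith
  have hcc : ENNReal.ofReal c * volume (Set.Ico x₀ u) ≠ 0 :=
    mul_ne_zero (by simp only [ne_eq, ENNReal.ofReal_eq_zero, not_le]; linarith) hvolpos
  have hlt2 : Cc l ν ρ < Cc l ν νstar :=
    lt_of_lt_of_le (ENNReal.lt_add_right (Cc_lt_top hl hν hρP1).ne hcc) hint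
  have h1 := hopt ρ hρP1
  rw [medCost_eq_Cc hl hν hνstarP1, medCost_eq_Cc hl hν hρP1] at h1
  have h2 := (ENNReal.toReal_lt_toReal (Cc_lt_top hl hν hρP1).ne
    (Cc_lt_top hl hν hνstarP1).ne).2 hlt2
  linarith

lemma quantile_cond_of_med (hl : memSimplex l) (hne : (Finset.univ : Finset (Fin N)).Nonempty)
    (hν : ∀ i, ν i ∈ P1 ℝ) (hmed : νstar ∈ Med l ν) :
    ∀ t ∈ Set.Ioo (0:ℝ) 1, mMinus l (fun i => quantile (ν i) t) ≤ quantile νstar t ∧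
      quantile νstar t ≤ mPlus l (fun i => quantile (ν i) t) := by
  haveI : ∀ i, IsProbabilityMeasure (ν i) := fun i => (hν i).1
  obtain ⟨hνstarP1, hopt⟩ := hmed
  haveI := hνstarP1.1
  obtain ⟨ρ, hρP1, hρmid⟩ := exists_median_measure_quantile hl hne hν
  haveI := hρP1.1
  obtain ⟨κ, hκ, hκprop⟩ := exists_kappa hl hne
  intro t₀ ht₀
  by_contra hcon
  rw [not_and_or] at hcon
  have main : ∃ s₀ c, s₀ ∈ Set.Ioo (0:ℝ) t₀ ∧ 0 < c ∧ ∀ t ∈ Set.Ioo (0:ℝ) 1,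
      ENNReal.ofReal (gfun l (fun i => quantile (ν i) t) (quantile ρ t))
        + (Set.Ioc s₀ t₀).indicator (fun _ => ENNReal.ofReal c) t
      ≤ ENNReal.ofReal (gfun l (fun i => quantile (ν i) t) (quantile νstar t)) := by
    rcases hcon with hA | hB
    · push_neg at hA
      set δ := mMinus l (fun i => quantile (ν i) t₀) - quantile νstar t₀ with hδ0
      have hδ : 0 < δ := by rw [hδ0]; linarith
      have hchoice : ∀ i : Fin N, ∃ s ∈ Set.Ioo (0:ℝ) t₀,
          quantile (ν i) t₀ - δ/2 < quantile (ν i) s :=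
        fun i => quantile_left_approx (ν i) ht₀ (by linarith)
      choose sf hsf hqsf using hchoice
      set s₀ := Finset.univ.sup' hne sf with hs₀def
      have hs₀t : s₀ < t₀ := by
        rw [hs₀def, Finset.sup'_lt_iff]
        exact fun i _ => (hsf i).2
      have hs₀0 : 0 < s₀ := by
        obtain ⟨i0, hi0⟩ := hne
        exact lt_of_lt_of_le (hsf i0).1 (Finset.le_sup' sf hi0)
      refine ⟨s₀, δ/2 * κ, ⟨hs₀0, hs₀t⟩, by positivity, ?_⟩
      intro t ht
      by_cases hyE : t ∈ Set.Ioc s₀ t₀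
      · rw [Set.indicator_of_mem hyE]
        have hQt : ∀ i, quantile (ν i) t₀ - δ/2 ≤ quantile (ν i) t := by
          intro i
          have hsfIoo : sf i ∈ Set.Ioo (0:ℝ) 1 := ⟨(hsf i).1, lt_trans (hsf i).2 ht₀.2⟩
          have h1 : quantile (ν i) (sf i) ≤ quantile (ν i) t :=
            quantile_monoOn (ν i) hsfIoo ht
              (le_trans (Finset.le_sup' sf (Finset.mem_univ i)) (le_of_lt hyE.1))
          linarith [hqsf i]
        have hmm : mMinus l (fun i => quantile (ν i) t₀) - δ/2
            ≤ mMinus l (fun i => quantile (ν i) t) := mMinus_comp_lower hl hne hQt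
        have hstar : quantile νstar t ≤ quantile νstar t₀ :=
          quantile_monoOn νstar ht ht₀ hyE.2
        have hlt : quantile νstar t < mMinus l (fun i => quantile (ν i) t) := by
          have : mMinus l (fun i => quantile (ν i) t₀) = quantile νstar t₀ + δ := by
            rw [hδ0]; ring
          linarith
        have hgap : δ/2 ≤ mMinus l (fun i => quantile (ν i) t) - quantile νstar t := by
          have : mMinus l (fun i => quantile (ν i) t₀) = quantile νstar t₀ + δ := by
            rw [hδ0]; ring
          linarith
        have hk := (hκprop (fun i => quantile (ν i) t) (quantile νstar t)).1 hlt
        have hconst : gfun l (fun i => quantile (ν i) t) (quantile ρ t)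
            = gfun l (fun i => quantile (ν i) t) (mMinus l (fun i => quantile (ν i) t)) :=
          gfun_const hl hne (hρmid t ht).1 (hρmid t ht).2
        have hmul : δ/2 * κ
            ≤ (mMinus l (fun i => quantile (ν i) t) - quantile νstar t) * κ :=
          mul_le_mul_of_nonneg_right hgap (le_of_lt hκ)
        have hreal : gfun l (fun i => quantile (ν i) t) (quantile ρ t) + δ/2 * κ
            ≤ gfun l (fun i => quantile (ν i) t) (quantile νstar t) := by
          rw [hconst]
          linarith
        calc ENNReal.ofReal (gfun l (fun i => quantile (ν i) t) (quantile ρ t))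
              + ENNReal.ofReal (δ/2 * κ)
            = ENNReal.ofReal (gfun l (fun i => quantile (ν i) t) (quantile ρ t) + δ/2 * κ) :=
              (ENNReal.ofReal_add (gfun_nonneg hl _ _) (by positivity)).symm
          _ ≤ _ := ENNReal.ofReal_le_ofReal hreal
      · rw [Set.indicator_of_notMem hyE, add_zero]
        exact ENNReal.ofReal_le_ofReal
          (gfun_min hl hne (hρmid t ht).1 (hρmid t ht).2 _)
    · push_neg at hB
      set δ := quantile νstar t₀ - mPlus l (fun i => quantile (ν i) t₀) with hδ0
      have hδ : 0 < δ := by rw [hδ0]; linarith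
      obtain ⟨s₀, hs₀, hqs₀⟩ := quantile_left_approx νstar ht₀ (show (0:ℝ) < δ/2 by linarith)
      have hs₀Ioo : s₀ ∈ Set.Ioo (0:ℝ) 1 := ⟨hs₀.1, lt_trans hs₀.2 ht₀.2⟩
      refine ⟨s₀, δ/2 * κ, hs₀, by positivity, ?_⟩
      intro t ht
      by_cases hyE : t ∈ Set.Ioc s₀ t₀
      · rw [Set.indicator_of_mem hyE]
        have hstar : quantile νstar s₀ ≤ quantile νstar t :=
          quantile_monoOn νstar hs₀Ioo ht (le_of_lt hyE.1)
        have hplus : mPlus l (fun i => quantile (ν i) t)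
            ≤ mPlus l (fun i => quantile (ν i) t₀) :=
          mPlus_mono hl hne fun i => quantile_monoOn (ν i) ht ht₀ hyE.2
        have hlt : mPlus l (fun i => quantile (ν i) t) < quantile νstar t := by
          have : quantile νstar t₀ = mPlus l (fun i => quantile (ν i) t₀) + δ := by
            rw [hδ0]; ring
          linarith
        have hgap : δ/2 ≤ quantile νstar t - mPlus l (fun i => quantile (ν i) t) := by
          have : quantile νstar t₀ = mPlus l (fun i => quantile (ν i) t₀) + δ := by
            rw [hδ0]; ring
          linarith
        have hk := (hκprop (fun i => quantile (ν i) t) (quantile νstar t)).2 hlt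
        have hconst : gfun l (fun i => quantile (ν i) t) (quantile ρ t)
            = gfun l (fun i => quantile (ν i) t) (mPlus l (fun i => quantile (ν i) t)) := by
          rw [gfun_const hl hne (hρmid t ht).1 (hρmid t ht).2,
            gfun_const hl hne (mMinus_le_mPlus hl hne _) (le_refl _)]
        have hmul : δ/2 * κ
            ≤ (quantile νstar t - mPlus l (fun i => quantile (ν i) t)) * κ :=
          mul_le_mul_of_nonneg_right hgap (le_of_lt hκ)
        have hreal : gfun l (fun i => quantile (ν i) t) (quantile ρ t) + δ/2 * κ
            ≤ gfun l (fun i => quantile (ν i) t) (quantile νstar t) := by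
          rw [hconst]
          linarith
        calc ENNReal.ofReal (gfun l (fun i => quantile (ν i) t) (quantile ρ t))
              + ENNReal.ofReal (δ/2 * κ)
            = ENNReal.ofReal (gfun l (fun i => quantile (ν i) t) (quantile ρ t) + δ/2 * κ) :=
              (ENNReal.ofReal_add (gfun_nonneg hl _ _) (by positivity)).symm
          _ ≤ _ := ENNReal.ofReal_le_ofReal hreal
      · rw [Set.indicator_of_notMem hyE, add_zero]
        exact ENNReal.ofReal_le_ofReal
          (gfun_min hl hne (hρmid t ht).1 (hρmid t ht).2 _)
  obtain ⟨s₀, c, hs₀, hc, hpt⟩ := main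
  have hint : Cq l ν ρ + ENNReal.ofReal c * volume (Set.Ioc s₀ t₀) ≤ Cq l ν νstar := by
    have h : (∫⁻ t in Set.Ioo (0:ℝ) 1,
        (ENNReal.ofReal (gfun l (fun i => quantile (ν i) t) (quantile ρ t))
          + (Set.Ioc s₀ t₀).indicator (fun _ => ENNReal.ofReal c) t))
        ≤ Cq l ν νstar := by
      apply lintegral_mono_ae
      filter_upwards [ae_restrict_mem measurableSet_Ioo] with t ht
      exact hpt t ht
    rw [lintegral_add_right _ (measurable_const.indicator measurableSet_Ioc),
      lintegral_indicator_const measurableSet_Ioc] at h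
    have hres : (volume.restrict (Set.Ioo (0:ℝ) 1)) (Set.Ioc s₀ t₀)
        = volume (Set.Ioc s₀ t₀) := by
      rw [Measure.restrict_apply measurableSet_Ioc]
      congr 1
      apply Set.inter_eq_self_of_subset_left
      intro x hx
      exact ⟨lt_trans hs₀.1 hx.1, lt_of_le_of_lt hx.2 ht₀.2⟩
    rw [hres] at h
    exact h
  have hvolpos : volume (Set.Ioc s₀ t₀) ≠ 0 := by
    rw [Real.volume_Ioc]
    simp only [ne_eq, ENNReal.ofReal_eq_zero, not_le]
    linarith [hs₀.2]
  have hcc : ENNReal.ofReal c * volume (Set.Ioc s₀ t₀) ≠ 0 :=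
    mul_ne_zero (by simp only [ne_eq, ENNReal.ofReal_eq_zero, not_le]; linarith) hvolpos
  have hCqρ : Cq l ν ρ = Cc l ν ρ := Cq_eq_Cc hl hν
  have hCqstar : Cq l ν νstar = Cc l ν νstar := Cq_eq_Cc hl hν
  rw [hCqρ, hCqstar] at hint
  have hlt2 : Cc l ν ρ < Cc l ν νstar :=
    lt_of_lt_of_le (ENNReal.lt_add_right (Cc_lt_top hl hν hρP1).ne hcc) hint
  have h1 := hopt ρ hρP1
  rw [medCost_eq_Cc hl hν hνstarP1, medCost_eq_Cc hl hν hρP1] at h1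
  have h2 := (ENNReal.toReal_lt_toReal (Cc_lt_top hl hν hρP1).ne
    (Cc_lt_top hl hν hνstarP1).ne).2 hlt2
  linarith

end WMaux


/-- One-dimensional Wasserstein medians: `ν* ∈ Med_λ(ν)` iff its cdf is,
at every point, a weighted median of the cdfs of the sample measures, iff its quantile
function is, at every `t ∈ (0,1)`, a weighted median of the quantile functions of the
sample measures; if no subset of the weights sums to `1/2`, the median is unique. -/
theorem oneDimensional_median_characterization
    {N : ℕ} (hN : 1 ≤ N) {l : Fin N → ℝ} (hl : memSimplex l)
    {ν : Fin N → Measure ℝ} (hν : ∀ i, ν i ∈ P1 ℝ)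
    {νstar : Measure ℝ} (hνstar : νstar ∈ P1 ℝ) :
    ((νstar ∈ Med l ν) ↔ ∀ x : ℝ,
      mMinus l (fun i => cdf (ν i) x) ≤ cdf νstar x ∧
        cdf νstar x ≤ mPlus l (fun i => cdf (ν i) x)) ∧
    ((νstar ∈ Med l ν) ↔ ∀ t ∈ Set.Ioo (0 : ℝ) 1,
      mMinus l (fun i => quantile (ν i) t) ≤ quantile νstar t ∧
        quantile νstar t ≤ mPlus l (fun i => quantile (ν i) t)) ∧
    ((¬ ∃ I : Finset (Fin N), ∑ i ∈ I, l i = 1 / 2) →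
      ∀ μ₁ ∈ Med l ν, ∀ μ₂ ∈ Med l ν, μ₁ = μ₂) := by
  have hne : (Finset.univ : Finset (Fin N)).Nonempty := by
    haveI : Nonempty (Fin N) := ⟨⟨0, hN⟩⟩
    exact Finset.univ_nonempty
  refine ⟨⟨fun hmed => WMaux.cdf_cond_of_med hl hne hν hmed,
      fun H => WMaux.med_of_cdf_cond hl hne hν hνstar H⟩,
    ⟨fun hmed => WMaux.quantile_cond_of_med hl hne hν hmed,
      fun H => WMaux.med_of_quantile_cond hl hne hν hνstar H⟩, ?_⟩
  intro hhalf μ₁ h₁ μ₂ h₂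
  haveI := h₁.1.1
  haveI := h₂.1.1
  have H₁ := WMaux.cdf_cond_of_med hl hne hν h₁
  have H₂ := WMaux.cdf_cond_of_med hl hne hν h₂
  have hcdf : ∀ x, cdf μ₁ x = cdf μ₂ x := by
    intro x
    have hm := WMaux.mPlus_le_mMinus_of_no_half hl hne hhalf (fun i => cdf (ν i) x)
    have h1a := (H₁ x).1
    have h1b := (H₁ x).2
    have h2a := (H₂ x).1
    have h2b := (H₂ x).2
    linarith
  apply Measure.ext_of_Iic
  intro x
  rw [WMaux.meas_Iic μ₁ x, WMaux.meas_Iic μ₂ x, hcdf x]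
end

section
/- Let λ ∈ Δ_N, ν = (ν₁,…,ν_N) and ν̃ = (ν̃₁,…,ν̃_N) in 𝒫₁(ℝ)^N, and θ ∈ [0,1]. Then the vertical and horizontal median selections satisfy the Lipschitz stability estimates W₁(VMed_λ(θ,ν), VMed_λ(θ,ν̃)) ≤ ∑ᵢ W₁(νᵢ, ν̃ᵢ) and W₁(HMed_λ(θ,ν), HMed_λ(θ,ν̃)) ≤ ∑ᵢ W₁(νᵢ, ν̃ᵢ). -/
open MeasureTheory Filter Topology
open scoped ENNReal NNReal

namespace WMed
open Set

lemma cdf_eq_cdf (μ : Measure ℝ) [IsProbabilityMeasure μ] :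
    cdf μ = ⇑(ProbabilityTheory.cdf μ) := by
  funext x; rw [ProbabilityTheory.cdf_eq_real]; rfl

lemma cdf_nonneg (μ : Measure ℝ) (x : ℝ) : 0 ≤ cdf μ x := ENNReal.toReal_nonneg

lemma cdf_le_one (μ : Measure ℝ) [IsProbabilityMeasure μ] (x : ℝ) : cdf μ x ≤ 1 := by
  rw [cdf_eq_cdf]; exact ProbabilityTheory.cdf_le_one μ x

lemma cdf_mono (μ : Measure ℝ) [IsProbabilityMeasure μ] : Monotone (cdf μ) := by
  rw [cdf_eq_cdf]; exact ProbabilityTheory.monotone_cdf μ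

lemma cdf_measurable (μ : Measure ℝ) [IsProbabilityMeasure μ] : Measurable (cdf μ) :=
  (cdf_mono μ).measurable

lemma ofReal_cdf (μ : Measure ℝ) [IsProbabilityMeasure μ] (x : ℝ) :
    ENNReal.ofReal (cdf μ x) = μ (Set.Iic x) :=
  ENNReal.ofReal_toReal (measure_ne_top μ _)

lemma cdf_tendsto_atTop (μ : Measure ℝ) [IsProbabilityMeasure μ] :
    Tendsto (cdf μ) atTop (𝓝 1) := by
  rw [cdf_eq_cdf]; exact ProbabilityTheory.tendsto_cdf_atTop μ

lemma cdf_tendsto_atBot (μ : Measure ℝ) [IsProbabilityMeasure μ] :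
    Tendsto (cdf μ) atBot (𝓝 0) := by
  rw [cdf_eq_cdf]; exact ProbabilityTheory.tendsto_cdf_atBot μ

lemma cdf_nonempty (μ : Measure ℝ) [IsProbabilityMeasure μ] {t : ℝ} (ht1 : t < 1) :
    {y : ℝ | t ≤ cdf μ y}.Nonempty := by
  obtain ⟨y, hy⟩ := ((cdf_tendsto_atTop μ).eventually (lt_mem_nhds ht1)).exists
  exact ⟨y, hy.le⟩

lemma cdf_bddBelow (μ : Measure ℝ) [IsProbabilityMeasure μ] {t : ℝ} (ht0 : 0 < t) :
    BddBelow {y : ℝ | t ≤ cdf μ y} := by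
  obtain ⟨y, hy⟩ := ((cdf_tendsto_atBot μ).eventually (gt_mem_nhds ht0)).exists
  refine ⟨y, fun s hs => ?_⟩
  by_contra hc
  push_neg at hc
  exact absurd (le_trans hs (cdf_mono μ hc.le)) (not_le.mpr hy)

/-- Galois connection between quantile and cdf on (0,1). -/
lemma quantile_le_iff (μ : Measure ℝ) [IsProbabilityMeasure μ] {t x : ℝ}
    (ht0 : 0 < t) (ht1 : t < 1) : quantile μ t ≤ x ↔ t ≤ cdf μ x := by
  set S := {y : ℝ | t ≤ cdf μ y} with hS
  have hmono := cdf_mono μ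
  have hne : S.Nonempty := cdf_nonempty μ ht1
  have hbdd : BddBelow S := cdf_bddBelow μ ht0
  have hmem : t ≤ cdf μ (quantile μ t) := by
    have hrc : Tendsto (cdf μ) (𝓝[>] (sInf S)) (𝓝 (cdf μ (sInf S))) := by
      rw [cdf_eq_cdf]
      exact ((ProbabilityTheory.cdf μ).right_continuous (sInf S)).tendsto.mono_left
        (nhdsWithin_mono _ Ioi_subset_Ici_self)
    refine ge_of_tendsto hrc ?_
    filter_upwards [self_mem_nhdsWithin] with z hz
    obtain ⟨s, hsS, hsz⟩ := exists_lt_of_csInf_lt hne hz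
    exact le_trans hsS (hmono hsz.le)
  constructor
  · intro h
    exact le_trans hmem (hmono h)
  · intro h
    exact csInf_le hbdd h

lemma quantile_monotoneOn (μ : Measure ℝ) [IsProbabilityMeasure μ] :
    MonotoneOn (quantile μ) (Set.Ioo 0 1) := by
  intro s hs t ht hst
  exact csInf_le_csInf (cdf_bddBelow μ hs.1) (cdf_nonempty μ ht.2)
    (fun x hx => le_trans hst hx)

lemma quantile_aemeasurable (μ : Measure ℝ) [IsProbabilityMeasure μ] :
    AEMeasurable (quantile μ) (volume.restrict (Set.Ioo 0 1)) :=
  aemeasurable_restrict_of_monotoneOn measurableSet_Ioo (quantile_monotoneOn μ)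

instance : IsProbabilityMeasure (volume.restrict (Set.Ioo (0:ℝ) 1)) := by
  constructor
  simp [Real.volume_Ioo]

/-- Inverse transform sampling. -/
lemma map_quantile (μ : Measure ℝ) [IsProbabilityMeasure μ] :
    (volume.restrict (Set.Ioo (0:ℝ) 1)).map (quantile μ) = μ := by
  have hae := quantile_aemeasurable μ
  have hprob : IsProbabilityMeasure ((volume.restrict (Set.Ioo (0:ℝ) 1)).map (quantile μ)) :=
    Measure.isProbabilityMeasure_map hae
  refine MeasureTheory.Measure.ext_of_Iic _ _ (fun x => ?_)
  rw [Measure.map_apply_of_aemeasurable hae measurableSet_Iic,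
    Measure.restrict_apply₀' measurableSet_Ioo.nullMeasurableSet]
  have hset : quantile μ ⁻¹' Set.Iic x ∩ Set.Ioo 0 1
      = Set.Iic (cdf μ x) ∩ Set.Ioo 0 1 := by
    ext t
    simp only [mem_inter_iff, mem_preimage, mem_Iic, mem_Ioo, and_congr_left_iff]
    intro ht
    rw [quantile_le_iff μ ht.1 ht.2]
  rw [hset]
  have h0 : 0 ≤ cdf μ x := cdf_nonneg μ x
  have h1 : cdf μ x ≤ 1 := cdf_le_one μ x
  rw [← ofReal_cdf μ x]
  rcases lt_or_eq_of_le h1 with h1' | h1'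
  · have : Set.Iic (cdf μ x) ∩ Set.Ioo (0:ℝ) 1 = Set.Ioc 0 (cdf μ x) := by
      ext t
      simp only [mem_inter_iff, mem_Iic, mem_Ioo, mem_Ioc]
      exact ⟨fun h => ⟨h.2.1, h.1⟩, fun h => ⟨h.2, h.1, lt_of_le_of_lt h.2 h1'⟩⟩
    rw [this, Real.volume_Ioc, sub_zero]
  · have : Set.Iic (cdf μ x) ∩ Set.Ioo (0:ℝ) 1 = Set.Ioo 0 1 := by
      ext t
      simp only [mem_inter_iff, mem_Iic, mem_Ioo]
      exact ⟨fun h => h.2, fun h => ⟨le_of_lt (h1' ▸ h.2), h⟩⟩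
    rw [this, Real.volume_Ioo, sub_zero, h1']


instance instProbRestr : IsProbabilityMeasure (volume.restrict (Set.Ioo (0:ℝ) 1)) := by
  constructor
  simp [Real.volume_Ioo]

lemma slice_Ioc (a b : ℝ) (h0 : 0 ≤ a) (h1 : b ≤ 1) :
    (volume.restrict (Set.Ioo (0:ℝ) 1)) (Set.Ioc a b) = ENNReal.ofReal (b - a) := by
  rw [Measure.restrict_apply₀' measurableSet_Ioo.nullMeasurableSet]
  rcases le_or_gt b a with hba | hab
  · rw [Set.Ioc_eq_empty (not_lt.mpr hba), Set.empty_inter, measure_empty,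
      Eq.comm, ENNReal.ofReal_eq_zero]
    linarith
  · refine le_antisymm ?_ ?_
    · calc volume (Set.Ioc a b ∩ Set.Ioo 0 1) ≤ volume (Set.Ioc a b) :=
            measure_mono inter_subset_left
        _ = ENNReal.ofReal (b - a) := by rw [Real.volume_Ioc]
    · calc ENNReal.ofReal (b - a) = volume (Set.Ioo a b) := (Real.volume_Ioo).symm
        _ ≤ volume (Set.Ioc a b ∩ Set.Ioo 0 1) := by
            refine measure_mono (fun t ht => ⟨⟨ht.1, ht.2.le⟩,
              lt_of_le_of_lt h0 ht.1, lt_of_lt_of_le ht.2 h1⟩)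

/-- Key Fubini identity: the area between cdf graphs equals the area between quantiles. -/
lemma lint_quantile_sub_eq (μ ν : Measure ℝ) [IsProbabilityMeasure μ] [IsProbabilityMeasure ν] :
    ∫⁻ t in Set.Ioo (0:ℝ) 1, ENNReal.ofReal (quantile μ t - quantile ν t) =
      ∫⁻ x, ENNReal.ofReal (cdf ν x - cdf μ x) := by
  set S : Set (ℝ × ℝ) := {p | cdf μ p.1 < p.2 ∧ p.2 ≤ cdf ν p.1} with hSdef
  have hSm : MeasurableSet S :=
    (measurableSet_lt ((cdf_measurable μ).comp measurable_fst) measurable_snd).inter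
      (measurableSet_le measurable_snd ((cdf_measurable ν).comp measurable_fst))
  have h1 : (volume.prod (volume.restrict (Set.Ioo (0:ℝ) 1))) S
      = ∫⁻ x, ENNReal.ofReal (cdf ν x - cdf μ x) := by
    rw [Measure.prod_apply hSm]
    congr 1
    funext x
    have hpre : Prod.mk x ⁻¹' S = Set.Ioc (cdf μ x) (cdf ν x) := by
      ext t
      simp only [hSdef, mem_preimage, mem_setOf_eq, Set.mem_Ioc]
    rw [hpre, slice_Ioc _ _ (cdf_nonneg μ x) (cdf_le_one ν x)]
  have h2 : (volume.prod (volume.restrict (Set.Ioo (0:ℝ) 1))) S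
      = ∫⁻ t in Set.Ioo (0:ℝ) 1, ENNReal.ofReal (quantile μ t - quantile ν t) := by
    rw [Measure.prod_apply_symm hSm]
    refine setLIntegral_congr_fun measurableSet_Ioo ?_
    intro t ht
    have hpre : ((fun x => (x, t)) ⁻¹' S) = Set.Ico (quantile ν t) (quantile μ t) := by
      ext x
      simp only [hSdef, mem_preimage, mem_setOf_eq, Set.mem_Ico]
      rw [← not_le, ← not_le, ← quantile_le_iff μ ht.1 ht.2, ← quantile_le_iff ν ht.1 ht.2,
        not_le, and_comm]
    beta_reduce
    rw [hpre, Real.volume_Ico]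
  rw [← h1, h2]

lemma ofReal_abs_sub (a b : ℝ) :
    ENNReal.ofReal |a - b| = ENNReal.ofReal (a - b) + ENNReal.ofReal (b - a) := by
  rcases le_total a b with h | h
  · rw [abs_of_nonpos (by linarith), ENNReal.ofReal_eq_zero.mpr (by linarith : a - b ≤ 0),
      zero_add, neg_sub]
  · rw [abs_of_nonneg (by linarith), ENNReal.ofReal_eq_zero.mpr (by linarith : b - a ≤ 0),
      add_zero]

lemma lint_quantile_abs_eq (μ ν : Measure ℝ) [IsProbabilityMeasure μ] [IsProbabilityMeasure ν] :
    ∫⁻ t in Set.Ioo (0:ℝ) 1, ENNReal.ofReal |quantile μ t - quantile ν t| =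
      ∫⁻ x, ENNReal.ofReal |cdf μ x - cdf ν x| := by
  have hq : ∀ t, ENNReal.ofReal |quantile μ t - quantile ν t|
      = ENNReal.ofReal (quantile μ t - quantile ν t)
        + ENNReal.ofReal (quantile ν t - quantile μ t) := fun t => ofReal_abs_sub _ _
  have hc : ∀ x, ENNReal.ofReal |cdf μ x - cdf ν x|
      = ENNReal.ofReal (cdf ν x - cdf μ x) + ENNReal.ofReal (cdf μ x - cdf ν x) := by
    intro x
    rw [ofReal_abs_sub]
    exact add_comm _ _
  simp_rw [hq, hc]
  rw [lintegral_add_left' (f := fun t => ENNReal.ofReal (quantile μ t - quantile ν t)) (((quantile_aemeasurable μ).sub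
      (quantile_aemeasurable ν)).ennreal_ofReal),
    lintegral_add_left' (f := fun x => ENNReal.ofReal (cdf ν x - cdf μ x)) ((((cdf_measurable ν).sub (cdf_measurable μ)).ennreal_ofReal).aemeasurable),
    lint_quantile_sub_eq μ ν, lint_quantile_sub_eq ν μ]

/-- The transport cost infimum, in `ℝ≥0∞`. -/
noncomputable def eW (μ ν : Measure ℝ) : ℝ≥0∞ :=
  ⨅ γ ∈ Couplings μ ν, ∫⁻ p, edist p.1 p.2 ∂γ

/-- Lower bound: the L¹ distance of cdfs is below any transport cost. -/
lemma lint_cdf_abs_le_eW (μ ν : Measure ℝ) [IsProbabilityMeasure μ] [IsProbabilityMeasure ν] :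
    ∫⁻ x, ENNReal.ofReal |cdf μ x - cdf ν x| ≤ eW μ ν := by
  refine le_iInf₂ (fun γ hγ => ?_)
  obtain ⟨hγp, hfst, hsnd⟩ := hγ
  set B : ℝ → Set (ℝ × ℝ) := fun t => {p | min p.1 p.2 ≤ t ∧ t < max p.1 p.2} with hBdef
  have step1 : ∀ t, ENNReal.ofReal |cdf μ t - cdf ν t| ≤ γ (B t) := by
    intro t
    have hμt : cdf μ t = (γ {p : ℝ × ℝ | p.1 ≤ t}).toReal := by
      rw [cdf, ← hfst, Measure.map_apply measurable_fst measurableSet_Iic]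
      rfl
    have hνt : cdf ν t = (γ {p : ℝ × ℝ | p.2 ≤ t}).toReal := by
      rw [cdf, ← hsnd, Measure.map_apply measurable_snd measurableSet_Iic]
      rfl
    have key : ∀ (A C : Set (ℝ × ℝ)), A ⊆ C ∪ B t → γ A ≤ γ C + γ (B t) :=
      fun A C hsub => le_trans (measure_mono hsub) (measure_union_le _ _)
    have h1 : γ {p : ℝ × ℝ | p.1 ≤ t} ≤ γ {p : ℝ × ℝ | p.2 ≤ t} + γ (B t) := by
      refine key _ _ (fun p hp => ?_)
      rcases le_or_gt p.2 t with h | h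
      · exact Or.inl h
      · exact Or.inr ⟨min_le_of_left_le hp, lt_max_of_lt_right h⟩
    have h2 : γ {p : ℝ × ℝ | p.2 ≤ t} ≤ γ {p : ℝ × ℝ | p.1 ≤ t} + γ (B t) := by
      refine key _ _ (fun p hp => ?_)
      rcases le_or_gt p.1 t with h | h
      · exact Or.inl h
      · exact Or.inr ⟨min_le_of_right_le hp, lt_max_of_lt_left h⟩
    have hfin : ∀ s : Set (ℝ × ℝ), γ s ≠ ⊤ := fun s => measure_ne_top γ s
    have h1' : cdf μ t - cdf ν t ≤ (γ (B t)).toReal := by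
      rw [hμt, hνt, sub_le_iff_le_add, ← ENNReal.toReal_add (hfin _) (hfin _)]
      exact ENNReal.toReal_mono (by finiteness) (h1.trans (le_of_eq (add_comm _ _)))
    have h2' : cdf ν t - cdf μ t ≤ (γ (B t)).toReal := by
      rw [hμt, hνt, sub_le_iff_le_add, ← ENNReal.toReal_add (hfin _) (hfin _)]
      exact ENNReal.toReal_mono (by finiteness) (h2.trans (le_of_eq (add_comm _ _)))
    calc ENNReal.ofReal |cdf μ t - cdf ν t| ≤ ENNReal.ofReal ((γ (B t)).toReal) := by
          refine ENNReal.ofReal_le_ofReal (abs_le.mpr ⟨by linarith, h1'⟩)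
      _ = γ (B t) := ENNReal.ofReal_toReal (hfin _)
  have step2 : ∫⁻ t, γ (B t) = ∫⁻ p, edist p.1 p.2 ∂γ := by
    set S : Set (ℝ × (ℝ × ℝ)) :=
      {q | min q.2.1 q.2.2 ≤ q.1 ∧ q.1 < max q.2.1 q.2.2} with hSdef
    have hSm : MeasurableSet S := by
      refine MeasurableSet.inter ?_ ?_
      · exact measurableSet_le
          ((measurable_fst.comp measurable_snd).min (measurable_snd.comp measurable_snd))
          measurable_fst
      · exact measurableSet_lt measurable_fst
          ((measurable_fst.comp measurable_snd).max (measurable_snd.comp measurable_snd))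
    have hA : (volume.prod γ) S = ∫⁻ t, γ (B t) := by
      rw [Measure.prod_apply hSm]
      rfl
    have hB : (volume.prod γ) S = ∫⁻ p, edist p.1 p.2 ∂γ := by
      rw [Measure.prod_apply_symm hSm]
      congr 1
      funext p
      have hpre : ((fun t => (t, p)) ⁻¹' S) = Set.Ico (min p.1 p.2) (max p.1 p.2) := rfl
      rw [hpre, Real.volume_Ico, max_sub_min_eq_abs, edist_dist, Real.dist_eq, abs_sub_comm]
    rw [← hA, hB]
  calc ∫⁻ x, ENNReal.ofReal |cdf μ x - cdf ν x| ≤ ∫⁻ t, γ (B t) := lintegral_mono step1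
    _ = ∫⁻ p, edist p.1 p.2 ∂γ := step2

/-- Upper bound: the monotone (quantile) coupling. -/
lemma eW_le_lint_quantile (μ ν : Measure ℝ) [IsProbabilityMeasure μ] [IsProbabilityMeasure ν] :
    eW μ ν ≤ ∫⁻ t in Set.Ioo (0:ℝ) 1, ENNReal.ofReal |quantile μ t - quantile ν t| := by
  set m := volume.restrict (Set.Ioo (0:ℝ) 1)
  have haeμ := quantile_aemeasurable μ
  have haeν := quantile_aemeasurable ν
  have haep : AEMeasurable (fun t => (quantile μ t, quantile ν t)) m := haeμ.prodMk haeν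
  set γ : Measure (ℝ × ℝ) := m.map (fun t => (quantile μ t, quantile ν t)) with hγdef
  have hγmem : γ ∈ Couplings μ ν := by
    refine ⟨Measure.isProbabilityMeasure_map haep, ?_, ?_⟩
    · rw [hγdef, AEMeasurable.map_map_of_aemeasurable measurable_fst.aemeasurable haep]
      exact map_quantile μ
    · rw [hγdef, AEMeasurable.map_map_of_aemeasurable measurable_snd.aemeasurable haep]
      exact map_quantile ν
  have hcost : ∫⁻ p, edist p.1 p.2 ∂γ
      = ∫⁻ t in Set.Ioo (0:ℝ) 1, ENNReal.ofReal |quantile μ t - quantile ν t| := by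
    rw [hγdef, lintegral_map' (measurable_edist.aemeasurable) haep]
    congr 1
    funext t
    rw [edist_dist, Real.dist_eq]
  exact le_trans (iInf₂_le γ hγmem) (le_of_eq hcost)

/-- Finiteness of the optimal cost for measures in `P1`. -/
lemma eW_ne_top {μ ν : Measure ℝ} (hμ : μ ∈ P1 ℝ) (hν : ν ∈ P1 ℝ) : eW μ ν ≠ ⊤ := by
  obtain ⟨hμp, hμi⟩ := hμ
  obtain ⟨hνp, hνi⟩ := hν
  haveI := hμp; haveI := hνp
  have hmem : μ.prod ν ∈ Couplings μ ν := by
    refine ⟨inferInstance, ?_, ?_⟩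
    · rw [Measure.map_fst_prod]; simp
    · rw [Measure.map_snd_prod]; simp
  have hcost : ∫⁻ p : ℝ × ℝ, edist p.1 p.2 ∂(μ.prod ν) < ⊤ := by
    have hbound : ∀ p : ℝ × ℝ, edist p.1 p.2 ≤ edist p.1 0 + edist 0 p.2 :=
      fun p => edist_triangle _ _ _
    have hfin1 : ∫⁻ x, edist x 0 ∂μ < ⊤ := by
      have h := (hasFiniteIntegral_iff_ofReal
        (Filter.Eventually.of_forall (fun x => dist_nonneg))).mp (hμi 0).2
      refine lt_of_le_of_lt (le_of_eq ?_) h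
      congr 1
      funext x
      rw [edist_dist, dist_comm]
    have hfin2 : ∫⁻ y, edist 0 y ∂ν < ⊤ := by
      have h := (hasFiniteIntegral_iff_ofReal
        (Filter.Eventually.of_forall (fun x => dist_nonneg))).mp (hνi 0).2
      refine lt_of_le_of_lt (le_of_eq ?_) h
      congr 1
      funext x
      rw [edist_dist, dist_comm, dist_comm x 0]
    calc ∫⁻ p : ℝ × ℝ, edist p.1 p.2 ∂(μ.prod ν)
        ≤ ∫⁻ p : ℝ × ℝ, (edist p.1 0 + edist 0 p.2) ∂(μ.prod ν) := lintegral_mono hbound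
      _ = ∫⁻ p : ℝ × ℝ, edist p.1 0 ∂(μ.prod ν) + ∫⁻ p : ℝ × ℝ, edist 0 p.2 ∂(μ.prod ν) :=
          lintegral_add_left' ((measurable_edist.comp
            (measurable_fst.prodMk measurable_const)).aemeasurable) _
      _ < ⊤ := by
          have e1 : ∫⁻ p : ℝ × ℝ, edist p.1 0 ∂(μ.prod ν) = ∫⁻ x, edist x 0 ∂μ := by
            have := lintegral_map (μ := μ.prod ν) (g := Prod.fst)
              (f := fun x : ℝ => edist x 0)
              (measurable_edist.comp (measurable_id.prodMk measurable_const)) measurable_fst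
            rw [← this, Measure.map_fst_prod]
            simp
          have e2 : ∫⁻ p : ℝ × ℝ, edist 0 p.2 ∂(μ.prod ν) = ∫⁻ y, edist 0 y ∂ν := by
            have := lintegral_map (μ := μ.prod ν) (g := Prod.snd)
              (f := fun y : ℝ => edist 0 y)
              (measurable_edist.comp (measurable_const.prodMk measurable_id)) measurable_snd
            rw [← this, Measure.map_snd_prod]
            simp
          rw [e1, e2]
          exact ENNReal.add_lt_top.mpr ⟨hfin1, hfin2⟩
  exact ne_top_of_le_ne_top hcost.ne (iInf₂_le _ hmem)


variable {N : ℕ} {l : Fin N → ℝ}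

lemma mMinus_nonempty [Nonempty (Fin N)] (hl : memSimplex l) (a : Fin N → ℝ) :
    {y : ℝ | 1 / 2 ≤ sumWeightLe l a y}.Nonempty := by
  refine ⟨Finset.univ.sup' Finset.univ_nonempty a, ?_⟩
  have : Finset.univ.filter (fun i => a i ≤ Finset.univ.sup' Finset.univ_nonempty a)
      = Finset.univ := by
    refine Finset.filter_true_of_mem (fun i _ => Finset.le_sup' a (Finset.mem_univ i))
  simp only [mem_setOf_eq, sumWeightLe, this, hl.2]
  norm_num

lemma mMinus_bddBelow [Nonempty (Fin N)] (hl : memSimplex l) (a : Fin N → ℝ) :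
    BddBelow {y : ℝ | 1 / 2 ≤ sumWeightLe l a y} := by
  refine ⟨Finset.univ.inf' Finset.univ_nonempty a, fun y hy => ?_⟩
  by_contra hc
  push_neg at hc
  have hempty : Finset.univ.filter (fun i => a i ≤ y) = ∅ := by
    refine Finset.filter_false_of_mem (fun i _ => ?_)
    push_neg
    exact lt_of_lt_of_le hc (Finset.inf'_le a (Finset.mem_univ i))
  rw [mem_setOf_eq, sumWeightLe, hempty, Finset.sum_empty] at hy
  linarith

lemma mPlus_nonempty [Nonempty (Fin N)] (hl : memSimplex l) (a : Fin N → ℝ) :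
    {y : ℝ | sumWeightLt l a y ≤ 1 / 2}.Nonempty := by
  refine ⟨Finset.univ.inf' Finset.univ_nonempty a, ?_⟩
  have hempty : Finset.univ.filter
      (fun i => a i < Finset.univ.inf' Finset.univ_nonempty a) = ∅ := by
    refine Finset.filter_false_of_mem (fun i _ => ?_)
    exact not_lt.mpr (Finset.inf'_le a (Finset.mem_univ i))
  simp only [mem_setOf_eq, sumWeightLt, hempty, Finset.sum_empty]
  norm_num

lemma mPlus_bddAbove [Nonempty (Fin N)] (hl : memSimplex l) (a : Fin N → ℝ) :
    BddAbove {y : ℝ | sumWeightLt l a y ≤ 1 / 2} := by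
  refine ⟨Finset.univ.sup' Finset.univ_nonempty a + 1, fun y hy => ?_⟩
  by_contra hc
  push_neg at hc
  have hfull : Finset.univ.filter (fun i => a i < y) = Finset.univ := by
    refine Finset.filter_true_of_mem (fun i _ => ?_)
    have := Finset.le_sup' a (Finset.mem_univ i)
    linarith
  rw [mem_setOf_eq, sumWeightLt, hfull, hl.2] at hy
  linarith

lemma mMinus_le_add (hN : 1 ≤ N) (hl : memSimplex l) (a b : Fin N → ℝ) {ε : ℝ}
    (hab : ∀ i, a i ≤ b i + ε) : mMinus l a ≤ mMinus l b + ε := by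
  haveI : Nonempty (Fin N) := ⟨⟨0, hN⟩⟩
  rw [mMinus, mMinus, ← sub_le_iff_le_add]
  refine le_csInf (mMinus_nonempty hl b) (fun y hy => ?_)
  rw [sub_le_iff_le_add]
  refine csInf_le (mMinus_bddBelow hl a) ?_
  rw [mem_setOf_eq]
  refine le_trans hy ?_
  refine Finset.sum_le_sum_of_subset_of_nonneg ?_ (fun i _ _ => hl.1 i)
  intro i hi
  simp only [Finset.mem_filter, Finset.mem_univ, true_and] at hi ⊢
  calc a i ≤ b i + ε := hab i
    _ ≤ y + ε := by linarith

lemma mPlus_le_add (hN : 1 ≤ N) (hl : memSimplex l) (a b : Fin N → ℝ) {ε : ℝ}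
    (hab : ∀ i, a i ≤ b i + ε) : mPlus l a ≤ mPlus l b + ε := by
  haveI : Nonempty (Fin N) := ⟨⟨0, hN⟩⟩
  rw [mPlus, mPlus]
  refine csSup_le (mPlus_nonempty hl a) (fun y hy => ?_)
  rw [← sub_le_iff_le_add]
  refine le_csSup (mPlus_bddAbove hl b) ?_
  rw [mem_setOf_eq] at hy ⊢
  refine le_trans ?_ hy
  refine Finset.sum_le_sum_of_subset_of_nonneg ?_ (fun i _ _ => hl.1 i)
  intro i hi
  simp only [Finset.mem_filter, Finset.mem_univ, true_and] at hi ⊢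
  calc a i ≤ b i + ε := hab i
    _ < y := by linarith

/-- Lipschitz stability of the (θ-interpolated) weighted median selection. -/
lemma medSel_abs_le (hN : 1 ≤ N) (hl : memSimplex l) {θ : ℝ} (hθ : θ ∈ Set.Icc (0:ℝ) 1)
    (a b : Fin N → ℝ) {ε : ℝ} (hε : ∀ i, |a i - b i| ≤ ε) :
    |((1 - θ) * mMinus l a + θ * mPlus l a) - ((1 - θ) * mMinus l b + θ * mPlus l b)| ≤ ε := by
  have hab : ∀ i, a i ≤ b i + ε := fun i => by
    have := (abs_le.mp (hε i)).2; linarith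
  have hba : ∀ i, b i ≤ a i + ε := fun i => by
    have := (abs_le.mp (hε i)).1; linarith
  have h1 := mMinus_le_add hN hl a b hab
  have h2 := mMinus_le_add hN hl b a hba
  have h3 := mPlus_le_add hN hl a b hab
  have h4 := mPlus_le_add hN hl b a hba
  have hε0 : 0 ≤ ε := le_trans (abs_nonneg _) (hε ⟨0, hN⟩)
  obtain ⟨hθ0, hθ1⟩ := hθ
  rw [abs_le]
  constructor <;> nlinarith


end WMed

open WMed

/-- Lipschitz stability of the vertical and horizontal median
selections: if `V` (resp. `V'`) is the vertical selection of `ν` (resp. `ν'`), i.e. the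
probability measure whose cdf is `(1−θ)F⁻ + θF⁺` with
`F^±(x) = m^±_λ(F_{ν₁}(x),…,F_{ν_N}(x))`, and `H` (resp. `H'`) is the horizontal
selection, i.e. the probability measure whose quantile function is `(1−θ)Q⁻ + θQ⁺`,
then `W₁(V, V') ≤ ∑ᵢ W₁(νᵢ, νᵢ')` and `W₁(H, H') ≤ ∑ᵢ W₁(νᵢ, νᵢ')`. -/
theorem median_selections_lipschitz_stability
    {N : ℕ} (hN : 1 ≤ N) {l : Fin N → ℝ} (hl : memSimplex l)
    {ν ν' : Fin N → Measure ℝ} (hν : ∀ i, ν i ∈ P1 ℝ) (hν' : ∀ i, ν' i ∈ P1 ℝ)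
    {θ : ℝ} (hθ : θ ∈ Set.Icc (0 : ℝ) 1)
    {V V'ₘ : Measure ℝ} (hV : IsProbabilityMeasure V) (hV' : IsProbabilityMeasure V'ₘ)
    (hVcdf : ∀ x : ℝ, cdf V x =
      (1 - θ) * mMinus l (fun i => cdf (ν i) x) + θ * mPlus l (fun i => cdf (ν i) x))
    (hV'cdf : ∀ x : ℝ, cdf V'ₘ x =
      (1 - θ) * mMinus l (fun i => cdf (ν' i) x) + θ * mPlus l (fun i => cdf (ν' i) x))
    {H H'ₘ : Measure ℝ} (hH : IsProbabilityMeasure H) (hH' : IsProbabilityMeasure H'ₘ)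
    (hHq : ∀ t ∈ Set.Ioo (0 : ℝ) 1, quantile H t =
      (1 - θ) * mMinus l (fun i => quantile (ν i) t) +
        θ * mPlus l (fun i => quantile (ν i) t))
    (hH'q : ∀ t ∈ Set.Ioo (0 : ℝ) 1, quantile H'ₘ t =
      (1 - θ) * mMinus l (fun i => quantile (ν' i) t) +
        θ * mPlus l (fun i => quantile (ν' i) t)) :
    W1 V V'ₘ ≤ ∑ i, W1 (ν i) (ν' i) ∧ W1 H H'ₘ ≤ ∑ i, W1 (ν i) (ν' i) := by
  have hνp : ∀ i, IsProbabilityMeasure (ν i) := fun i => (hν i).1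
  have hν'p : ∀ i, IsProbabilityMeasure (ν' i) := fun i => (hν' i).1
  have hfin : ∀ i ∈ Finset.univ, eW (ν i) (ν' i) ≠ ⊤ := fun i _ => eW_ne_top (hν i) (hν' i)
  have hsumfin : (∑ i, eW (ν i) (ν' i)) ≠ ⊤ := by
    rw [← lt_top_iff_ne_top]
    exact ENNReal.sum_lt_top.mpr (fun i hi => lt_top_iff_ne_top.mpr (hfin i hi))
  have hsum_le : ∀ i, ∀ (f g : Fin N → ℝ), |f i - g i| ≤ ∑ j, |f j - g j| := by
    intro i f g
    exact Finset.single_le_sum (f := fun j => |f j - g j|) (fun j _ => abs_nonneg _)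
      (Finset.mem_univ i)
  have hlast : ∑ i, ∫⁻ x, ENNReal.ofReal |cdf (ν i) x - cdf (ν' i) x|
      ≤ ∑ i, eW (ν i) (ν' i) := by
    refine Finset.sum_le_sum (fun i _ => ?_)
    haveI := hνp i; haveI := hν'p i
    exact lint_cdf_abs_le_eW (ν i) (ν' i)
  have hconv : ∀ (A B : ℝ≥0∞), A ≤ B → (A.toReal ≤ ∑ i, W1 (ν i) (ν' i)) ∨ True := fun _ _ _ => Or.inr trivial
  have htoReal : ∀ A : ℝ≥0∞, A ≤ ∑ i, eW (ν i) (ν' i) →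
      A.toReal ≤ ∑ i, W1 (ν i) (ν' i) := by
    intro A hA
    have h1 : A.toReal ≤ (∑ i, eW (ν i) (ν' i)).toReal := ENNReal.toReal_mono hsumfin hA
    rw [ENNReal.toReal_sum hfin] at h1
    exact h1
  constructor
  · -- vertical selection
    have hVpt : ∀ x, |cdf V x - cdf V'ₘ x| ≤ ∑ i, |cdf (ν i) x - cdf (ν' i) x| := by
      intro x
      rw [hVcdf x, hV'cdf x]
      exact medSel_abs_le hN hl hθ _ _
        (fun i => hsum_le i (fun j => cdf (ν j) x) (fun j => cdf (ν' j) x))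
    have chainV : eW V V'ₘ ≤ ∑ i, eW (ν i) (ν' i) := by
      calc eW V V'ₘ
          ≤ ∫⁻ t in Set.Ioo (0:ℝ) 1, ENNReal.ofReal |quantile V t - quantile V'ₘ t| :=
            eW_le_lint_quantile V V'ₘ
        _ = ∫⁻ x, ENNReal.ofReal |cdf V x - cdf V'ₘ x| := lint_quantile_abs_eq V V'ₘ
        _ ≤ ∫⁻ x, ∑ i, ENNReal.ofReal |cdf (ν i) x - cdf (ν' i) x| := by
            refine lintegral_mono (fun x => ?_)
            calc ENNReal.ofReal |cdf V x - cdf V'ₘ x|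
                ≤ ENNReal.ofReal (∑ i, |cdf (ν i) x - cdf (ν' i) x|) :=
                  ENNReal.ofReal_le_ofReal (hVpt x)
              _ = ∑ i, ENNReal.ofReal |cdf (ν i) x - cdf (ν' i) x| :=
                  ENNReal.ofReal_sum_of_nonneg (fun i _ => abs_nonneg _)
        _ = ∑ i, ∫⁻ x, ENNReal.ofReal |cdf (ν i) x - cdf (ν' i) x| := by
            refine lintegral_finset_sum' _ (fun i _ => ?_)
            haveI := hνp i; haveI := hν'p i
            exact (((cdf_measurable (ν i)).sub (cdf_measurable (ν' i))).abs.ennreal_ofReal).aemeasurable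
        _ ≤ ∑ i, eW (ν i) (ν' i) := hlast
    exact htoReal _ chainV
  · -- horizontal selection
    have chainH : eW H H'ₘ ≤ ∑ i, eW (ν i) (ν' i) := by
      calc eW H H'ₘ
          ≤ ∫⁻ t in Set.Ioo (0:ℝ) 1, ENNReal.ofReal |quantile H t - quantile H'ₘ t| :=
            eW_le_lint_quantile H H'ₘ
        _ ≤ ∫⁻ t in Set.Ioo (0:ℝ) 1,
              ∑ i, ENNReal.ofReal |quantile (ν i) t - quantile (ν' i) t| := by
            refine lintegral_mono_ae ?_
            filter_upwards [ae_restrict_mem measurableSet_Ioo] with t ht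
            have hpt : |quantile H t - quantile H'ₘ t|
                ≤ ∑ i, |quantile (ν i) t - quantile (ν' i) t| := by
              rw [hHq t ht, hH'q t ht]
              exact medSel_abs_le hN hl hθ _ _
                (fun i => hsum_le i (fun j => quantile (ν j) t) (fun j => quantile (ν' j) t))
            calc ENNReal.ofReal |quantile H t - quantile H'ₘ t|
                ≤ ENNReal.ofReal (∑ i, |quantile (ν i) t - quantile (ν' i) t|) :=
                  ENNReal.ofReal_le_ofReal hpt
              _ = ∑ i, ENNReal.ofReal |quantile (ν i) t - quantile (ν' i) t| :=
                  ENNReal.ofReal_sum_of_nonneg (fun i _ => abs_nonneg _)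
        _ = ∑ i, ∫⁻ t in Set.Ioo (0:ℝ) 1,
              ENNReal.ofReal |quantile (ν i) t - quantile (ν' i) t| := by
            refine lintegral_finset_sum' _ (fun i _ => ?_)
            haveI := hνp i; haveI := hν'p i
            exact ENNReal.measurable_ofReal.comp_aemeasurable
              (measurable_abs.comp_aemeasurable
                ((quantile_aemeasurable (ν i)).sub (quantile_aemeasurable (ν' i))))
        _ = ∑ i, ∫⁻ x, ENNReal.ofReal |cdf (ν i) x - cdf (ν' i) x| := by
            refine Finset.sum_congr rfl (fun i _ => ?_)
            haveI := hνp i; haveI := hν'p i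
            exact lint_quantile_abs_eq (ν i) (ν' i)
        _ ≤ ∑ i, eW (ν i) (ν' i) := hlast
    exact htoReal _ chainH
end

section
/- Let λ ∈ Δ_N, ν = (ν₁,…,ν_N) ∈ 𝒫₁(ℝ)^N, θ ∈ [0,1], and let ν^θ := VMed_λ(θ,ν) and μ^θ := HMed_λ(θ,ν). Then: (1) if ν₁,…,ν_N are all atomless, so are ν^θ and μ^θ; (2) if ν₁,…,ν_N all have connected supports, then μ^θ has connected support. -/
open MeasureTheory Filter Topology
open scoped ENNReal NNReal

/-- The (topological) support of a measure: points all of whose neighbourhoods have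
positive measure. -/
def msupport {X : Type*} [TopologicalSpace X] [MeasurableSpace X] (μ : Measure X) :
    Set X :=
  {x : X | ∀ U ∈ nhds x, μ U ≠ 0}


open Set

section med
variable {N : ℕ}

lemma finNonempty (hN : 1 ≤ N) : Nonempty (Fin N) := ⟨⟨0, hN⟩⟩

lemma MS_nonempty (hN : 1 ≤ N) {l : Fin N → ℝ} (hl : memSimplex l) (x : Fin N → ℝ) :
    {y : ℝ | 1 / 2 ≤ sumWeightLe l x y}.Nonempty := by
  have : Nonempty (Fin N) := finNonempty hN
  refine ⟨Finset.univ.sup' Finset.univ_nonempty x, ?_⟩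
  have h : Finset.univ.filter (fun i => x i ≤ Finset.univ.sup' Finset.univ_nonempty x)
      = Finset.univ := by
    apply Finset.filter_true_of_mem
    intro i _
    exact Finset.le_sup' x (Finset.mem_univ i)
  simp only [Set.mem_setOf_eq, sumWeightLe, h]
  rw [hl.2]; norm_num

lemma MS_bddBelow (hN : 1 ≤ N) {l : Fin N → ℝ} (x : Fin N → ℝ) :
    BddBelow {y : ℝ | 1 / 2 ≤ sumWeightLe l x y} := by
  have : Nonempty (Fin N) := finNonempty hN
  refine ⟨Finset.univ.inf' Finset.univ_nonempty x - 1, ?_⟩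
  intro y hy
  by_contra hc
  push_neg at hc
  have h : Finset.univ.filter (fun i => x i ≤ y) = ∅ := by
    apply Finset.filter_false_of_mem
    intro i _
    have := Finset.inf'_le x (Finset.mem_univ i)
    push_neg
    linarith
  simp only [Set.mem_setOf_eq, sumWeightLe, h, Finset.sum_empty] at hy
  linarith

lemma MT_nonempty (hN : 1 ≤ N) {l : Fin N → ℝ} (x : Fin N → ℝ) :
    {y : ℝ | sumWeightLt l x y ≤ 1 / 2}.Nonempty := by
  have : Nonempty (Fin N) := finNonempty hN
  refine ⟨Finset.univ.inf' Finset.univ_nonempty x, ?_⟩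
  have h : Finset.univ.filter (fun i => x i < Finset.univ.inf' Finset.univ_nonempty x)
      = ∅ := by
    apply Finset.filter_false_of_mem
    intro i _
    exact not_lt.2 (Finset.inf'_le x (Finset.mem_univ i))
  simp only [Set.mem_setOf_eq, sumWeightLt, h, Finset.sum_empty]
  norm_num

lemma MT_bddAbove (hN : 1 ≤ N) {l : Fin N → ℝ} (hl : memSimplex l) (x : Fin N → ℝ) :
    BddAbove {y : ℝ | sumWeightLt l x y ≤ 1 / 2} := by
  have : Nonempty (Fin N) := finNonempty hN
  refine ⟨Finset.univ.sup' Finset.univ_nonempty x, ?_⟩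
  intro y hy
  by_contra hc
  push_neg at hc
  have h : Finset.univ.filter (fun i => x i < y) = Finset.univ := by
    apply Finset.filter_true_of_mem
    intro i _
    exact lt_of_le_of_lt (Finset.le_sup' x (Finset.mem_univ i)) hc
  simp only [Set.mem_setOf_eq, sumWeightLt, h] at hy
  rw [hl.2] at hy
  linarith

lemma mMinus_mono (hN : 1 ≤ N) {l : Fin N → ℝ} (hl : memSimplex l) {x x' : Fin N → ℝ}
    (h : ∀ i, x i ≤ x' i) : mMinus l x ≤ mMinus l x' := by
  apply csInf_le_csInf (MS_bddBelow hN x) (MS_nonempty hN hl x')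
  intro y hy
  simp only [Set.mem_setOf_eq, sumWeightLe] at hy ⊢
  refine le_trans hy ?_
  apply Finset.sum_le_sum_of_subset_of_nonneg
  · intro i hi
    simp only [Finset.mem_filter, Finset.mem_univ, true_and] at hi ⊢
    exact le_trans (h i) hi
  · intro i _ _; exact hl.1 i

lemma mPlus_mono (hN : 1 ≤ N) {l : Fin N → ℝ} (hl : memSimplex l) {x x' : Fin N → ℝ}
    (h : ∀ i, x i ≤ x' i) : mPlus l x ≤ mPlus l x' := by
  apply csSup_le_csSup (MT_bddAbove hN hl x') (MT_nonempty hN x)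
  intro y hy
  simp only [Set.mem_setOf_eq, sumWeightLt] at hy ⊢
  refine le_trans ?_ hy
  apply Finset.sum_le_sum_of_subset_of_nonneg
  · intro i hi
    simp only [Finset.mem_filter, Finset.mem_univ, true_and] at hi ⊢
    exact lt_of_le_of_lt (h i) hi
  · intro i _ _; exact hl.1 i

lemma sumWeightLe_shift {l : Fin N → ℝ} (x : Fin N → ℝ) (c y : ℝ) :
    sumWeightLe l (fun i => x i + c) y = sumWeightLe l x (y - c) := by
  unfold sumWeightLe
  congr 1
  apply Finset.filter_congr
  intro i _
  simp only [le_sub_iff_add_le]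

lemma sumWeightLt_shift {l : Fin N → ℝ} (x : Fin N → ℝ) (c y : ℝ) :
    sumWeightLt l (fun i => x i + c) y = sumWeightLt l x (y - c) := by
  unfold sumWeightLt
  congr 1
  apply Finset.filter_congr
  intro i _
  simp only [lt_sub_iff_add_lt]

lemma mMinus_add (hN : 1 ≤ N) {l : Fin N → ℝ} (hl : memSimplex l) (x : Fin N → ℝ) (c : ℝ) :
    mMinus l (fun i => x i + c) = mMinus l x + c := by
  have hset : {y : ℝ | 1 / 2 ≤ sumWeightLe l (fun i => x i + c) y}
      = (OrderIso.addRight c) '' {y : ℝ | 1 / 2 ≤ sumWeightLe l x y} := by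
    ext y
    simp only [Set.mem_setOf_eq, Set.mem_image, OrderIso.addRight_apply,
      sumWeightLe_shift]
    constructor
    · intro h; exact ⟨y - c, h, by ring⟩
    · rintro ⟨z, hz, rfl⟩; simpa using hz
  unfold mMinus
  rw [hset, ← (OrderIso.addRight c).map_csInf' (MS_nonempty hN hl x) (MS_bddBelow hN x),
    OrderIso.addRight_apply]

lemma mPlus_add (hN : 1 ≤ N) {l : Fin N → ℝ} (hl : memSimplex l) (x : Fin N → ℝ) (c : ℝ) :
    mPlus l (fun i => x i + c) = mPlus l x + c := by
  have hset : {y : ℝ | sumWeightLt l (fun i => x i + c) y ≤ 1 / 2}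
      = (OrderIso.addRight c) '' {y : ℝ | sumWeightLt l x y ≤ 1 / 2} := by
    ext y
    simp only [Set.mem_setOf_eq, Set.mem_image, OrderIso.addRight_apply,
      sumWeightLt_shift]
    constructor
    · intro h; exact ⟨y - c, h, by ring⟩
    · rintro ⟨z, hz, rfl⟩; simpa using hz
  unfold mPlus
  rw [hset, ← (OrderIso.addRight c).map_csSup' (MT_nonempty hN x) (MT_bddAbove hN hl x),
    OrderIso.addRight_apply]

lemma mMinus_le_shift (hN : 1 ≤ N) {l : Fin N → ℝ} (hl : memSimplex l) {x x' : Fin N → ℝ}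
    {c : ℝ} (h : ∀ i, x i ≤ x' i + c) : mMinus l x ≤ mMinus l x' + c := by
  rw [← mMinus_add hN hl x' c]
  exact mMinus_mono hN hl h

lemma mPlus_le_shift (hN : 1 ≤ N) {l : Fin N → ℝ} (hl : memSimplex l) {x x' : Fin N → ℝ}
    {c : ℝ} (h : ∀ i, x i ≤ x' i + c) : mPlus l x ≤ mPlus l x' + c := by
  rw [← mPlus_add hN hl x' c]
  exact mPlus_mono hN hl h

lemma mMinus_strictMono (hN : 1 ≤ N) {l : Fin N → ℝ} (hl : memSimplex l) {x x' : Fin N → ℝ}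
    (h : ∀ i, x i < x' i) : mMinus l x < mMinus l x' := by
  have : Nonempty (Fin N) := finNonempty hN
  set ε := Finset.univ.inf' Finset.univ_nonempty (fun i => x' i - x i) with hε
  have hεpos : 0 < ε := by
    obtain ⟨i, _, hi⟩ := Finset.exists_mem_eq_inf' Finset.univ_nonempty (fun i => x' i - x i)
    rw [hε, hi]
    linarith [h i]
  have h1 : ∀ i, x i + ε ≤ x' i := by
    intro i
    have := Finset.inf'_le (fun i => x' i - x i) (Finset.mem_univ i)
    rw [← hε] at this
    linarith
  calc mMinus l x < mMinus l x + ε := by linarith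
    _ = mMinus l (fun i => x i + ε) := (mMinus_add hN hl x ε).symm
    _ ≤ mMinus l x' := mMinus_mono hN hl h1

lemma mPlus_strictMono (hN : 1 ≤ N) {l : Fin N → ℝ} (hl : memSimplex l) {x x' : Fin N → ℝ}
    (h : ∀ i, x i < x' i) : mPlus l x < mPlus l x' := by
  have : Nonempty (Fin N) := finNonempty hN
  set ε := Finset.univ.inf' Finset.univ_nonempty (fun i => x' i - x i) with hε
  have hεpos : 0 < ε := by
    obtain ⟨i, _, hi⟩ := Finset.exists_mem_eq_inf' Finset.univ_nonempty (fun i => x' i - x i)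
    rw [hε, hi]
    linarith [h i]
  have h1 : ∀ i, x i + ε ≤ x' i := by
    intro i
    have := Finset.inf'_le (fun i => x' i - x i) (Finset.mem_univ i)
    rw [← hε] at this
    linarith
  calc mPlus l x < mPlus l x + ε := by linarith
    _ = mPlus l (fun i => x i + ε) := (mPlus_add hN hl x ε).symm
    _ ≤ mPlus l x' := mPlus_mono hN hl h1

lemma comb_le_shift (hN : 1 ≤ N) {l : Fin N → ℝ} (hl : memSimplex l) {θ : ℝ}
    (hθ : θ ∈ Set.Icc (0:ℝ) 1) {x x' : Fin N → ℝ} {c : ℝ} (h : ∀ i, x i ≤ x' i + c) :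
    (1 - θ) * mMinus l x + θ * mPlus l x ≤ ((1 - θ) * mMinus l x' + θ * mPlus l x') + c := by
  have h1 := mMinus_le_shift hN hl h
  have h2 := mPlus_le_shift hN hl h
  obtain ⟨h0, h1'⟩ := hθ
  nlinarith

lemma comb_strictMono (hN : 1 ≤ N) {l : Fin N → ℝ} (hl : memSimplex l) {θ : ℝ}
    (hθ : θ ∈ Set.Icc (0:ℝ) 1) {x x' : Fin N → ℝ} (h : ∀ i, x i < x' i) :
    (1 - θ) * mMinus l x + θ * mPlus l x < (1 - θ) * mMinus l x' + θ * mPlus l x' := by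
  have h1 := mMinus_strictMono hN hl h
  have h2 := mPlus_strictMono hN hl h
  obtain ⟨h0, h1'⟩ := hθ
  rcases lt_or_eq_of_le h0 with hpos | hzero
  · have ha := mul_lt_mul_of_pos_left h2 hpos
    have hb := mul_le_mul_of_nonneg_left h1.le (by linarith : (0:ℝ) ≤ 1 - θ)
    linarith
  · rw [← hzero]
    simpa using h1

end med

section cdf
variable {μ : Measure ℝ}

lemma cdf_mono (hμ : IsProbabilityMeasure μ) : Monotone (cdf μ) := by
  intro a b hab
  exact ENNReal.toReal_mono (measure_ne_top μ _) (measure_mono (Iic_subset_Iic.2 hab))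

lemma cdf_nonneg' (x : ℝ) : 0 ≤ cdf μ x := ENNReal.toReal_nonneg

lemma cdf_le_one (hμ : IsProbabilityMeasure μ) (x : ℝ) : cdf μ x ≤ 1 := by
  have h : μ (Iic x) ≤ 1 := prob_le_one
  have := ENNReal.toReal_mono ENNReal.one_ne_top h
  simpa [cdf] using this

lemma cdf_Ioc (hμ : IsProbabilityMeasure μ) {a b : ℝ} (hab : a ≤ b) :
    (μ (Ioc a b)).toReal = cdf μ b - cdf μ a := by
  have h : Ioc a b = Iic b \ Iic a := by ext z; simp [and_comm]
  rw [h, measure_diff (Iic_subset_Iic.2 hab) measurableSet_Iic.nullMeasurableSet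
    (measure_ne_top μ _), ENNReal.toReal_sub_of_le (measure_mono (Iic_subset_Iic.2 hab))
    (measure_ne_top μ _)]
  rfl

lemma one_div_nat_lt {ε : ℝ} (hε : 0 < ε) : ∃ n : ℕ, 1 / ((n : ℝ) + 1) < ε := by
  obtain ⟨n, hn⟩ := exists_nat_one_div_lt hε
  exact ⟨n, by exact_mod_cast hn⟩

lemma tendsto_measure_Ioc_singleton (hμ : IsProbabilityMeasure μ) (x : ℝ) :
    Tendsto (fun n : ℕ => (μ (Ioc (x - 1/((n:ℝ)+1)) x)).toReal) atTop
      (𝓝 ((μ {x}).toReal)) := by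
  have hI : ⋂ n : ℕ, Ioc (x - 1/((n:ℝ)+1)) x = {x} := by
    ext y
    simp only [mem_iInter, mem_Ioc, mem_singleton_iff]
    constructor
    · intro h
      have hyx : y ≤ x := (h 0).2
      rcases eq_or_lt_of_le hyx with h' | h'
      · exact h'
      · exfalso
        obtain ⟨n, hn⟩ := one_div_nat_lt (sub_pos.2 h')
        linarith [(h n).1]
    · rintro rfl
      intro n
      constructor
      · have : (0:ℝ) < 1/((n:ℝ)+1) := by positivity
        linarith
      · exact le_refl _
  have hmono : Antitone (fun n : ℕ => Ioc (x - 1/((n:ℝ)+1)) x) := by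
    intro n m hnm
    apply Ioc_subset_Ioc_left
    have h1 : (1:ℝ)/((m:ℝ)+1) ≤ 1/((n:ℝ)+1) := by
      apply one_div_le_one_div_of_le (by positivity)
      exact_mod_cast Nat.succ_le_succ hnm
    linarith
  have := tendsto_measure_iInter_atTop
    (fun n => measurableSet_Ioc.nullMeasurableSet) hmono ⟨0, measure_ne_top μ _⟩
  rw [hI] at this
  have h2 := (ENNReal.tendsto_toReal (measure_ne_top μ _)).comp this
  simpa [Function.comp_def] using h2

lemma tendsto_cdf_right (hμ : IsProbabilityMeasure μ) (x : ℝ) :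
    Tendsto (fun n : ℕ => cdf μ (x + 1/((n:ℝ)+1))) atTop (𝓝 (cdf μ x)) := by
  have hI : ⋂ n : ℕ, Iic (x + 1/((n:ℝ)+1)) = Iic x := by
    ext y
    simp only [mem_iInter, mem_Iic]
    constructor
    · intro h
      by_contra hc
      push_neg at hc
      obtain ⟨n, hn⟩ := one_div_nat_lt (sub_pos.2 hc)
      linarith [h n]
    · intro h n
      have : (0:ℝ) < 1/((n:ℝ)+1) := by positivity
      linarith
  have hmono : Antitone (fun n : ℕ => Iic (x + 1/((n:ℝ)+1))) := by
    intro n m hnm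
    apply Iic_subset_Iic.2
    have h1 : (1:ℝ)/((m:ℝ)+1) ≤ 1/((n:ℝ)+1) := by
      apply one_div_le_one_div_of_le (by positivity)
      exact_mod_cast Nat.succ_le_succ hnm
    linarith
  have := tendsto_measure_iInter_atTop
    (fun n => measurableSet_Iic.nullMeasurableSet) hmono ⟨0, measure_ne_top μ _⟩
  rw [hI] at this
  have h2 := (ENNReal.tendsto_toReal (measure_ne_top μ _)).comp this
  simpa [Function.comp_def, cdf] using h2

lemma quantile_set_bddBelow (hμ : IsProbabilityMeasure μ) {t : ℝ} (ht : 0 < t) :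
    BddBelow {x : ℝ | t ≤ cdf μ x} := by
  have hI : ⋂ n : ℕ, Iic (-(n:ℝ)) = (∅ : Set ℝ) := by
    ext y
    simp only [mem_iInter, mem_Iic, mem_empty_iff_false, iff_false, not_forall, not_le]
    obtain ⟨n, hn⟩ := exists_nat_gt (-y)
    exact ⟨n, by linarith⟩
  have hmono : Antitone (fun n : ℕ => Iic (-(n:ℝ))) := by
    intro n m hnm
    apply Iic_subset_Iic.2
    simp only [neg_le_neg_iff]
    exact_mod_cast hnm
  have htend := tendsto_measure_iInter_atTop
    (fun n : ℕ => measurableSet_Iic.nullMeasurableSet) hmono ⟨0, measure_ne_top μ _⟩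
  rw [hI, measure_empty] at htend
  have htend' : Tendsto (fun n : ℕ => cdf μ (-(n:ℝ))) atTop (𝓝 0) := by
    have h2 := (ENNReal.tendsto_toReal (by simp : (0:ℝ≥0∞) ≠ ⊤)).comp htend
    simpa [Function.comp_def, cdf] using h2
  obtain ⟨n, hn⟩ := (htend'.eventually_lt_const ht).exists
  refine ⟨-(n:ℝ), fun z hz => ?_⟩
  simp only [mem_setOf_eq] at hz
  by_contra hc
  push_neg at hc
  exact absurd (le_trans hz (cdf_mono hμ hc.le)) (not_le.2 hn)

lemma quantile_set_nonempty (hμ : IsProbabilityMeasure μ) {t : ℝ} (ht : t < 1) :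
    {x : ℝ | t ≤ cdf μ x}.Nonempty := by
  have htend : Tendsto (fun x : ℝ => cdf μ x) atTop (𝓝 1) := by
    have h0 := tendsto_measure_Iic_atTop (α := ℝ) μ
    rw [measure_univ] at h0
    have h2 := (ENNReal.tendsto_toReal ENNReal.one_ne_top).comp h0
    simpa [Function.comp_def, cdf] using h2
  obtain ⟨x, hx⟩ := (htend.eventually_const_le ht).exists
  exact ⟨x, hx⟩

lemma quantile_le (hμ : IsProbabilityMeasure μ) {t y : ℝ} (ht : 0 < t) (h : t ≤ cdf μ y) :
    quantile μ t ≤ y :=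
  csInf_le (quantile_set_bddBelow hμ ht) h

lemma cdf_lt_of_lt_quantile (hμ : IsProbabilityMeasure μ) {t y : ℝ} (ht : 0 < t)
    (h : y < quantile μ t) : cdf μ y < t := by
  by_contra hc
  push_neg at hc
  exact absurd (quantile_le hμ ht hc) (not_le.2 h)

lemma cdf_quantile_ge (hμ : IsProbabilityMeasure μ) {t : ℝ} (ht0 : 0 < t) (ht1 : t < 1) :
    t ≤ cdf μ (quantile μ t) := by
  set x₀ := quantile μ t with hx₀
  have hev : ∀ n : ℕ, t ≤ cdf μ (x₀ + 1/((n:ℝ)+1)) := by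
    intro n
    have hlt : x₀ < x₀ + 1/((n:ℝ)+1) := by
      have : (0:ℝ) < 1/((n:ℝ)+1) := by positivity
      linarith
    obtain ⟨w, hw, hw2⟩ := (csInf_lt_iff (quantile_set_bddBelow hμ ht0)
      (quantile_set_nonempty hμ ht1)).1 hlt
    exact le_trans hw (cdf_mono hμ hw2.le)
  exact ge_of_tendsto (tendsto_cdf_right hμ x₀) (Eventually.of_forall hev)

lemma quantile_monoOn (hμ : IsProbabilityMeasure μ) {t t' : ℝ} (ht : 0 < t) (htt : t ≤ t')
    (ht' : t' < 1) : quantile μ t ≤ quantile μ t' := by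
  apply csInf_le_csInf (quantile_set_bddBelow hμ ht) (quantile_set_nonempty hμ ht')
  intro y hy
  exact le_trans htt hy

lemma quantile_strictMonoOn (hμ : IsProbabilityMeasure μ) (hat : ∀ x : ℝ, μ {x} = 0)
    {t t' : ℝ} (ht : 0 < t) (htt : t < t') (ht' : t' < 1) :
    quantile μ t < quantile μ t' := by
  rcases lt_or_eq_of_le (quantile_monoOn hμ ht htt.le ht') with h | h
  · exact h
  exfalso
  have hFx : t' ≤ cdf μ (quantile μ t) := by
    rw [h]
    exact cdf_quantile_ge hμ (lt_trans ht htt) ht'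
  have hlow : ∀ n : ℕ,
      t' - t ≤ (μ (Ioc (quantile μ t - 1/((n:ℝ)+1)) (quantile μ t))).toReal := by
    intro n
    have h1 : (0:ℝ) < 1/((n:ℝ)+1) := by positivity
    have hylt : quantile μ t - 1/((n:ℝ)+1) < quantile μ t := by linarith
    have := cdf_lt_of_lt_quantile hμ ht hylt
    rw [cdf_Ioc hμ (by linarith : quantile μ t - 1/((n:ℝ)+1) ≤ quantile μ t)]
    linarith
  have hge := ge_of_tendsto (tendsto_measure_Ioc_singleton hμ (quantile μ t))
    (Eventually.of_forall hlow)
  rw [hat (quantile μ t)] at hge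
  simp at hge
  linarith

lemma msupport_mem_of_ne_zero (hμ : IsProbabilityMeasure μ) {s : Set ℝ} (hs : μ s ≠ 0) :
    ∃ a ∈ s, a ∈ msupport μ := by
  by_contra h
  push_neg at h
  apply hs
  apply measure_null_of_locally_null
  intro x hx
  have := h x hx
  simp only [msupport, mem_setOf_eq, not_forall] at this
  obtain ⟨U, hU, hU0⟩ := this
  push_neg at hU0
  exact ⟨U, mem_nhdsWithin_of_mem_nhds hU, hU0⟩

lemma msupport_nonempty (hμ : IsProbabilityMeasure μ) : (msupport μ).Nonempty := by
  have h : μ univ ≠ 0 := by simp [measure_univ]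
  obtain ⟨a, _, ha⟩ := msupport_mem_of_ne_zero hμ h
  exact ⟨a, ha⟩

lemma cdf_lt_one_of_Ioi (hμ : IsProbabilityMeasure μ) {b : ℝ} (h : μ (Ioi b) ≠ 0) :
    cdf μ b < 1 := by
  have hu : μ (Iic b) + μ (Ioi b) = 1 := by
    rw [← measure_union (by simp [Set.disjoint_left]) measurableSet_Ioi]
    simp [Set.Iic_union_Ioi]
  have h1 : cdf μ b + (μ (Ioi b)).toReal = 1 := by
    rw [cdf, ← ENNReal.toReal_add (measure_ne_top μ _) (measure_ne_top μ _), hu]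
    simp
  have h2 : 0 < (μ (Ioi b)).toReal := ENNReal.toReal_pos h (measure_ne_top μ _)
  linarith

lemma quantile_right_approx (hμ : IsProbabilityMeasure μ)
    (hconn : IsConnected (msupport μ)) {s : ℝ} (hs0 : 0 < s) (hs1 : s < 1)
    {ε : ℝ} (hε : 0 < ε) :
    ∃ t, s < t ∧ t < 1 ∧ quantile μ t ≤ quantile μ s + ε := by
  by_contra hcon
  push_neg at hcon
  set x₀ := quantile μ s with hx₀
  have hF : ∀ y, x₀ < y → y < x₀ + ε → cdf μ y = s := by
    intro y hy1 hy2
    have hge : s ≤ cdf μ y :=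
      le_trans (cdf_quantile_ge hμ hs0 hs1) (cdf_mono hμ hy1.le)
    rcases lt_or_eq_of_le hge with hlt | heq
    · exfalso
      obtain ⟨t, ht1, ht2⟩ := exists_between (lt_min hlt hs1)
      have ht1' : t ≤ cdf μ y := le_of_lt (lt_of_lt_of_le ht2 (min_le_left _ _))
      have htlt1 : t < 1 := lt_of_lt_of_le ht2 (min_le_right _ _)
      have := quantile_le hμ (lt_trans hs0 ht1) ht1'
      have := hcon t ht1 htlt1
      linarith
    · exact heq.symm
  set p := x₀ + ε/4 with hp
  set b := x₀ + ε/2 with hb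
  set q := x₀ + 3*ε/4 with hq
  have hμ0 : μ (Ioo p q) = 0 := by
    have hpq : (μ (Ioc p q)).toReal = 0 := by
      rw [cdf_Ioc hμ (by rw [hp, hq]; linarith), hF q (by rw [hq]; linarith)
        (by rw [hq]; linarith), hF p (by rw [hp]; linarith) (by rw [hp]; linarith)]
      ring
    have := (ENNReal.toReal_eq_zero_iff _).1 hpq
    rcases this with h | h
    · exact measure_mono_null Set.Ioo_subset_Ioc_self h
    · exact absurd h (measure_ne_top μ _)
  have hsp : cdf μ p = s := hF p (by rw [hp]; linarith) (by rw [hp]; linarith)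
  have ha : μ (Iic p) ≠ 0 := by
    intro hcontra
    rw [cdf, hcontra] at hsp
    simp at hsp
    linarith
  have hbIoi : μ (Ioi b) ≠ 0 := by
    intro hcontra
    have h1 : (1 : ℝ≥0∞) ≤ μ (Iic b) := by
      calc (1 : ℝ≥0∞) = μ univ := (measure_univ (μ := μ)).symm
        _ = μ (Iic b ∪ Ioi b) := by rw [Set.Iic_union_Ioi]
        _ ≤ μ (Iic b) + μ (Ioi b) := measure_union_le _ _
        _ = μ (Iic b) := by rw [hcontra, add_zero]
    have := ENNReal.toReal_mono (measure_ne_top μ _) h1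
    simp only [ENNReal.toReal_one] at this
    have hsb : cdf μ b = s := hF b (by rw [hb]; linarith) (by rw [hb]; linarith)
    rw [cdf] at hsb
    linarith [hsb ▸ this]
  obtain ⟨a, haIic, haSupp⟩ := msupport_mem_of_ne_zero hμ ha
  obtain ⟨c, hcIoi, hcSupp⟩ := msupport_mem_of_ne_zero hμ hbIoi
  have hOrd : OrdConnected (msupport μ) := isPreconnected_iff_ordConnected.1 hconn.2
  have hbSupp : b ∈ msupport μ := by
    apply hOrd.out haSupp hcSupp
    constructor
    · calc a ≤ p := haIic
        _ ≤ b := by rw [hp, hb]; linarith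
    · exact le_of_lt hcIoi
  exact hbSupp (Ioo p q) (Ioo_mem_nhds (by rw [hp, hb]; linarith) (by rw [hb, hq]; linarith)) hμ0

end cdf

section final
open Set

lemma atomless_of_quantile_strict {μ : Measure ℝ} (hμ : IsProbabilityMeasure μ)
    (h : ∀ t t' : ℝ, 0 < t → t < t' → t' < 1 → quantile μ t < quantile μ t') (x : ℝ) :
    μ {x} = 0 := by
  by_contra hx
  have hc : 0 < (μ {x}).toReal := ENNReal.toReal_pos hx (measure_ne_top μ _)
  have hsplit : μ (Iic x) = μ (Iio x) + μ {x} := by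
    rw [← Set.Iio_union_right, measure_union (by simp) (measurableSet_singleton x)]
  set b := (μ (Iio x)).toReal with hbdef
  have hab : cdf μ x = b + (μ {x}).toReal := by
    rw [cdf, hsplit, ENNReal.toReal_add (measure_ne_top μ _) (measure_ne_top μ _)]
  have hb0 : 0 ≤ b := ENNReal.toReal_nonneg
  have ha1 : cdf μ x ≤ 1 := cdf_le_one hμ x
  have hblt : b < min (cdf μ x) 1 := lt_min (by linarith) (by linarith)
  obtain ⟨t₁, ht1, ht2⟩ := exists_between hblt
  obtain ⟨t₂, ht3, ht4⟩ := exists_between ht2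
  have hq : ∀ t, b < t → t < min (cdf μ x) 1 → quantile μ t = x := by
    intro t hbt htm
    have ht0 : 0 < t := lt_of_le_of_lt hb0 hbt
    have hta : t ≤ cdf μ x := le_of_lt (lt_of_lt_of_le htm (min_le_left _ _))
    apply le_antisymm
    · exact quantile_le hμ ht0 hta
    · apply le_csInf (quantile_set_nonempty hμ (lt_of_lt_of_le htm (min_le_right _ _)))
      intro z hz
      by_contra hzc
      push_neg at hzc
      have hsub : Iic z ⊆ Iio x := fun w hw => lt_of_le_of_lt hw hzc
      have : cdf μ z ≤ b := ENNReal.toReal_mono (measure_ne_top μ _) (measure_mono hsub)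
      simp only [mem_setOf_eq] at hz
      linarith
  have e1 := hq t₁ ht1 (lt_trans ht3 ht4)
  have e2 := hq t₂ (lt_trans ht1 ht3) ht4
  have hlt := h t₁ t₂ (lt_of_le_of_lt hb0 ht1) ht3 (lt_of_lt_of_le ht4 (min_le_right _ _))
  rw [e1, e2] at hlt
  exact lt_irrefl x hlt

/-- Let `ν^θ` (characterized by its cdf `(1−θ)F⁻ + θF⁺`) be the
vertical median selection and `μ^θ` (characterized by its quantile function
`(1−θ)Q⁻ + θQ⁺`) the horizontal median selection. If all sample measures are atomless,
so are `ν^θ` and `μ^θ`; if all sample measures have connected supports, then `μ^θ` has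
connected support. -/
theorem median_selections_atomless_and_connected_support
    {N : ℕ} (hN : 1 ≤ N) {l : Fin N → ℝ} (hl : memSimplex l)
    {ν : Fin N → Measure ℝ} (hν : ∀ i, ν i ∈ P1 ℝ)
    {θ : ℝ} (hθ : θ ∈ Set.Icc (0 : ℝ) 1)
    {V : Measure ℝ} (hV : IsProbabilityMeasure V)
    (hVcdf : ∀ x : ℝ, cdf V x =
      (1 - θ) * mMinus l (fun i => cdf (ν i) x) + θ * mPlus l (fun i => cdf (ν i) x))
    {H : Measure ℝ} (hH : IsProbabilityMeasure H)
    (hHq : ∀ t ∈ Set.Ioo (0 : ℝ) 1, quantile H t =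
      (1 - θ) * mMinus l (fun i => quantile (ν i) t) +
        θ * mPlus l (fun i => quantile (ν i) t)) :
    ((∀ i, ∀ x : ℝ, ν i {x} = 0) → (∀ x : ℝ, V {x} = 0) ∧ (∀ x : ℝ, H {x} = 0)) ∧
    ((∀ i, IsConnected (msupport (ν i))) → IsConnected (msupport H)) := by
  have hP : ∀ i, IsProbabilityMeasure (ν i) := fun i => (hν i).1
  constructor
  · intro hat
    constructor
    · -- V is atomless
      intro x
      have key : ∀ n : ℕ,
          (V {x}).toReal ≤ ∑ i, (ν i (Ioc (x - 1/((n:ℝ)+1)) x)).toReal := by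
        intro n
        have h1 : (0:ℝ) < 1/((n:ℝ)+1) := by positivity
        set y := x - 1/((n:ℝ)+1) with hy
        have hyx : y ≤ x := by rw [hy]; linarith
        set ε := ∑ i, (ν i (Ioc y x)).toReal with hε
        have hεdef : ∀ i, cdf (ν i) x ≤ cdf (ν i) y + ε := by
          intro i
          have h2 : (ν i (Ioc y x)).toReal = cdf (ν i) x - cdf (ν i) y :=
            cdf_Ioc (hP i) hyx
          have hterm : (ν i (Ioc y x)).toReal ≤ ε :=
            Finset.single_le_sum (f := fun j => (ν j (Ioc y x)).toReal)
              (fun j _ => ENNReal.toReal_nonneg) (Finset.mem_univ i)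
          linarith
        have hVx : cdf V x ≤ cdf V y + ε := by
          rw [hVcdf x, hVcdf y]
          exact comb_le_shift hN hl hθ hεdef
        have h2 : (V {x}).toReal ≤ (V (Ioc y x)).toReal :=
          ENNReal.toReal_mono (measure_ne_top V _)
            (measure_mono (singleton_subset_iff.2 ⟨by rw [hy]; linarith, le_refl x⟩))
        have h3 : (V (Ioc y x)).toReal = cdf V x - cdf V y := cdf_Ioc hV hyx
        linarith
      have hlim : Tendsto (fun n : ℕ => ∑ i, (ν i (Ioc (x - 1/((n:ℝ)+1)) x)).toReal)
          atTop (𝓝 0) := by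
        have hsum := tendsto_finset_sum (Finset.univ : Finset (Fin N))
          (fun i _ => tendsto_measure_Ioc_singleton (hP i) x)
        simpa [hat, Finset.sum_const_zero] using hsum
      have hle : (V {x}).toReal ≤ 0 := ge_of_tendsto hlim (Eventually.of_forall key)
      have h0 : (V {x}).toReal = 0 := le_antisymm hle ENNReal.toReal_nonneg
      rcases (ENNReal.toReal_eq_zero_iff _).1 h0 with h | h
      · exact h
      · exact absurd h (measure_ne_top V _)
    · -- H is atomless
      intro x
      apply atomless_of_quantile_strict hH _ x
      intro t t' ht htt ht'
      rw [hHq t ⟨ht, htt.trans ht'⟩, hHq t' ⟨ht.trans htt, ht'⟩]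
      apply comb_strictMono hN hl hθ
      intro i
      exact quantile_strictMonoOn (hP i) (hat i) ht htt ht'
  · intro hconn
    constructor
    · exact msupport_nonempty hH
    · rw [isPreconnected_iff_ordConnected]
      constructor
      intro a ha c hc b hb
      by_contra hbn
      simp only [msupport, mem_setOf_eq, not_forall] at hbn
      obtain ⟨U, hU, hU0⟩ := hbn
      push_neg at hU0
      rcases eq_or_lt_of_le hb.1 with rfl | hab
      · exact ha U hU hU0
      rcases eq_or_lt_of_le hb.2 with rfl | hbc
      · exact hc U hU hU0
      obtain ⟨ε, hε, hball⟩ := Metric.mem_nhds_iff.1 hU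
      have hIoo0 : H (Ioo (b-ε) (b+ε)) = 0 :=
        measure_mono_null (by rw [← Real.ball_eq_Ioo]; exact hball) hU0
      set δ := min ε (min ((b-a)/2) ((c-b)/2)) with hδ
      have hδpos : 0 < δ := lt_min hε (lt_min (by linarith) (by linarith))
      have hδε : δ ≤ ε := min_le_left _ _
      have hδa : δ ≤ (b-a)/2 := le_trans (min_le_right _ _) (min_le_left _ _)
      have hδc : δ ≤ (c-b)/2 := le_trans (min_le_right _ _) (min_le_right _ _)
      have hIooδ : H (Ioo (b-δ) (b+δ)) = 0 := by
        apply measure_mono_null _ hIoo0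
        apply Ioo_subset_Ioo <;> linarith
      set p := b - δ with hp
      set q' := b + δ/2 with hq'
      have hpq' : p ≤ q' := by rw [hp, hq']; linarith
      have hIocpq : H (Ioc p q') = 0 := by
        apply measure_mono_null _ hIooδ
        intro z hz
        simp only [mem_Ioc] at hz
        simp only [mem_Ioo]
        refine ⟨hz.1, ?_⟩
        calc z ≤ q' := hz.2
          _ < b + δ := by rw [hq']; linarith
      set s := cdf H p with hs
      have hq's : cdf H q' = s := by
        have h1 : (H (Ioc p q')).toReal = cdf H q' - cdf H p := cdf_Ioc hH hpq'
        rw [hIocpq] at h1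
        simp at h1
        rw [hs]; linarith
      have hap : a < p := by rw [hp]; linarith
      have hq'c : q' < c := by rw [hq']; linarith
      have hs0 : 0 < s := by
        have hnbhd : Ioo (a-1) p ∈ 𝓝 a := Ioo_mem_nhds (by linarith) hap
        have hne := ha _ hnbhd
        have hne2 : H (Iic p) ≠ 0 := by
          intro h0
          exact hne (measure_mono_null (fun z hz => le_of_lt hz.2) h0)
        rw [hs]
        exact ENNReal.toReal_pos hne2 (measure_ne_top H _)
      have hs1 : s < 1 := by
        rw [← hq's]
        apply cdf_lt_one_of_Ioi hH
        have hnbhd : Ioo q' (c+1) ∈ 𝓝 c := Ioo_mem_nhds hq'c (by linarith)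
        have hne := hc _ hnbhd
        intro h0
        exact hne (measure_mono_null (fun z hz => hz.1) h0)
      have hqs : quantile H s ≤ p := quantile_le hH hs0 (le_of_eq hs)
      have hqt : ∀ t, s < t → t < 1 → q' ≤ quantile H t := by
        intro t hst ht1
        apply le_csInf (quantile_set_nonempty hH ht1)
        intro z hz
        by_contra hzc
        push_neg at hzc
        have hmono : cdf H z ≤ cdf H q' := cdf_mono hH hzc.le
        rw [hq's] at hmono
        simp only [mem_setOf_eq] at hz
        linarith
      set ε' := (q' - p)/2 with hε'def
      have hε'pos : 0 < ε' := by rw [hε'def, hq', hp]; linarith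
      choose tf htf1 htf2 htf3 using
        fun i => quantile_right_approx (hP i) (hconn i) hs0 hs1 hε'pos
      haveI : Nonempty (Fin N) := finNonempty hN
      set t := Finset.univ.inf' Finset.univ_nonempty tf with ht
      have hts : s < t := by
        rw [ht, Finset.lt_inf'_iff]
        intro i _
        exact htf1 i
      have ht1 : t < 1 :=
        lt_of_le_of_lt (Finset.inf'_le tf (Finset.mem_univ ⟨0, hN⟩)) (htf2 _)
      have hQi : ∀ i, quantile (ν i) t ≤ quantile (ν i) s + ε' := by
        intro i
        have h1 : quantile (ν i) t ≤ quantile (ν i) (tf i) :=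
          quantile_monoOn (hP i) (hs0.trans hts) (Finset.inf'_le tf (Finset.mem_univ i))
            (htf2 i)
        linarith [htf3 i]
      have hgt : quantile H t ≤ quantile H s + ε' := by
        rw [hHq t ⟨hs0.trans hts, ht1⟩, hHq s ⟨hs0, hs1⟩]
        exact comb_le_shift hN hl hθ hQi
      have hfin := hqt t hts ht1
      rw [hε'def] at hgt
      have h1 : q' ≤ p + (q' - p)/2 :=
        le_trans hfin (le_trans hgt (by linarith))
      rw [hp, hq'] at h1
      linarith

end final
end
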